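/- arXiv:1305.3716 — 4 statements merged into one kernel-verified Lean document; each statement's English description precedes it below -/
import Mathlib

section
/- For every integer n ≥ 0, the numbers b_k of complete non-ambiguous trees satisfy b_{n+1} = ∑_{i=0}^{n} C(n+1, i)·C(n+1, n−i)·b_i·b_{n−i}, where C(·,·) denotes the binomial coefficient. -/
/-- A non-ambiguous tree: a finite set of points of `ℕ × ℕ`. -/
def IsNAT (A : Finset (ℕ × ℕ)) : Prop :=
  (0, 0) ∈ A ∧
  (∀ p ∈ A, p ≠ (0, 0) →
    Xor' (∃ q ∈ A, q.1 = p.1 ∧ q.2 < p.2) (∃ r ∈ A, r.2 = p.2 ∧ r.1 < p.1)) ∧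
  (∀ p ∈ A, (∀ x' < p.1, ∃ q ∈ A, q.1 = x') ∧ (∀ y' < p.2, ∃ q ∈ A, q.2 = y'))

/-- `q` has a left child in `A`. -/
def HasLeftChild (A : Finset (ℕ × ℕ)) (q : ℕ × ℕ) : Prop :=
  ∃ p ∈ A, p.2 = q.2 ∧ q.1 < p.1

/-- `q` has a right child in `A`. -/
def HasRightChild (A : Finset (ℕ × ℕ)) (q : ℕ × ℕ) : Prop :=
  ∃ p ∈ A, p.1 = q.1 ∧ q.2 < p.2

/-- A non-ambiguous tree is complete when every point has either both a left and a
right child, or neither. -/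
def IsCompleteNAT (A : Finset (ℕ × ℕ)) : Prop :=
  ∀ q ∈ A, (HasLeftChild A q ↔ HasRightChild A q)

/-- The number of internal vertices (points with two children). -/
noncomputable def numInternal (A : Finset (ℕ × ℕ)) : ℕ :=
  Set.ncard {q : ℕ × ℕ | q ∈ A ∧ HasLeftChild A q ∧ HasRightChild A q}

/-- `b n` : the number of complete non-ambiguous trees with `n` internal vertices. -/
noncomputable def b (n : ℕ) : ℕ :=
  Set.ncard {A : Finset (ℕ × ℕ) | IsNAT A ∧ IsCompleteNAT A ∧ numInternal A = n}

noncomputable section NATaux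
open Finset
open scoped Classical

def rowWit (A : Finset (ℕ × ℕ)) (p : ℕ × ℕ) : Prop := ∃ r ∈ A, r.2 = p.2 ∧ r.1 < p.1
def colWit (A : Finset (ℕ × ℕ)) (p : ℕ × ℕ) : Prop := ∃ q ∈ A, q.1 = p.1 ∧ q.2 < p.2

noncomputable def internals (A : Finset (ℕ × ℕ)) : Finset (ℕ × ℕ) :=
  A.filter fun q => HasLeftChild A q ∧ HasRightChild A q

lemma numInternal_eq (A : Finset (ℕ × ℕ)) : numInternal A = (internals A).card := by
  rw [numInternal, internals, show {q : ℕ × ℕ | q ∈ A ∧ HasLeftChild A q ∧ HasRightChild A q}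
    = ↑(A.filter fun q => HasLeftChild A q ∧ HasRightChild A q) by ext q; simp,
    Set.ncard_coe_finset]

lemma dc_eq_range {s : Finset ℕ} (h : ∀ x ∈ s, ∀ y, y < x → y ∈ s) :
    s = Finset.range s.card := by
  have key : ∀ x, x ∈ s ↔ x < s.card := by
    intro x
    constructor
    · intro hx
      have hsub : Finset.range (x + 1) ⊆ s := by
        intro y hy
        rw [Finset.mem_range] at hy
        rcases Nat.lt_succ_iff_lt_or_eq.1 hy with h' | rfl
        · exact h x hx y h'
        · exact hx
      have := Finset.card_le_card hsub
      simpa using this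
    · intro hx
      by_contra hxs
      have hsub : s ⊆ Finset.range x := by
        intro y hy
        rw [Finset.mem_range]
        rcases lt_trichotomy y x with h' | rfl | h'
        · exact h'
        · exact absurd hy hxs
        · exact absurd (h y hy x h') hxs
      have := Finset.card_le_card hsub
      simp only [Finset.card_range] at this
      omega
  ext x; rw [Finset.mem_range, key]

def fmax (s : Finset ℕ) : ℕ := s.max.getD 0
def fmin (s : Finset ℕ) : ℕ := s.min.getD 0

lemma fmax_mem {s : Finset ℕ} (h : s.Nonempty) : fmax s ∈ s := by
  obtain ⟨m, hm⟩ := Finset.max_of_nonempty h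
  simp only [fmax, hm, Option.getD_some]; exact Finset.mem_of_max hm

lemma le_fmax {s : Finset ℕ} {x : ℕ} (hx : x ∈ s) : x ≤ fmax s := by
  obtain ⟨m, hm⟩ := Finset.max_of_nonempty ⟨x, hx⟩
  simp only [fmax, hm, Option.getD_some]; exact Finset.le_max_of_eq hx hm

lemma fmin_mem {s : Finset ℕ} (h : s.Nonempty) : fmin s ∈ s := by
  obtain ⟨m, hm⟩ := Finset.min_of_nonempty h
  simp only [fmin, hm, Option.getD_some]; exact Finset.mem_of_min hm

lemma fmin_le {s : Finset ℕ} {x : ℕ} (hx : x ∈ s) : fmin s ≤ x := by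
  obtain ⟨m, hm⟩ := Finset.min_of_nonempty ⟨x, hx⟩
  simp only [fmin, hm, Option.getD_some]; exact Finset.min_le_of_eq hx hm

/-- the set of "left children" -/
noncomputable def leftPts (A : Finset (ℕ × ℕ)) : Finset (ℕ × ℕ) := A.filter (rowWit A)
/-- the set of "right children" -/
noncomputable def rightPts (A : Finset (ℕ × ℕ)) : Finset (ℕ × ℕ) := A.filter (colWit A)

noncomputable def rowParent (A : Finset (ℕ × ℕ)) (p : ℕ × ℕ) : ℕ × ℕ :=
  (fmax ((A.filter fun r => r.2 = p.2 ∧ r.1 < p.1).image Prod.fst), p.2)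

noncomputable def leftChildPt (A : Finset (ℕ × ℕ)) (q : ℕ × ℕ) : ℕ × ℕ :=
  (fmin ((A.filter fun r => r.2 = q.2 ∧ q.1 < r.1).image Prod.fst), q.2)

noncomputable def colParent (A : Finset (ℕ × ℕ)) (p : ℕ × ℕ) : ℕ × ℕ :=
  (p.1, fmax ((A.filter fun r => r.1 = p.1 ∧ r.2 < p.2).image Prod.snd))

noncomputable def rightChildPt (A : Finset (ℕ × ℕ)) (q : ℕ × ℕ) : ℕ × ℕ :=
  (q.1, fmin ((A.filter fun r => r.1 = q.1 ∧ q.2 < r.2).image Prod.snd))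

lemma rowParent_spec {A : Finset (ℕ × ℕ)} {p : ℕ × ℕ} (h : rowWit A p) :
    rowParent A p ∈ A ∧ (rowParent A p).1 < p.1 ∧ (rowParent A p).2 = p.2 ∧
    (∀ r ∈ A, r.2 = p.2 → r.1 < p.1 → r.1 ≤ (rowParent A p).1) := by
  obtain ⟨r0, hr0, hr02, hr01⟩ := h
  set s := (A.filter fun r => r.2 = p.2 ∧ r.1 < p.1).image Prod.fst with hs
  have hne : s.Nonempty := ⟨r0.1, mem_image_of_mem _ (mem_filter.2 ⟨hr0, hr02, hr01⟩)⟩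
  have hmem := fmax_mem hne
  rw [hs, mem_image] at hmem
  obtain ⟨r, hr, hrx⟩ := hmem
  rw [mem_filter] at hr
  have : rowParent A p = (r.1, p.2) := by rw [rowParent, ← hs, hrx]
  refine ⟨?_, ?_, ?_, ?_⟩
  · rw [this]; rw [show (r.1, p.2) = r from Prod.ext rfl hr.2.1.symm]; exact hr.1
  · rw [this]; exact hr.2.2
  · rw [this]
  · intro q hq hq2 hq1
    exact le_fmax (mem_image_of_mem _ (mem_filter.2 ⟨hq, hq2, hq1⟩))

lemma leftChildPt_spec {A : Finset (ℕ × ℕ)} {q : ℕ × ℕ} (h : HasLeftChild A q) :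
    leftChildPt A q ∈ A ∧ q.1 < (leftChildPt A q).1 ∧ (leftChildPt A q).2 = q.2 ∧
    (∀ r ∈ A, r.2 = q.2 → q.1 < r.1 → (leftChildPt A q).1 ≤ r.1) := by
  obtain ⟨r0, hr0, hr02, hr01⟩ := h
  set s := (A.filter fun r => r.2 = q.2 ∧ q.1 < r.1).image Prod.fst with hs
  have hne : s.Nonempty := ⟨r0.1, mem_image_of_mem _ (mem_filter.2 ⟨hr0, hr02, hr01⟩)⟩
  have hmem := fmin_mem hne
  rw [hs, mem_image] at hmem
  obtain ⟨r, hr, hrx⟩ := hmem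
  rw [mem_filter] at hr
  have : leftChildPt A q = (r.1, q.2) := by rw [leftChildPt, ← hs, hrx]
  refine ⟨?_, ?_, ?_, ?_⟩
  · rw [this]; rw [show (r.1, q.2) = r from Prod.ext rfl hr.2.1.symm]; exact hr.1
  · rw [this]; exact hr.2.2
  · rw [this]
  · intro r' hr' h2 h1
    exact fmin_le (mem_image_of_mem _ (mem_filter.2 ⟨hr', h2, h1⟩))

lemma colParent_spec {A : Finset (ℕ × ℕ)} {p : ℕ × ℕ} (h : colWit A p) :
    colParent A p ∈ A ∧ (colParent A p).2 < p.2 ∧ (colParent A p).1 = p.1 ∧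
    (∀ r ∈ A, r.1 = p.1 → r.2 < p.2 → r.2 ≤ (colParent A p).2) := by
  obtain ⟨r0, hr0, hr02, hr01⟩ := h
  set s := (A.filter fun r => r.1 = p.1 ∧ r.2 < p.2).image Prod.snd with hs
  have hne : s.Nonempty := ⟨r0.2, mem_image_of_mem _ (mem_filter.2 ⟨hr0, hr02, hr01⟩)⟩
  have hmem := fmax_mem hne
  rw [hs, mem_image] at hmem
  obtain ⟨r, hr, hrx⟩ := hmem
  rw [mem_filter] at hr
  have : colParent A p = (p.1, r.2) := by rw [colParent, ← hs, hrx]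
  refine ⟨?_, ?_, ?_, ?_⟩
  · rw [this]; rw [show (p.1, r.2) = r from Prod.ext hr.2.1.symm rfl]; exact hr.1
  · rw [this]; exact hr.2.2
  · rw [this]
  · intro q hq hq2 hq1
    exact le_fmax (mem_image_of_mem _ (mem_filter.2 ⟨hq, hq2, hq1⟩))

lemma rightChildPt_spec {A : Finset (ℕ × ℕ)} {q : ℕ × ℕ} (h : HasRightChild A q) :
    rightChildPt A q ∈ A ∧ q.2 < (rightChildPt A q).2 ∧ (rightChildPt A q).1 = q.1 ∧
    (∀ r ∈ A, r.1 = q.1 → q.2 < r.2 → (rightChildPt A q).2 ≤ r.2) := by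
  obtain ⟨r0, hr0, hr02, hr01⟩ := h
  set s := (A.filter fun r => r.1 = q.1 ∧ q.2 < r.2).image Prod.snd with hs
  have hne : s.Nonempty := ⟨r0.2, mem_image_of_mem _ (mem_filter.2 ⟨hr0, hr02, hr01⟩)⟩
  have hmem := fmin_mem hne
  rw [hs, mem_image] at hmem
  obtain ⟨r, hr, hrx⟩ := hmem
  rw [mem_filter] at hr
  have : rightChildPt A q = (q.1, r.2) := by rw [rightChildPt, ← hs, hrx]
  refine ⟨?_, ?_, ?_, ?_⟩
  · rw [this]; rw [show (q.1, r.2) = r from Prod.ext hr.2.1.symm rfl]; exact hr.1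
  · rw [this]; exact hr.2.2
  · rw [this]
  · intro r' hr' h2 h1
    exact fmin_le (mem_image_of_mem _ (mem_filter.2 ⟨hr', h2, h1⟩))


lemma rowWit_ne_root {A : Finset (ℕ × ℕ)} {p : ℕ × ℕ} (h : rowWit A p) : p ≠ (0, 0) := by
  obtain ⟨r, _, _, h1⟩ := h; intro he; rw [he] at h1; omega

lemma colWit_ne_root {A : Finset (ℕ × ℕ)} {p : ℕ × ℕ} (h : colWit A p) : p ≠ (0, 0) := by
  obtain ⟨r, _, _, h1⟩ := h; intro he; rw [he] at h1; omega

lemma card_leftPts {A : Finset (ℕ × ℕ)} (h1 : IsNAT A) (h2 : IsCompleteNAT A) :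
    (leftPts A).card = (internals A).card := by
  apply Finset.card_bij' (fun p _ => rowParent A p) (fun q _ => leftChildPt A q)
  · intro p hp
    obtain ⟨hpA, hwit⟩ := mem_filter.1 hp
    obtain ⟨hm, hlt, he2, _⟩ := rowParent_spec hwit
    have hL : HasLeftChild A (rowParent A p) := ⟨p, hpA, he2.symm, hlt⟩
    exact mem_filter.2 ⟨hm, hL, (h2 _ hm).1 hL⟩
  · intro q hq
    obtain ⟨hqA, hL, _⟩ := mem_filter.1 hq
    obtain ⟨hm, hlt, he2, _⟩ := leftChildPt_spec hL
    exact mem_filter.2 ⟨hm, q, hqA, he2.symm, hlt⟩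
  · intro p hp
    obtain ⟨hpA, hwit⟩ := mem_filter.1 hp
    obtain ⟨hm, hlt, he2, hmax⟩ := rowParent_spec hwit
    have hL : HasLeftChild A (rowParent A p) := ⟨p, hpA, he2.symm, hlt⟩
    obtain ⟨hm', hlt', he2', hmin⟩ := leftChildPt_spec hL
    have hup : (leftChildPt A (rowParent A p)).1 ≤ p.1 := hmin p hpA he2.symm hlt
    have hlo : p.1 ≤ (leftChildPt A (rowParent A p)).1 := by
      by_contra hcon
      have := hmax _ hm' (by rw [he2', he2]) (by omega)
      omega
    exact Prod.ext (by omega) (by rw [he2', he2])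
  · intro q hq
    obtain ⟨hqA, hL, _⟩ := mem_filter.1 hq
    obtain ⟨hm, hlt, he2, hmin⟩ := leftChildPt_spec hL
    have hwit : rowWit A (leftChildPt A q) := ⟨q, hqA, he2.symm, hlt⟩
    obtain ⟨hm', hlt', he2', hmax⟩ := rowParent_spec hwit
    have hlo : q.1 ≤ (rowParent A (leftChildPt A q)).1 := hmax q hqA he2.symm hlt
    have hup : (rowParent A (leftChildPt A q)).1 ≤ q.1 := by
      by_contra hcon
      have := hmin _ hm' (by rw [he2', he2]) (by omega)
      omega
    exact Prod.ext (by omega) (by rw [he2', he2])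

lemma card_rightPts {A : Finset (ℕ × ℕ)} (h1 : IsNAT A) (h2 : IsCompleteNAT A) :
    (rightPts A).card = (internals A).card := by
  apply Finset.card_bij' (fun p _ => colParent A p) (fun q _ => rightChildPt A q)
  · intro p hp
    obtain ⟨hpA, hwit⟩ := mem_filter.1 hp
    obtain ⟨hm, hlt, he2, _⟩ := colParent_spec hwit
    have hR : HasRightChild A (colParent A p) := ⟨p, hpA, he2.symm, hlt⟩
    exact mem_filter.2 ⟨hm, (h2 _ hm).2 hR, hR⟩
  · intro q hq
    obtain ⟨hqA, _, hR⟩ := mem_filter.1 hq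
    obtain ⟨hm, hlt, he2, _⟩ := rightChildPt_spec hR
    exact mem_filter.2 ⟨hm, q, hqA, he2.symm, hlt⟩
  · intro p hp
    obtain ⟨hpA, hwit⟩ := mem_filter.1 hp
    obtain ⟨hm, hlt, he2, hmax⟩ := colParent_spec hwit
    have hR : HasRightChild A (colParent A p) := ⟨p, hpA, he2.symm, hlt⟩
    obtain ⟨hm', hlt', he2', hmin⟩ := rightChildPt_spec hR
    have hup : (rightChildPt A (colParent A p)).2 ≤ p.2 := hmin p hpA he2.symm hlt
    have hlo : p.2 ≤ (rightChildPt A (colParent A p)).2 := by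
      by_contra hcon
      have := hmax _ hm' (by rw [he2', he2]) (by omega)
      omega
    exact Prod.ext (by rw [he2', he2]) (by omega)
  · intro q hq
    obtain ⟨hqA, _, hR⟩ := mem_filter.1 hq
    obtain ⟨hm, hlt, he2, hmin⟩ := rightChildPt_spec hR
    have hwit : colWit A (rightChildPt A q) := ⟨q, hqA, he2.symm, hlt⟩
    obtain ⟨hm', hlt', he2', hmax⟩ := colParent_spec hwit
    have hlo : q.2 ≤ (colParent A (rightChildPt A q)).2 := hmax q hqA he2.symm hlt
    have hup : (colParent A (rightChildPt A q)).2 ≤ q.2 := by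
      by_contra hcon
      have := hmin _ hm' (by rw [he2', he2]) (by omega)
      omega
    exact Prod.ext (by rw [he2', he2]) (by omega)

lemma erase_root_eq {A : Finset (ℕ × ℕ)} (h1 : IsNAT A) :
    A.erase (0, 0) = leftPts A ∪ rightPts A := by
  ext p
  simp only [mem_erase, mem_union, leftPts, rightPts, mem_filter]
  constructor
  · rintro ⟨hne, hp⟩
    rcases h1.2.1 p hp hne with ⟨hc, _⟩ | ⟨hr, _⟩
    · exact Or.inr ⟨hp, hc⟩
    · exact Or.inl ⟨hp, hr⟩
  · rintro (⟨hp, hw⟩ | ⟨hp, hw⟩)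
    · exact ⟨rowWit_ne_root hw, hp⟩
    · exact ⟨colWit_ne_root hw, hp⟩

lemma card_A {A : Finset (ℕ × ℕ)} (h1 : IsNAT A) (h2 : IsCompleteNAT A) :
    A.card = 2 * (internals A).card + 1 := by
  have hd : Disjoint (leftPts A) (rightPts A) := by
    rw [Finset.disjoint_left]
    intro p hpl hpr
    obtain ⟨hpA, hr⟩ := mem_filter.1 hpl
    obtain ⟨_, hc⟩ := mem_filter.1 hpr
    exact ((h1.2.1 p hpA (rowWit_ne_root hr)).elim (fun h => h.2 hr) (fun h => h.2 hc))
  have := Finset.card_erase_of_mem h1.1 (s := A)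
  rw [erase_root_eq h1, Finset.card_union_of_disjoint hd, card_leftPts h1 h2,
    card_rightPts h1 h2] at this
  have hpos : 0 < A.card := Finset.card_pos.2 ⟨_, h1.1⟩
  omega

noncomputable def colBottom (A : Finset (ℕ × ℕ)) (x : ℕ) : ℕ × ℕ :=
  (x, fmin ((A.filter fun r => r.1 = x).image Prod.snd))

lemma colBottom_spec {A : Finset (ℕ × ℕ)} {x : ℕ} (h : x ∈ A.image Prod.fst) :
    colBottom A x ∈ A ∧ (colBottom A x).1 = x ∧
    (∀ r ∈ A, r.1 = x → (colBottom A x).2 ≤ r.2) := by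
  rw [mem_image] at h; obtain ⟨p0, hp0, rfl⟩ := h
  set s := (A.filter fun r => r.1 = p0.1).image Prod.snd with hs
  have hne : s.Nonempty := ⟨p0.2, mem_image_of_mem _ (mem_filter.2 ⟨hp0, rfl⟩)⟩
  have hmem := fmin_mem hne
  rw [hs, mem_image] at hmem
  obtain ⟨r, hr, hrx⟩ := hmem
  rw [mem_filter] at hr
  have he : colBottom A p0.1 = (p0.1, r.2) := by rw [colBottom, ← hs, hrx]
  refine ⟨?_, by rw [he], ?_⟩
  · rw [he, show (p0.1, r.2) = r from Prod.ext hr.2.symm rfl]; exact hr.1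
  · intro q hq hq1
    exact fmin_le (mem_image_of_mem _ (mem_filter.2 ⟨hq, hq1⟩))

noncomputable def rowLeftmost (A : Finset (ℕ × ℕ)) (y : ℕ) : ℕ × ℕ :=
  (fmin ((A.filter fun r => r.2 = y).image Prod.fst), y)

lemma rowLeftmost_spec {A : Finset (ℕ × ℕ)} {y : ℕ} (h : y ∈ A.image Prod.snd) :
    rowLeftmost A y ∈ A ∧ (rowLeftmost A y).2 = y ∧
    (∀ r ∈ A, r.2 = y → (rowLeftmost A y).1 ≤ r.1) := by
  rw [mem_image] at h; obtain ⟨p0, hp0, rfl⟩ := h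
  set s := (A.filter fun r => r.2 = p0.2).image Prod.fst with hs
  have hne : s.Nonempty := ⟨p0.1, mem_image_of_mem _ (mem_filter.2 ⟨hp0, rfl⟩)⟩
  have hmem := fmin_mem hne
  rw [hs, mem_image] at hmem
  obtain ⟨r, hr, hrx⟩ := hmem
  rw [mem_filter] at hr
  have he : rowLeftmost A p0.2 = (r.1, p0.2) := by rw [rowLeftmost, ← hs, hrx]
  refine ⟨?_, by rw [he], ?_⟩
  · rw [he, show (r.1, p0.2) = r from Prod.ext rfl hr.2.symm]; exact hr.1
  · intro q hq hq1
    exact fmin_le (mem_image_of_mem _ (mem_filter.2 ⟨hq, hq1⟩))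

lemma card_cols {A : Finset (ℕ × ℕ)} (h1 : IsNAT A) :
    (A.image Prod.fst).card = (leftPts A).card + 1 := by
  have hb : ((A.image Prod.fst).erase 0).card = (leftPts A).card := by
    apply Finset.card_bij' (fun x _ => colBottom A x) (fun p _ => p.1)
    · intro x hx
      obtain ⟨hne, hx'⟩ := mem_erase.1 hx
      obtain ⟨hm, he1, hmin⟩ := colBottom_spec hx'
      have hnr : colBottom A x ≠ (0, 0) := by
        intro hcon; rw [hcon] at he1; exact hne he1.symm
      rcases h1.2.1 _ hm hnr with ⟨hc, _⟩ | ⟨hr, _⟩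
      · obtain ⟨q, hq, hq1, hq2⟩ := hc
        have := hmin q hq (by rw [hq1, he1])
        omega
      · exact mem_filter.2 ⟨hm, hr⟩
    · intro p hp
      obtain ⟨hpA, hw⟩ := mem_filter.1 hp
      obtain ⟨r, hr, hr2, hr1⟩ := hw
      exact mem_erase.2 ⟨by omega, mem_image_of_mem _ hpA⟩
    · intro x hx
      obtain ⟨hne, hx'⟩ := mem_erase.1 hx
      exact (colBottom_spec hx').2.1
    · intro p hp
      obtain ⟨hpA, hw⟩ := mem_filter.1 hp
      have hx' : p.1 ∈ A.image Prod.fst := mem_image_of_mem _ hpA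
      obtain ⟨hm, he1, hmin⟩ := colBottom_spec hx'
      have hle : (colBottom A p.1).2 ≤ p.2 := hmin p hpA rfl
      have : ¬ (colBottom A p.1).2 < p.2 := by
        intro hcon
        have hc : colWit A p := ⟨colBottom A p.1, hm, he1, hcon⟩
        rcases h1.2.1 p hpA (rowWit_ne_root hw) with h | h
        · exact h.2 hw
        · exact h.2 hc
      exact Prod.ext he1 (by omega)
  have h0 : (0 : ℕ) ∈ A.image Prod.fst := mem_image.2 ⟨(0,0), h1.1, rfl⟩
  have := Finset.card_erase_of_mem h0
  have hpos : 0 < (A.image Prod.fst).card := Finset.card_pos.2 ⟨0, h0⟩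
  omega

lemma card_rows {A : Finset (ℕ × ℕ)} (h1 : IsNAT A) :
    (A.image Prod.snd).card = (rightPts A).card + 1 := by
  have hb : ((A.image Prod.snd).erase 0).card = (rightPts A).card := by
    apply Finset.card_bij' (fun y _ => rowLeftmost A y) (fun p _ => p.2)
    · intro y hy
      obtain ⟨hne, hy'⟩ := mem_erase.1 hy
      obtain ⟨hm, he2, hmin⟩ := rowLeftmost_spec hy'
      have hnr : rowLeftmost A y ≠ (0, 0) := by
        intro hcon; rw [hcon] at he2; exact hne he2.symm
      rcases h1.2.1 _ hm hnr with ⟨hc, _⟩ | ⟨hr, _⟩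
      · exact mem_filter.2 ⟨hm, hc⟩
      · obtain ⟨q, hq, hq2, hq1⟩ := hr
        have := hmin q hq (by rw [hq2, he2])
        omega
    · intro p hp
      obtain ⟨hpA, hw⟩ := mem_filter.1 hp
      obtain ⟨r, hr, hr1, hr2⟩ := hw
      exact mem_erase.2 ⟨by omega, mem_image_of_mem _ hpA⟩
    · intro y hy
      obtain ⟨hne, hy'⟩ := mem_erase.1 hy
      exact (rowLeftmost_spec hy').2.1
    · intro p hp
      obtain ⟨hpA, hw⟩ := mem_filter.1 hp
      have hy' : p.2 ∈ A.image Prod.snd := mem_image_of_mem _ hpA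
      obtain ⟨hm, he2, hmin⟩ := rowLeftmost_spec hy'
      have hle : (rowLeftmost A p.2).1 ≤ p.1 := hmin p hpA rfl
      have : ¬ (rowLeftmost A p.2).1 < p.1 := by
        intro hcon
        have hc : rowWit A p := ⟨rowLeftmost A p.2, hm, he2, hcon⟩
        rcases h1.2.1 p hpA (colWit_ne_root hw) with h | h
        · exact h.2 hc
        · exact h.2 hw
      exact Prod.ext (by omega) he2
  have h0 : (0 : ℕ) ∈ A.image Prod.snd := mem_image.2 ⟨(0,0), h1.1, rfl⟩
  have := Finset.card_erase_of_mem h0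
  have hpos : 0 < (A.image Prod.snd).card := Finset.card_pos.2 ⟨0, h0⟩
  omega

theorem nat_structure {A : Finset (ℕ × ℕ)} (h1 : IsNAT A) (h2 : IsCompleteNAT A) :
    A.card = 2 * numInternal A + 1 ∧
    A.image Prod.fst = Finset.range (numInternal A + 1) ∧
    A.image Prod.snd = Finset.range (numInternal A + 1) := by
  rw [numInternal_eq]
  refine ⟨card_A h1 h2, ?_, ?_⟩
  · have hdc : ∀ x ∈ A.image Prod.fst, ∀ y, y < x → y ∈ A.image Prod.fst := by
      intro x hx y hy
      rw [mem_image] at hx; obtain ⟨p, hp, rfl⟩ := hx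
      obtain ⟨q, hq, hq1⟩ := (h1.2.2 p hp).1 y hy
      exact mem_image.2 ⟨q, hq, hq1⟩
    rw [dc_eq_range hdc, card_cols h1, card_leftPts h1 h2]
  · have hdc : ∀ x ∈ A.image Prod.snd, ∀ y, y < x → y ∈ A.image Prod.snd := by
      intro x hx y hy
      rw [mem_image] at hx; obtain ⟨p, hp, rfl⟩ := hx
      obtain ⟨q, hq, hq1⟩ := (h1.2.2 p hp).2 y hy
      exact mem_image.2 ⟨q, hq, hq1⟩
    rw [dc_eq_range hdc, card_rows h1, card_rightPts h1 h2]


lemma colParent_lt {A : Finset (ℕ × ℕ)} {p : ℕ × ℕ} (h : p.2 ≠ 0) :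
    (colParent A p).2 < p.2 := by
  by_cases hc : colWit A p
  · exact (colParent_spec hc).2.1
  · have : (A.filter fun r => r.1 = p.1 ∧ r.2 < p.2) = ∅ := by
      rw [Finset.filter_eq_empty_iff]
      intro r hr hcon
      exact hc ⟨r, hr, hcon.1, hcon.2⟩
    simp only [colParent, this, Finset.image_empty]
    have he : fmax (∅ : Finset ℕ) = 0 := rfl
    show fmax ∅ < p.2
    omega

lemma rowParent_lt {A : Finset (ℕ × ℕ)} {p : ℕ × ℕ} (h : rowWit A p) :
    (rowParent A p).1 < p.1 := (rowParent_spec h).2.1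

lemma rowParent_snd (A : Finset (ℕ × ℕ)) (p : ℕ × ℕ) : (rowParent A p).2 = p.2 := rfl
lemma colParent_fst (A : Finset (ℕ × ℕ)) (p : ℕ × ℕ) : (colParent A p).1 = p.1 := rfl

/-- side of a point: `true` = left subtree of the root, computed with fuel. -/
noncomputable def side (A : Finset (ℕ × ℕ)) : ℕ → ℕ × ℕ → Bool
  | 0, _ => true
  | fuel + 1, p =>
    if p.2 = 0 then true
    else if p.1 = 0 then false
    else if rowWit A p then side A fuel (rowParent A p)
    else side A fuel (colParent A p)

noncomputable def sideP (A : Finset (ℕ × ℕ)) (p : ℕ × ℕ) : Bool := side A (p.1 + p.2) p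

lemma side_succ (A : Finset (ℕ × ℕ)) :
    ∀ fuel p, p.1 + p.2 ≤ fuel → side A (fuel + 1) p = side A fuel p := by
  intro fuel
  induction fuel with
  | zero =>
    intro p hp
    have h2 : p.2 = 0 := by omega
    simp [side, h2]
  | succ f ih =>
    intro p hp
    by_cases h2 : p.2 = 0
    · simp [side, h2]
    · by_cases h1 : p.1 = 0
      · simp [side, h2, h1]
      · by_cases hr : rowWit A p
        · have hlt := rowParent_lt hr
          have hs := rowParent_snd A p
          show side A (f + 1 + 1) p = side A (f + 1) p
          rw [show side A (f+1+1) p = side A (f+1) (rowParent A p) by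
            simp [side, h2, h1, hr]]
          rw [show side A (f+1) p = side A f (rowParent A p) by
            simp [side, h2, h1, hr]]
          exact ih _ (by omega)
        · have hlt := colParent_lt (A := A) (p := p) h2
          have hs := colParent_fst A p
          rw [show side A (f+1+1) p = side A (f+1) (colParent A p) by
            simp [side, h2, h1, hr]]
          rw [show side A (f+1) p = side A f (colParent A p) by
            simp [side, h2, h1, hr]]
          exact ih _ (by omega)

lemma side_eq_sideP (A : Finset (ℕ × ℕ)) :
    ∀ fuel p, p.1 + p.2 ≤ fuel → side A fuel p = sideP A p := by
  intro fuel
  induction fuel with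
  | zero => intro p hp; have : p.1 + p.2 = 0 := by omega
            rw [sideP, this]
  | succ f ih =>
    intro p hp
    rcases Nat.lt_succ_iff_lt_or_eq.1 (Nat.lt_succ_of_le hp) with h | h
    · rw [side_succ A f p (by omega), ih p (by omega)]
    · rw [sideP, h]

lemma sideP_row0 {A : Finset (ℕ × ℕ)} {p : ℕ × ℕ} (h : p.2 = 0) : sideP A p = true := by
  rw [sideP]
  cases hn : p.1 + p.2 with
  | zero => simp [side]
  | succ f => simp [side, h]

lemma sideP_col0 {A : Finset (ℕ × ℕ)} {p : ℕ × ℕ} (h : p.1 = 0) (h2 : p.2 ≠ 0) :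
    sideP A p = false := by
  rw [sideP]
  cases hn : p.1 + p.2 with
  | zero => omega
  | succ f => simp [side, h, h2]

lemma sideP_rowStep {A : Finset (ℕ × ℕ)} {p : ℕ × ℕ} (h2 : p.2 ≠ 0) (h1 : p.1 ≠ 0)
    (hr : rowWit A p) : sideP A p = sideP A (rowParent A p) := by
  rw [sideP]
  cases hn : p.1 + p.2 with
  | zero => omega
  | succ f =>
    rw [show side A (f+1) p = side A f (rowParent A p) by simp [side, h2, h1, hr]]
    exact side_eq_sideP A f _ (by have := rowParent_lt hr; have := rowParent_snd A p; omega)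

lemma sideP_colStep {A : Finset (ℕ × ℕ)} {p : ℕ × ℕ} (h2 : p.2 ≠ 0) (h1 : p.1 ≠ 0)
    (hr : ¬ rowWit A p) : sideP A p = sideP A (colParent A p) := by
  rw [sideP]
  cases hn : p.1 + p.2 with
  | zero => omega
  | succ f =>
    rw [show side A (f+1) p = side A f (colParent A p) by simp [side, h2, h1, hr]]
    exact side_eq_sideP A f _ (by have := colParent_lt (A := A) h2; have := colParent_fst A p; omega)


lemma row_mono {A : Finset (ℕ × ℕ)} (h1 : IsNAT A) :
    ∀ n, ∀ p ∈ A, p.1 ≤ n → p.2 ≠ 0 → sideP A p = sideP A (rowLeftmost A p.2) := by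
  intro n
  induction n using Nat.strong_induction_on with
  | _ n ih =>
    intro p hp hn h2
    obtain ⟨hlm, hlm2, hlmin⟩ := rowLeftmost_spec (A := A) (mem_image_of_mem Prod.snd hp)
    have hle := hlmin p hp rfl
    by_cases he : (rowLeftmost A p.2).1 = p.1
    · have : rowLeftmost A p.2 = p := Prod.ext he hlm2
      rw [this]
    · have hlt : (rowLeftmost A p.2).1 < p.1 := by omega
      have hr : rowWit A p := ⟨rowLeftmost A p.2, hlm, hlm2, hlt⟩
      rw [sideP_rowStep h2 (by omega) hr]
      obtain ⟨hrpA, hrp1, hrp2, _⟩ := rowParent_spec hr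
      have hre : rowLeftmost A (rowParent A p).2 = rowLeftmost A p.2 := by rw [hrp2]
      rcases Nat.eq_zero_or_pos n with rfl | hpos
      · omega
      · rw [ih (n-1) (by omega) _ hrpA (by omega) (by omega), hre]

lemma col_mono {A : Finset (ℕ × ℕ)} (h1 : IsNAT A) :
    ∀ n, ∀ p ∈ A, p.2 ≤ n → p.1 ≠ 0 → sideP A p = sideP A (colBottom A p.1) := by
  intro n
  induction n using Nat.strong_induction_on with
  | _ n ih =>
    intro p hp hn h1'
    obtain ⟨hcb, hcb1, hcmin⟩ := colBottom_spec (A := A) (mem_image_of_mem Prod.fst hp)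
    have hle := hcmin p hp rfl
    by_cases he : (colBottom A p.1).2 = p.2
    · have : colBottom A p.1 = p := Prod.ext hcb1 he
      rw [this]
    · have hlt : (colBottom A p.1).2 < p.2 := by omega
      have hc : colWit A p := ⟨colBottom A p.1, hcb, hcb1, hlt⟩
      have h2 : p.2 ≠ 0 := by omega
      have hnr : p ≠ (0, 0) := by intro hcon; rw [hcon] at h2; exact h2 rfl
      have hnw : ¬ rowWit A p := by
        rcases h1.2.1 p hp hnr with h | h
        · exact h.2
        · exact absurd hc h.2
      rw [sideP_colStep h2 h1' hnw]
      obtain ⟨hcpA, hcp2, hcp1, _⟩ := colParent_spec hc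
      have hre : colBottom A (colParent A p).1 = colBottom A p.1 := by rw [hcp1]
      rcases Nat.eq_zero_or_pos n with rfl | hpos
      · omega
      · rw [ih (n-1) (by omega) _ hcpA (by omega) (by rw [hcp1]; exact h1'), hre]

lemma row_mono' {A : Finset (ℕ × ℕ)} (h1 : IsNAT A) {p q : ℕ × ℕ} (hp : p ∈ A) (hq : q ∈ A)
    (he : p.2 = q.2) (h2 : p.2 ≠ 0) : sideP A p = sideP A q := by
  rw [row_mono h1 p.1 p hp le_rfl h2, row_mono h1 q.1 q hq le_rfl (by omega), he]

lemma col_mono' {A : Finset (ℕ × ℕ)} (h1 : IsNAT A) {p q : ℕ × ℕ} (hp : p ∈ A) (hq : q ∈ A)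
    (he : p.1 = q.1) (h2 : p.1 ≠ 0) : sideP A p = sideP A q := by
  rw [col_mono h1 p.2 p hp le_rfl h2, col_mono h1 q.2 q hq le_rfl (by omega), he]

lemma exists_axis {A : Finset (ℕ × ℕ)} (h1 : IsNAT A) :
    ∀ n, ∀ p ∈ A, p ≠ (0, 0) → p.1 + p.2 ≤ n →
    (∃ q ∈ A, q.2 = 0 ∧ 0 < q.1) ∨ (∃ q ∈ A, q.1 = 0 ∧ 0 < q.2) := by
  intro n
  induction n using Nat.strong_induction_on with
  | _ n ih =>
    intro p hp hnr hn
    by_cases h2 : p.2 = 0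
    · exact Or.inl ⟨p, hp, h2, by
        rcases Nat.eq_zero_or_pos p.1 with h' | h'
        · exact absurd (Prod.ext h' h2) hnr
        · exact h'⟩
    · by_cases h1' : p.1 = 0
      · exact Or.inr ⟨p, hp, h1', by omega⟩
      · rcases h1.2.1 p hp hnr with ⟨hc, _⟩ | ⟨hr, _⟩
        · obtain ⟨hcpA, hcp2, hcp1, _⟩ := colParent_spec hc
          have : colParent A p ≠ (0, 0) := by
            intro hcon
            have := colParent_fst A p
            rw [hcon] at this
            exact h1' this.symm
          exact ih (n-1) (by omega) _ hcpA this (by have := colParent_fst A p; omega)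
        · obtain ⟨hrpA, hrp1, hrp2, _⟩ := rowParent_spec hr
          have : rowParent A p ≠ (0, 0) := by
            intro hcon
            have := rowParent_snd A p
            rw [hcon] at this
            exact h2 this.symm
          exact ih (n-1) (by omega) _ hrpA this (by have := rowParent_snd A p; omega)

lemma root_both {A : Finset (ℕ × ℕ)} (h1 : IsNAT A) (h2 : IsCompleteNAT A)
    (h3 : 2 ≤ A.card) : HasLeftChild A (0, 0) ∧ HasRightChild A (0, 0) := by
  have h3' : 1 < A.card := by omega
  obtain ⟨p, hp, hnr⟩ := Finset.exists_mem_ne h3' (0, 0)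
  rcases exists_axis h1 (p.1 + p.2) p hp hnr le_rfl with ⟨q, hq, hq2, hq1⟩ | ⟨q, hq, hq1, hq2⟩
  · have hL : HasLeftChild A (0, 0) := ⟨q, hq, hq2, hq1⟩
    exact ⟨hL, (h2 _ h1.1).1 hL⟩
  · have hR : HasRightChild A (0, 0) := ⟨q, hq, hq1, hq2⟩
    exact ⟨(h2 _ h1.1).2 hR, hR⟩

noncomputable def leftPart (A : Finset (ℕ × ℕ)) : Finset (ℕ × ℕ) :=
  A.filter fun p => p ≠ (0, 0) ∧ sideP A p = true
noncomputable def rightPart (A : Finset (ℕ × ℕ)) : Finset (ℕ × ℕ) :=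
  A.filter fun p => p ≠ (0, 0) ∧ sideP A p = false

noncomputable def CL (A : Finset (ℕ × ℕ)) : Finset ℕ := (leftPart A).image Prod.fst
noncomputable def RL (A : Finset (ℕ × ℕ)) : Finset ℕ := (leftPart A).image Prod.snd
noncomputable def CR (A : Finset (ℕ × ℕ)) : Finset ℕ := (rightPart A).image Prod.fst
noncomputable def RR (A : Finset (ℕ × ℕ)) : Finset ℕ := (rightPart A).image Prod.snd

lemma parts_partition {A : Finset (ℕ × ℕ)} (h1 : IsNAT A) :
    A = insert (0, 0) (leftPart A ∪ rightPart A) := by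
  ext p
  simp only [Finset.mem_insert, Finset.mem_union, leftPart, rightPart, Finset.mem_filter]
  constructor
  · intro hp
    by_cases hnr : p = (0, 0)
    · exact Or.inl hnr
    · by_cases hs : sideP A p = true
      · exact Or.inr (Or.inl ⟨hp, hnr, hs⟩)
      · exact Or.inr (Or.inr ⟨hp, hnr, by simpa using hs⟩)
  · rintro (rfl | ⟨hp, _⟩ | ⟨hp, _⟩)
    · exact h1.1
    · exact hp
    · exact hp

lemma leftPart_fst_ne {A : Finset (ℕ × ℕ)} {p : ℕ × ℕ} (hp : p ∈ leftPart A) : p.1 ≠ 0 := by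
  obtain ⟨hpA, hnr, hs⟩ := Finset.mem_filter.1 hp
  intro hcon
  have h2 : p.2 ≠ 0 := by
    intro h2; exact hnr (Prod.ext hcon h2)
  rw [sideP_col0 hcon h2] at hs
  exact Bool.false_ne_true hs

lemma rightPart_snd_ne {A : Finset (ℕ × ℕ)} {p : ℕ × ℕ} (hp : p ∈ rightPart A) : p.2 ≠ 0 := by
  obtain ⟨hpA, hnr, hs⟩ := Finset.mem_filter.1 hp
  intro hcon
  rw [sideP_row0 hcon] at hs
  simp at hs

lemma row_closed_left {A : Finset (ℕ × ℕ)} (h1 : IsNAT A) {p r : ℕ × ℕ}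
    (hp : p ∈ leftPart A) (hr : r ∈ A) (he : r.2 = p.2) (hnr : r ≠ (0, 0)) :
    r ∈ leftPart A := by
  obtain ⟨hpA, hpnr, hs⟩ := Finset.mem_filter.1 hp
  refine Finset.mem_filter.2 ⟨hr, hnr, ?_⟩
  by_cases h2 : p.2 = 0
  · exact sideP_row0 (by omega)
  · rw [row_mono' h1 hr hpA he (by omega)]; exact hs

lemma col_closed_left {A : Finset (ℕ × ℕ)} (h1 : IsNAT A) {p r : ℕ × ℕ}
    (hp : p ∈ leftPart A) (hr : r ∈ A) (he : r.1 = p.1) : r ∈ leftPart A := by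
  obtain ⟨hpA, hpnr, hs⟩ := Finset.mem_filter.1 hp
  have h1' : p.1 ≠ 0 := leftPart_fst_ne hp
  have hnr : r ≠ (0, 0) := by
    intro hcon; rw [hcon] at he; exact h1' he.symm
  refine Finset.mem_filter.2 ⟨hr, hnr, ?_⟩
  rw [col_mono' h1 hr hpA he (by omega)]; exact hs

lemma row_closed_right {A : Finset (ℕ × ℕ)} (h1 : IsNAT A) {p r : ℕ × ℕ}
    (hp : p ∈ rightPart A) (hr : r ∈ A) (he : r.2 = p.2) : r ∈ rightPart A := by
  obtain ⟨hpA, hpnr, hs⟩ := Finset.mem_filter.1 hp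
  have h2 : p.2 ≠ 0 := rightPart_snd_ne hp
  have hnr : r ≠ (0, 0) := by
    intro hcon; rw [hcon] at he; exact h2 he.symm
  refine Finset.mem_filter.2 ⟨hr, hnr, ?_⟩
  rw [row_mono' h1 hr hpA he (by omega)]; exact hs

lemma col_closed_right {A : Finset (ℕ × ℕ)} (h1 : IsNAT A) {p r : ℕ × ℕ}
    (hp : p ∈ rightPart A) (hr : r ∈ A) (he : r.1 = p.1) (hnr : r ≠ (0, 0)) :
    r ∈ rightPart A := by
  obtain ⟨hpA, hpnr, hs⟩ := Finset.mem_filter.1 hp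
  refine Finset.mem_filter.2 ⟨hr, hnr, ?_⟩
  by_cases h1' : p.1 = 0
  · have hr2 : r.2 ≠ 0 := by
      intro hcon
      exact hnr (Prod.ext (by omega) hcon)
    exact sideP_col0 (by omega) hr2
  · rw [col_mono' h1 hr hpA he (by omega)]; exact hs

lemma left_root_mem {A : Finset (ℕ × ℕ)} (h1 : IsNAT A) (hL : HasLeftChild A (0, 0)) :
    (fmin (CL A), 0) ∈ leftPart A := by
  show (fmin ((leftPart A).image Prod.fst), 0) ∈ leftPart A
  obtain ⟨r, hr, hr2, hr1⟩ := hL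
  have hrl : r ∈ leftPart A := Finset.mem_filter.2 ⟨hr, by
      intro hcon; rw [hcon] at hr1; exact absurd hr1 (by omega), sideP_row0 hr2⟩
  have hCL : fmin ((leftPart A).image Prod.fst) ∈ (leftPart A).image Prod.fst :=
    fmin_mem ⟨r.1, Finset.mem_image_of_mem _ hrl⟩
  obtain ⟨p, hpl, hpx⟩ := Finset.mem_image.1 hCL
  have hpA : p ∈ A := (Finset.mem_filter.1 hpl).1
  obtain ⟨hcb, hcb1, hcmin⟩ := colBottom_spec (A := A) (mem_image_of_mem Prod.fst hpA)
  have hcbl : colBottom A p.1 ∈ leftPart A := col_closed_left h1 hpl hcb hcb1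
  have hx0 : p.1 ≠ 0 := leftPart_fst_ne hpl
  have hcb2 : (colBottom A p.1).2 = 0 := by
    by_contra hcon
    have hnr : colBottom A p.1 ≠ (0, 0) := by
      intro h; rw [h] at hcb1; exact hx0 hcb1.symm
    have hnc : ¬ colWit A (colBottom A p.1) := by
      rintro ⟨q, hq, hq1, hq2⟩
      have := hcmin q hq (by rw [hq1, hcb1])
      omega
    have hrw : rowWit A (colBottom A p.1) := by
      rcases h1.2.1 _ hcb hnr with h | h
      · exact absurd h.1 hnc
      · exact h.1
    obtain ⟨hrpA, hrp1, hrp2, _⟩ := rowParent_spec hrw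
    have hrpnr : rowParent A (colBottom A p.1) ≠ (0, 0) := by
      intro h
      have := rowParent_snd A (colBottom A p.1)
      rw [h] at this
      exact hcon this.symm
    have hrpl : rowParent A (colBottom A p.1) ∈ leftPart A :=
      row_closed_left h1 hcbl hrpA (rowParent_snd A _) hrpnr
    have hmem : (rowParent A (colBottom A p.1)).1 ∈ (leftPart A).image Prod.fst :=
      Finset.mem_image_of_mem _ hrpl
    have := fmin_le hmem
    omega
  have : colBottom A p.1 = (fmin ((leftPart A).image Prod.fst), 0) :=
    Prod.ext (by rw [hcb1, hpx]) hcb2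
  rw [← this]; exact hcbl

lemma right_root_mem {A : Finset (ℕ × ℕ)} (h1 : IsNAT A) (hR : HasRightChild A (0, 0)) :
    (0, fmin (RR A)) ∈ rightPart A := by
  show (0, fmin ((rightPart A).image Prod.snd)) ∈ rightPart A
  obtain ⟨r, hr, hr1, hr2⟩ := hR
  have hrl : r ∈ rightPart A := Finset.mem_filter.2 ⟨hr, by
      intro hcon; rw [hcon] at hr2; exact absurd hr2 (by omega),
      sideP_col0 hr1 (by omega)⟩
  have hRR : fmin ((rightPart A).image Prod.snd) ∈ (rightPart A).image Prod.snd :=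
    fmin_mem ⟨r.2, Finset.mem_image_of_mem _ hrl⟩
  obtain ⟨p, hpl, hpy⟩ := Finset.mem_image.1 hRR
  have hpA : p ∈ A := (Finset.mem_filter.1 hpl).1
  obtain ⟨hlm, hlm2, hlmin⟩ := rowLeftmost_spec (A := A) (mem_image_of_mem Prod.snd hpA)
  have hy0 : p.2 ≠ 0 := rightPart_snd_ne hpl
  have hlml : rowLeftmost A p.2 ∈ rightPart A := row_closed_right h1 hpl hlm hlm2
  have hlm1 : (rowLeftmost A p.2).1 = 0 := by
    by_contra hcon
    have hnr : rowLeftmost A p.2 ≠ (0, 0) := by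
      intro h; rw [h] at hlm2; exact hy0 hlm2.symm
    have hnrw : ¬ rowWit A (rowLeftmost A p.2) := by
      rintro ⟨q, hq, hq2, hq1⟩
      have := hlmin q hq (by rw [hq2, hlm2])
      omega
    have hcw : colWit A (rowLeftmost A p.2) := by
      rcases h1.2.1 _ hlm hnr with h | h
      · exact h.1
      · exact absurd h.1 hnrw
    obtain ⟨hcpA, hcp2, hcp1, _⟩ := colParent_spec hcw
    have hcpnr : colParent A (rowLeftmost A p.2) ≠ (0, 0) := by
      intro h
      have := colParent_fst A (rowLeftmost A p.2)
      rw [h] at this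
      exact hcon this.symm
    have hcpl : colParent A (rowLeftmost A p.2) ∈ rightPart A :=
      col_closed_right h1 hlml hcpA (colParent_fst A _) hcpnr
    have hmem : (colParent A (rowLeftmost A p.2)).2 ∈ (rightPart A).image Prod.snd :=
      Finset.mem_image_of_mem _ hcpl
    have := fmin_le hmem
    omega
  have : rowLeftmost A p.2 = (0, fmin ((rightPart A).image Prod.snd)) :=
    Prod.ext hlm1 (by rw [hlm2, hpy])
  rw [← this]; exact hlml

noncomputable def unrank (s : Finset ℕ) (k : ℕ) : ℕ :=
  if h : k < s.card then (s.orderIsoOfFin rfl ⟨k, h⟩ : ℕ) else 0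

noncomputable def rankIn (s : Finset ℕ) (x : ℕ) : ℕ :=
  if h : x ∈ s then ((s.orderIsoOfFin rfl).symm ⟨x, h⟩ : ℕ) else 0

lemma unrank_mem {s : Finset ℕ} {k : ℕ} (h : k < s.card) : unrank s k ∈ s := by
  simp only [unrank, dif_pos h]; exact (s.orderIsoOfFin rfl ⟨k, h⟩).2

lemma unrank_lt_iff {s : Finset ℕ} {j k : ℕ} (hj : j < s.card) (hk : k < s.card) :
    unrank s j < unrank s k ↔ j < k := by
  simp only [unrank, dif_pos hj, dif_pos hk]
  rw [show ((s.orderIsoOfFin rfl ⟨j, hj⟩ : ℕ) < (s.orderIsoOfFin rfl ⟨k, hk⟩ : ℕ)) ↔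
      (s.orderIsoOfFin rfl ⟨j, hj⟩ < s.orderIsoOfFin rfl ⟨k, hk⟩) from Iff.rfl,
    OrderIso.lt_iff_lt]
  exact Iff.rfl

lemma rankIn_lt_card {s : Finset ℕ} {x : ℕ} (h : x ∈ s) : rankIn s x < s.card := by
  simp only [rankIn, dif_pos h]; exact ((s.orderIsoOfFin rfl).symm ⟨x, h⟩).2

lemma unrank_rankIn {s : Finset ℕ} {x : ℕ} (h : x ∈ s) : unrank s (rankIn s x) = x := by
  have h2 : rankIn s x < s.card := rankIn_lt_card h
  simp only [rankIn, dif_pos h] at h2 ⊢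
  simp only [unrank, dif_pos h2]
  have : (⟨((s.orderIsoOfFin rfl).symm ⟨x, h⟩ : ℕ), h2⟩ : Fin s.card)
      = (s.orderIsoOfFin rfl).symm ⟨x, h⟩ := by ext; rfl
  rw [this, OrderIso.apply_symm_apply]

lemma rankIn_unrank {s : Finset ℕ} {k : ℕ} (h : k < s.card) : rankIn s (unrank s k) = k := by
  have hm := unrank_mem h
  simp only [unrank, dif_pos h] at hm ⊢
  simp only [rankIn, dif_pos hm]
  have : (⟨((s.orderIsoOfFin rfl) ⟨k, h⟩ : ℕ), hm⟩ : {x // x ∈ s}) = (s.orderIsoOfFin rfl) ⟨k, h⟩ := by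
    ext; rfl
  rw [this, OrderIso.symm_apply_apply]

lemma rankIn_lt_iff {s : Finset ℕ} {x y : ℕ} (hx : x ∈ s) (hy : y ∈ s) :
    rankIn s x < rankIn s y ↔ x < y := by
  rw [← unrank_lt_iff (rankIn_lt_card hx) (rankIn_lt_card hy), unrank_rankIn hx, unrank_rankIn hy]

lemma image_unrank (s : Finset ℕ) : (Finset.range s.card).image (unrank s) = s := by
  apply Finset.ext; intro x
  simp only [mem_image, mem_range]
  constructor
  · rintro ⟨k, hk, rfl⟩; exact unrank_mem hk
  · intro hx; exact ⟨rankIn s x, rankIn_lt_card hx, unrank_rankIn hx⟩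


lemma unrank_zero {s : Finset ℕ} (h : 0 ∈ s) : unrank s 0 = 0 := by
  have hc : 0 < s.card := Finset.card_pos.2 ⟨0, h⟩
  rcases Nat.eq_zero_or_pos (rankIn s 0) with h0 | h0
  · have h' := unrank_rankIn h (x := 0)
    rw [h0] at h'
    exact h'
  · have := (unrank_lt_iff hc (rankIn_lt_card h)).2 h0
    rw [unrank_rankIn h] at this
    omega

lemma unrank_inj {s : Finset ℕ} {j k : ℕ} (hj : j < s.card) (hk : k < s.card)
    (h : unrank s j = unrank s k) : j = k := by
  have h1 := unrank_lt_iff hj hk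
  have h2 := unrank_lt_iff hk hj
  omega

section transfer

variable (A : Finset (ℕ × ℕ)) (f g : ℕ → ℕ)

def pmap : ℕ × ℕ → ℕ × ℕ := fun p => (f p.1, g p.2)

variable (hf : ∀ a ∈ A, ∀ b ∈ A, f a.1 < f b.1 ↔ a.1 < b.1)
variable (hg : ∀ a ∈ A, ∀ b ∈ A, g a.2 < g b.2 ↔ a.2 < b.2)

include hf in
lemma hfe : ∀ a ∈ A, ∀ b ∈ A, (f a.1 = f b.1 ↔ a.1 = b.1) := by
  intro a ha b hb
  have h1 := hf a ha b hb; have h2 := hf b hb a ha; omega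

include hg in
lemma hge : ∀ a ∈ A, ∀ b ∈ A, (g a.2 = g b.2 ↔ a.2 = b.2) := by
  intro a ha b hb
  have h1 := hg a ha b hb; have h2 := hg b hb a ha; omega

include hf hg in
lemma pmap_injOn : Set.InjOn (pmap f g) A := by
  intro a ha b hb hab
  have h1 := (hfe A f hf) a ha b hb
  have h2 := (hge A g hg) a ha b hb
  simp only [pmap, Prod.mk.injEq] at hab
  exact Prod.ext (h1.1 hab.1) (h2.1 hab.2)

include hf hg in
lemma rowWit_pmap {p : ℕ × ℕ} (hp : p ∈ A) :
    rowWit (A.image (pmap f g)) (pmap f g p) ↔ rowWit A p := by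
  constructor
  · rintro ⟨r, hr, h2, h1⟩
    rw [mem_image] at hr; obtain ⟨r', hr', rfl⟩ := hr
    exact ⟨r', hr', (hge A g hg r' hr' p hp).1 h2, (hf r' hr' p hp).1 h1⟩
  · rintro ⟨r, hr, h2, h1⟩
    exact ⟨pmap f g r, mem_image_of_mem _ hr,
      (hge A g hg r hr p hp).2 h2, (hf r hr p hp).2 h1⟩

include hf hg in
lemma colWit_pmap {p : ℕ × ℕ} (hp : p ∈ A) :
    colWit (A.image (pmap f g)) (pmap f g p) ↔ colWit A p := by
  constructor
  · rintro ⟨r, hr, h1, h2⟩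
    rw [mem_image] at hr; obtain ⟨r', hr', rfl⟩ := hr
    exact ⟨r', hr', (hfe A f hf r' hr' p hp).1 h1, (hg r' hr' p hp).1 h2⟩
  · rintro ⟨r, hr, h1, h2⟩
    exact ⟨pmap f g r, mem_image_of_mem _ hr,
      (hfe A f hf r hr p hp).2 h1, (hg r hr p hp).2 h2⟩

include hf hg in
lemma hasLeft_pmap {p : ℕ × ℕ} (hp : p ∈ A) :
    HasLeftChild (A.image (pmap f g)) (pmap f g p) ↔ HasLeftChild A p := by
  constructor
  · rintro ⟨r, hr, h2, h1⟩
    rw [mem_image] at hr; obtain ⟨r', hr', rfl⟩ := hr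
    exact ⟨r', hr', (hge A g hg r' hr' p hp).1 h2, (hf p hp r' hr').1 h1⟩
  · rintro ⟨r, hr, h2, h1⟩
    exact ⟨pmap f g r, mem_image_of_mem _ hr,
      (hge A g hg r hr p hp).2 h2, (hf p hp r hr).2 h1⟩

include hf hg in
lemma hasRight_pmap {p : ℕ × ℕ} (hp : p ∈ A) :
    HasRightChild (A.image (pmap f g)) (pmap f g p) ↔ HasRightChild A p := by
  constructor
  · rintro ⟨r, hr, h1, h2⟩
    rw [mem_image] at hr; obtain ⟨r', hr', rfl⟩ := hr
    exact ⟨r', hr', (hfe A f hf r' hr' p hp).1 h1, (hg p hp r' hr').1 h2⟩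
  · rintro ⟨r, hr, h1, h2⟩
    exact ⟨pmap f g r, mem_image_of_mem _ hr,
      (hfe A f hf r hr p hp).2 h1, (hg p hp r hr).2 h2⟩

include hf hg in
lemma internals_pmap : internals (A.image (pmap f g)) = (internals A).image (pmap f g) := by
  apply Finset.ext; intro q
  simp only [internals, mem_filter, mem_image]
  constructor
  · rintro ⟨hq, hL, hR⟩
    obtain ⟨p, hp, rfl⟩ := hq
    exact ⟨p, ⟨hp, (hasLeft_pmap A f g hf hg hp).1 hL, (hasRight_pmap A f g hf hg hp).1 hR⟩, rfl⟩
  · rintro ⟨p, ⟨hp, hL, hR⟩, rfl⟩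
    exact ⟨⟨p, hp, rfl⟩, (hasLeft_pmap A f g hf hg hp).2 hL,
      (hasRight_pmap A f g hf hg hp).2 hR⟩

include hf hg in
lemma numInternal_pmap : numInternal (A.image (pmap f g)) = numInternal A := by
  rw [numInternal_eq, numInternal_eq, internals_pmap A f g hf hg]
  exact Finset.card_image_of_injOn <| (pmap_injOn A f g hf hg).mono
    (by intro x hx; exact (mem_filter.1 hx).1)

include hf hg in
lemma card_pmap : (A.image (pmap f g)).card = A.card :=
  Finset.card_image_of_injOn (pmap_injOn A f g hf hg)

end transfer


lemma rankIn_zero' {s : Finset ℕ} (h : 0 ∈ s) : rankIn s 0 = 0 := by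
  have hc : 0 < s.card := Finset.card_pos.2 ⟨0, h⟩
  have := rankIn_unrank hc
  rw [unrank_zero h] at this
  exact this

lemma rankIn_fmin {s : Finset ℕ} (h : s.Nonempty) : rankIn s (fmin s) = 0 := by
  have hm : fmin s ∈ s := fmin_mem h
  have hc := rankIn_lt_card hm
  by_contra hne
  have h0 : (0 : ℕ) < rankIn s (fmin s) := by omega
  have := (unrank_lt_iff (by omega) hc).2 h0
  rw [unrank_rankIn hm] at this
  have := fmin_le (unrank_mem (s := s) (k := 0) (by omega))
  omega

lemma image_rankIn (s : Finset ℕ) : s.image (rankIn s) = Finset.range s.card := by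
  ext j
  simp only [Finset.mem_image, Finset.mem_range]
  constructor
  · rintro ⟨x, hx, rfl⟩; exact rankIn_lt_card hx
  · intro hj; exact ⟨unrank s j, unrank_mem hj, rankIn_unrank hj⟩

noncomputable def combine (n : ℕ) (L Rt : Finset (ℕ × ℕ)) (R C : Finset ℕ) :
    Finset (ℕ × ℕ) :=
  insert (0, 0)
    ((L.image (pmap (unrank C) (unrank (insert 0 R)))) ∪
     (Rt.image (pmap (unrank (insert 0 (Finset.Icc 1 (n+1) \ C)))
       (unrank (Finset.Icc 1 (n+1) \ R)))))

noncomputable def leftTree (A : Finset (ℕ × ℕ)) : Finset (ℕ × ℕ) :=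
  (leftPart A).image (pmap (rankIn (CL A)) (rankIn (RL A)))

noncomputable def rightTree (A : Finset (ℕ × ℕ)) : Finset (ℕ × ℕ) :=
  (rightPart A).image (pmap (rankIn (CR A)) (rankIn (RR A)))

theorem combine_main (n i : ℕ) (hin : i ≤ n) (L Rt : Finset (ℕ × ℕ)) (R C : Finset ℕ)
    (hL1 : IsNAT L) (hL2 : IsCompleteNAT L) (hLi : numInternal L = i)
    (hRt1 : IsNAT Rt) (hRt2 : IsCompleteNAT Rt) (hRti : numInternal Rt = n - i)
    (hR : R ⊆ Finset.Icc 1 (n+1)) (hRcard : R.card = i)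
    (hC : C ⊆ Finset.Icc 1 (n+1)) (hCcard : C.card = i + 1) :
    IsNAT (combine n L Rt R C) ∧ IsCompleteNAT (combine n L Rt R C) ∧
    numInternal (combine n L Rt R C) = n + 1 ∧
    leftTree (combine n L Rt R C) = L ∧ rightTree (combine n L Rt R C) = Rt ∧
    (RL (combine n L Rt R C)).erase 0 = R ∧ CL (combine n L Rt R C) = C := by
  obtain ⟨hLcard, hLcols, hLrows⟩ := nat_structure hL1 hL2
  obtain ⟨hRtcard, hRtcols, hRtrows⟩ := nat_structure hRt1 hRt2
  rw [hLi] at hLcard hLcols hLrows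
  rw [hRti] at hRtcard hRtcols hRtrows
  set sR : Finset ℕ := insert 0 R with hsR
  set sRc : Finset ℕ := Finset.Icc 1 (n+1) \ R with hsRc
  set sCc : Finset ℕ := insert 0 (Finset.Icc 1 (n+1) \ C) with hsCc
  have h0R : 0 ∉ R := by intro h; have := hR h; rw [Finset.mem_Icc] at this; omega
  have h0C : 0 ∉ C := by intro h; have := hC h; rw [Finset.mem_Icc] at this; omega
  have hIcc : (Finset.Icc 1 (n+1)).card = n + 1 := by rw [Nat.card_Icc]; omega
  have h0sR : (0 : ℕ) ∈ sR := Finset.mem_insert_self 0 R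
  have h0sCc : (0 : ℕ) ∈ sCc := Finset.mem_insert_self 0 _
  have hsRcnot : ∀ y ∈ sRc, y ≠ 0 ∧ y ≤ n + 1 ∧ y ∉ R := by
    intro y hy
    rw [hsRc, Finset.mem_sdiff, Finset.mem_Icc] at hy
    exact ⟨by omega, by omega, hy.2⟩
  have hsRcard : sR.card = i + 1 := by
    rw [hsR, Finset.card_insert_of_notMem h0R, hRcard]
  have hsRccard : sRc.card = n - i + 1 := by
    rw [hsRc, Finset.card_sdiff_of_subset hR, hIcc, hRcard]; omega
  have h0Icc : 0 ∉ Finset.Icc 1 (n+1) \ C := by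
    intro h; rw [Finset.mem_sdiff, Finset.mem_Icc] at h; omega
  have hsCccard : sCc.card = n - i + 1 := by
    rw [hsCc, Finset.card_insert_of_notMem h0Icc, Finset.card_sdiff_of_subset hC, hIcc, hCcard]
    omega
  set fL := unrank C with hfLdef
  set gL := unrank sR with hgLdef
  set fR := unrank sCc with hfRdef
  set gR := unrank sRc with hgRdef
  set BL := L.image (pmap fL gL) with hBLdef
  set BR := Rt.image (pmap fR gR) with hBRdef
  set A := combine n L Rt R C with hAdef
  have hA : A = insert (0, 0) (BL ∪ BR) := rfl
  have hmemA : ∀ p, p ∈ A ↔ p = (0, 0) ∨ p ∈ BL ∨ p ∈ BR := by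
    intro p; rw [hA]; simp [Finset.mem_insert, Finset.mem_union]
  have hLb1 : ∀ a ∈ L, a.1 < C.card := by
    intro a ha
    have := Finset.mem_image_of_mem Prod.fst ha
    rw [hLcols, Finset.mem_range] at this
    omega
  have hLb2 : ∀ a ∈ L, a.2 < sR.card := by
    intro a ha
    have := Finset.mem_image_of_mem Prod.snd ha
    rw [hLrows, Finset.mem_range] at this
    omega
  have hRb1 : ∀ a ∈ Rt, a.1 < sCc.card := by
    intro a ha
    have := Finset.mem_image_of_mem Prod.fst ha
    rw [hRtcols, Finset.mem_range] at this
    omega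
  have hRb2 : ∀ a ∈ Rt, a.2 < sRc.card := by
    intro a ha
    have := Finset.mem_image_of_mem Prod.snd ha
    rw [hRtrows, Finset.mem_range] at this
    omega
  have hfL : ∀ a ∈ L, ∀ b ∈ L, fL a.1 < fL b.1 ↔ a.1 < b.1 :=
    fun a ha b hb => unrank_lt_iff (hLb1 a ha) (hLb1 b hb)
  have hgL : ∀ a ∈ L, ∀ b ∈ L, gL a.2 < gL b.2 ↔ a.2 < b.2 :=
    fun a ha b hb => unrank_lt_iff (hLb2 a ha) (hLb2 b hb)
  have hfR : ∀ a ∈ Rt, ∀ b ∈ Rt, fR a.1 < fR b.1 ↔ a.1 < b.1 :=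
    fun a ha b hb => unrank_lt_iff (hRb1 a ha) (hRb1 b hb)
  have hgR : ∀ a ∈ Rt, ∀ b ∈ Rt, gR a.2 < gR b.2 ↔ a.2 < b.2 :=
    fun a ha b hb => unrank_lt_iff (hRb2 a ha) (hRb2 b hb)
  have hBLc : ∀ b ∈ BL, b.1 ∈ C ∧ b.2 ∈ sR := by
    intro b hb
    rw [hBLdef, Finset.mem_image] at hb
    obtain ⟨p, hp, rfl⟩ := hb
    exact ⟨unrank_mem (hLb1 p hp), unrank_mem (hLb2 p hp)⟩
  have hBRc : ∀ b ∈ BR, b.1 ∈ sCc ∧ b.2 ∈ sRc := by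
    intro b hb
    rw [hBRdef, Finset.mem_image] at hb
    obtain ⟨p, hp, rfl⟩ := hb
    exact ⟨unrank_mem (hRb1 p hp), unrank_mem (hRb2 p hp)⟩
  have hBL1 : ∀ b ∈ BL, b.1 ≠ 0 := by
    intro b hb
    have := hC (hBLc b hb).1
    rw [Finset.mem_Icc] at this
    omega
  have hBR2 : ∀ b ∈ BR, b.2 ≠ 0 := by
    intro b hb
    exact (hsRcnot _ (hBRc b hb).2).1
  have hBLroot : ∀ b ∈ BL, b ≠ (0, 0) := by
    intro b hb hcon
    exact hBL1 b hb (by rw [hcon])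
  have hBRroot : ∀ b ∈ BR, b ≠ (0, 0) := by
    intro b hb hcon
    exact hBR2 b hb (by rw [hcon])
  have hCdisj : ∀ x, x ∈ C → x ∈ sCc → False := by
    intro x hx hx'
    rcases Finset.mem_insert.1 hx' with rfl | hx'
    · exact h0C hx
    · exact (Finset.mem_sdiff.1 hx').2 hx
  have hRdisj : ∀ y, y ∈ sR → y ∈ sRc → False := by
    intro y hy hy'
    have := hsRcnot y hy'
    rcases Finset.mem_insert.1 hy with rfl | hy
    · exact this.1 rfl
    · exact this.2.2 hy
  have hgL0 : ∀ j < sR.card, (gL j = 0 ↔ j = 0) := by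
    intro j hj
    constructor
    · intro h
      refine unrank_inj hj (Finset.card_pos.2 ⟨0, h0sR⟩) ?_
      rw [show unrank sR j = gL j from rfl, h, unrank_zero h0sR]
    · rintro rfl; exact unrank_zero h0sR
  have hfR0 : ∀ j < sCc.card, (fR j = 0 ↔ j = 0) := by
    intro j hj
    constructor
    · intro h
      refine unrank_inj hj (Finset.card_pos.2 ⟨0, h0sCc⟩) ?_
      rw [show unrank sCc j = fR j from rfl, h, unrank_zero h0sCc]
    · rintro rfl; exact unrank_zero h0sCc
  have hcolsBL : BL.image Prod.fst = C := by
    rw [hBLdef, Finset.image_image]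
    rw [show Prod.fst ∘ pmap fL gL = fL ∘ Prod.fst from rfl, ← Finset.image_image, hLcols,
      hfLdef, show i + 1 = C.card from hCcard.symm, image_unrank]
  have hrowsBL : BL.image Prod.snd = sR := by
    rw [hBLdef, Finset.image_image]
    rw [show Prod.snd ∘ pmap fL gL = gL ∘ Prod.snd from rfl, ← Finset.image_image, hLrows,
      hgLdef, show i + 1 = sR.card from hsRcard.symm, image_unrank]
  have hcolsBR : BR.image Prod.fst = sCc := by
    rw [hBRdef, Finset.image_image]
    rw [show Prod.fst ∘ pmap fR gR = fR ∘ Prod.fst from rfl, ← Finset.image_image, hRtcols,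
      hfRdef, show n - i + 1 = sCc.card from hsCccard.symm, image_unrank]
  have hrowsBR : BR.image Prod.snd = sRc := by
    rw [hBRdef, Finset.image_image]
    rw [show Prod.snd ∘ pmap fR gR = gR ∘ Prod.snd from rfl, ← Finset.image_image, hRtrows,
      hgRdef, show n - i + 1 = sRc.card from hsRccard.symm, image_unrank]
  have hcolsA : A.image Prod.fst = Finset.range (n + 2) := by
    rw [hA, Finset.image_insert, Finset.image_union, hcolsBL, hcolsBR]
    ext x
    simp only [Finset.mem_insert, Finset.mem_union, Finset.mem_range]
    constructor
    · rintro (rfl | hx | hx)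
      · omega
      · have := hC hx; rw [Finset.mem_Icc] at this; omega
      · rcases Finset.mem_insert.1 hx with rfl | hx
        · omega
        · have := (Finset.mem_sdiff.1 hx).1; rw [Finset.mem_Icc] at this; omega
    · intro hx
      rcases Nat.eq_zero_or_pos x with rfl | hx'
      · exact Or.inl rfl
      · by_cases hxC : x ∈ C
        · exact Or.inr (Or.inl hxC)
        · refine Or.inr (Or.inr (Finset.mem_insert.2 (Or.inr ?_)))
          rw [Finset.mem_sdiff, Finset.mem_Icc]
          exact ⟨⟨by omega, by omega⟩, hxC⟩
  have hrowsA : A.image Prod.snd = Finset.range (n + 2) := by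
    rw [hA, Finset.image_insert, Finset.image_union, hrowsBL, hrowsBR]
    ext y
    simp only [Finset.mem_insert, Finset.mem_union, Finset.mem_range]
    constructor
    · rintro (rfl | hy | hy)
      · omega
      · rcases Finset.mem_insert.1 hy with rfl | hy
        · omega
        · have := hR hy; rw [Finset.mem_Icc] at this; omega
      · have := (hsRcnot y hy).2.1; omega
    · intro hy
      rcases Nat.eq_zero_or_pos y with rfl | hy'
      · exact Or.inl rfl
      · by_cases hyR : y ∈ R
        · exact Or.inr (Or.inl (Finset.mem_insert.2 (Or.inr hyR)))
        · refine Or.inr (Or.inr ?_)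
          rw [hsRc, Finset.mem_sdiff, Finset.mem_Icc]
          exact ⟨⟨by omega, by omega⟩, hyR⟩
  have hrwBL : ∀ b ∈ BL, (rowWit A b ↔ (rowWit BL b ∨ b.2 = 0)) := by
    intro b hb
    constructor
    · rintro ⟨r, hr, hr2, hr1⟩
      rcases (hmemA r).1 hr with rfl | hrm | hrm
      · exact Or.inr hr2.symm
      · exact Or.inl ⟨r, hrm, hr2, hr1⟩
      · exact absurd ((hBRc r hrm).2) (fun h => hRdisj r.2 (hr2 ▸ (hBLc b hb).2) h)
    · rintro (⟨r, hr, hr2, hr1⟩ | h0)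
      · exact ⟨r, (hmemA r).2 (Or.inr (Or.inl hr)), hr2, hr1⟩
      · exact ⟨(0, 0), (hmemA _).2 (Or.inl rfl), h0.symm,
          Nat.pos_of_ne_zero (hBL1 b hb)⟩
  have hcwBL : ∀ b ∈ BL, (colWit A b ↔ colWit BL b) := by
    intro b hb
    constructor
    · rintro ⟨r, hr, hr1, hr2⟩
      rcases (hmemA r).1 hr with rfl | hrm | hrm
      · exact absurd hr1.symm (hBL1 b hb)
      · exact ⟨r, hrm, hr1, hr2⟩
      · exact absurd ((hBRc r hrm).1) (fun h => hCdisj r.1 (hr1 ▸ (hBLc b hb).1) h)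
    · rintro ⟨r, hr, hr1, hr2⟩
      exact ⟨r, (hmemA r).2 (Or.inr (Or.inl hr)), hr1, hr2⟩
  have hrwBR : ∀ b ∈ BR, (rowWit A b ↔ rowWit BR b) := by
    intro b hb
    constructor
    · rintro ⟨r, hr, hr2, hr1⟩
      rcases (hmemA r).1 hr with rfl | hrm | hrm
      · exact absurd hr2 (by simpa using (hBR2 b hb) ∘ Eq.symm)
      · exact absurd ((hBLc r hrm).2) (fun h => hRdisj r.2 h (hr2 ▸ (hBRc b hb).2))
      · exact ⟨r, hrm, hr2, hr1⟩
    · rintro ⟨r, hr, hr2, hr1⟩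
      exact ⟨r, (hmemA r).2 (Or.inr (Or.inr hr)), hr2, hr1⟩
  have hcwBR : ∀ b ∈ BR, (colWit A b ↔ (colWit BR b ∨ b.1 = 0)) := by
    intro b hb
    constructor
    · rintro ⟨r, hr, hr1, hr2⟩
      rcases (hmemA r).1 hr with rfl | hrm | hrm
      · exact Or.inr hr1.symm
      · exact absurd ((hBLc r hrm).1) (fun h => hCdisj r.1 h (hr1 ▸ (hBRc b hb).1))
      · exact Or.inl ⟨r, hrm, hr1, hr2⟩
    · rintro (⟨r, hr, hr1, hr2⟩ | h0)
      · exact ⟨r, (hmemA r).2 (Or.inr (Or.inr hr)), hr1, hr2⟩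
      · exact ⟨(0, 0), (hmemA _).2 (Or.inl rfl), h0.symm,
          Nat.pos_of_ne_zero (hBR2 b hb)⟩
  have hLwBL : ∀ b ∈ BL, (HasLeftChild A b ↔ HasLeftChild BL b) := by
    intro b hb
    constructor
    · rintro ⟨r, hr, hr2, hr1⟩
      rcases (hmemA r).1 hr with rfl | hrm | hrm
      · omega
      · exact ⟨r, hrm, hr2, hr1⟩
      · exact absurd ((hBRc r hrm).2) (fun h => hRdisj r.2 (hr2 ▸ (hBLc b hb).2) h)
    · rintro ⟨r, hr, hr2, hr1⟩
      exact ⟨r, (hmemA r).2 (Or.inr (Or.inl hr)), hr2, hr1⟩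
  have hRwBL : ∀ b ∈ BL, (HasRightChild A b ↔ HasRightChild BL b) := by
    intro b hb
    constructor
    · rintro ⟨r, hr, hr1, hr2⟩
      rcases (hmemA r).1 hr with rfl | hrm | hrm
      · exact absurd hr1 (by simpa using (hBL1 b hb) ∘ Eq.symm)
      · exact ⟨r, hrm, hr1, hr2⟩
      · exact absurd ((hBRc r hrm).1) (fun h => hCdisj r.1 (hr1 ▸ (hBLc b hb).1) h)
    · rintro ⟨r, hr, hr1, hr2⟩
      exact ⟨r, (hmemA r).2 (Or.inr (Or.inl hr)), hr1, hr2⟩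
  have hLwBR : ∀ b ∈ BR, (HasLeftChild A b ↔ HasLeftChild BR b) := by
    intro b hb
    constructor
    · rintro ⟨r, hr, hr2, hr1⟩
      rcases (hmemA r).1 hr with rfl | hrm | hrm
      · exact absurd hr2 (by simpa using (hBR2 b hb) ∘ Eq.symm)
      · exact absurd ((hBLc r hrm).2) (fun h => hRdisj r.2 h (hr2 ▸ (hBRc b hb).2))
      · exact ⟨r, hrm, hr2, hr1⟩
    · rintro ⟨r, hr, hr2, hr1⟩
      exact ⟨r, (hmemA r).2 (Or.inr (Or.inr hr)), hr2, hr1⟩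
  have hRwBR : ∀ b ∈ BR, (HasRightChild A b ↔ HasRightChild BR b) := by
    intro b hb
    constructor
    · rintro ⟨r, hr, hr1, hr2⟩
      rcases (hmemA r).1 hr with rfl | hrm | hrm
      · omega
      · exact absurd ((hBLc r hrm).1) (fun h => hCdisj r.1 h (hr1 ▸ (hBRc b hb).1))
      · exact ⟨r, hrm, hr1, hr2⟩
    · rintro ⟨r, hr, hr1, hr2⟩
      exact ⟨r, (hmemA r).2 (Or.inr (Or.inr hr)), hr1, hr2⟩
  have hrootL : HasLeftChild A (0, 0) := by
    have hb : pmap fL gL (0, 0) ∈ BL := by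
      rw [hBLdef]; exact Finset.mem_image_of_mem _ hL1.1
    refine ⟨pmap fL gL (0, 0), (hmemA _).2 (Or.inr (Or.inl hb)), ?_, ?_⟩
    · show gL 0 = 0
      exact unrank_zero h0sR
    · show 0 < (pmap fL gL (0, 0)).1
      have := hC (hBLc _ hb).1
      rw [Finset.mem_Icc] at this
      omega
  have hrootR : HasRightChild A (0, 0) := by
    have hb : pmap fR gR (0, 0) ∈ BR := by
      rw [hBRdef]; exact Finset.mem_image_of_mem _ hRt1.1
    refine ⟨pmap fR gR (0, 0), (hmemA _).2 (Or.inr (Or.inr hb)), ?_, ?_⟩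
    · show fR 0 = 0
      exact unrank_zero h0sCc
    · show 0 < (pmap fR gR (0, 0)).2
      have := hsRcnot _ (hBRc _ hb).2
      omega
  have hNAT : IsNAT A := by
    refine ⟨(hmemA _).2 (Or.inl rfl), ?_, ?_⟩
    · intro p hp hnr
      rcases (hmemA p).1 hp with rfl | hpm | hpm
      · exact absurd rfl hnr
      · have hpm' := hpm
        rw [hBLdef, Finset.mem_image] at hpm'
        obtain ⟨p', hp', rfl⟩ := hpm'
        have hcwL := colWit_pmap L fL gL hfL hgL hp'
        have hrwL := rowWit_pmap L fL gL hfL hgL hp'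
        have hcw := hcwBL _ hpm
        have hrw := hrwBL _ hpm
        by_cases h2 : p'.2 = 0
        · refine Or.inr ⟨(hrw).2 (Or.inr ?_), fun hcon => ?_⟩
          · show gL p'.2 = 0
            rw [h2]; exact unrank_zero h0sR
          · obtain ⟨q, _, _, hq2⟩ := (hcwL).1 ((hcw).1 hcon)
            omega
        · have hb2 : (pmap fL gL p').2 ≠ 0 := by
            intro h
            exact h2 ((hgL0 p'.2 (hLb2 p' hp')).1 h)
          have hne : p' ≠ (0, 0) := by
            intro h; rw [h] at h2; exact h2 rfl
          rcases hL1.2.1 p' hp' hne with ⟨hcL, hnrL⟩ | ⟨hrL, hncL⟩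
          · exact Or.inl ⟨(hcw).2 ((hcwL).2 hcL),
              fun hcon => hnrL ((hrwL).1 (((hrw).1 hcon).resolve_right hb2))⟩
          · exact Or.inr ⟨(hrw).2 (Or.inl ((hrwL).2 hrL)),
              fun hcon => hncL ((hcwL).1 ((hcw).1 hcon))⟩
      · have hpm' := hpm
        rw [hBRdef, Finset.mem_image] at hpm'
        obtain ⟨p', hp', rfl⟩ := hpm'
        have hcwR := colWit_pmap Rt fR gR hfR hgR hp'
        have hrwR := rowWit_pmap Rt fR gR hfR hgR hp'
        have hcw := hcwBR _ hpm
        have hrw := hrwBR _ hpm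
        by_cases h1 : p'.1 = 0
        · refine Or.inl ⟨(hcw).2 (Or.inr ?_), fun hcon => ?_⟩
          · show fR p'.1 = 0
            rw [h1]; exact unrank_zero h0sCc
          · obtain ⟨q, _, _, hq1⟩ := (hrwR).1 ((hrw).1 hcon)
            omega
        · have hb1 : (pmap fR gR p').1 ≠ 0 := by
            intro h
            exact h1 ((hfR0 p'.1 (hRb1 p' hp')).1 h)
          have hne : p' ≠ (0, 0) := by
            intro h; rw [h] at h1; exact h1 rfl
          rcases hRt1.2.1 p' hp' hne with ⟨hcL, hnrL⟩ | ⟨hrL, hncL⟩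
          · exact Or.inl ⟨(hcw).2 (Or.inl ((hcwR).2 hcL)),
              fun hcon => hnrL ((hrwR).1 ((hrw).1 hcon))⟩
          · exact Or.inr ⟨(hrw).2 ((hrwR).2 hrL),
              fun hcon => hncL ((hcwR).1 (((hcw).1 hcon).resolve_right hb1))⟩
    · intro p hp
      constructor
      · intro x' hx'
        have hb : p.1 ∈ A.image Prod.fst := Finset.mem_image_of_mem _ hp
        rw [hcolsA, Finset.mem_range] at hb
        have : x' ∈ A.image Prod.fst := by
          rw [hcolsA, Finset.mem_range]; omega
        obtain ⟨q, hq, he⟩ := Finset.mem_image.1 this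
        exact ⟨q, hq, he⟩
      · intro y' hy'
        have hb : p.2 ∈ A.image Prod.snd := Finset.mem_image_of_mem _ hp
        rw [hrowsA, Finset.mem_range] at hb
        have : y' ∈ A.image Prod.snd := by
          rw [hrowsA, Finset.mem_range]; omega
        obtain ⟨q, hq, he⟩ := Finset.mem_image.1 this
        exact ⟨q, hq, he⟩
  have hCom : IsCompleteNAT A := by
    intro q hq
    rcases (hmemA q).1 hq with rfl | hqm | hqm
    · exact iff_of_true hrootL hrootR
    · rw [hLwBL q hqm, hRwBL q hqm]
      rw [hBLdef, Finset.mem_image] at hqm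
      obtain ⟨p', hp', rfl⟩ := hqm
      rw [hasLeft_pmap L fL gL hfL hgL hp', hasRight_pmap L fL gL hfL hgL hp']
      exact hL2 p' hp'
    · rw [hLwBR q hqm, hRwBR q hqm]
      rw [hBRdef, Finset.mem_image] at hqm
      obtain ⟨p', hp', rfl⟩ := hqm
      rw [hasLeft_pmap Rt fR gR hfR hgR hp', hasRight_pmap Rt fR gR hfR hgR hp']
      exact hRt2 p' hp'
  have hNum : numInternal A = n + 1 := by
    have hInts : internals A = insert (0, 0) ((internals BL) ∪ (internals BR)) := by
      ext q
      simp only [internals, Finset.mem_insert, Finset.mem_union, Finset.mem_filter]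
      constructor
      · rintro ⟨hq, hLft, hRgt⟩
        rcases (hmemA q).1 hq with rfl | hqm | hqm
        · exact Or.inl rfl
        · exact Or.inr (Or.inl ⟨hqm, (hLwBL q hqm).1 hLft, (hRwBL q hqm).1 hRgt⟩)
        · exact Or.inr (Or.inr ⟨hqm, (hLwBR q hqm).1 hLft, (hRwBR q hqm).1 hRgt⟩)
      · rintro (rfl | ⟨hqm, hl, hr⟩ | ⟨hqm, hl, hr⟩)
        · exact ⟨(hmemA _).2 (Or.inl rfl), hrootL, hrootR⟩
        · exact ⟨(hmemA q).2 (Or.inr (Or.inl hqm)), (hLwBL q hqm).2 hl, (hRwBL q hqm).2 hr⟩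
        · exact ⟨(hmemA q).2 (Or.inr (Or.inr hqm)), (hLwBR q hqm).2 hl, (hRwBR q hqm).2 hr⟩
    have hd : Disjoint (internals BL) (internals BR) := by
      rw [Finset.disjoint_left]
      intro b hb1 hb2
      exact hCdisj b.1 (hBLc b (Finset.mem_filter.1 hb1).1).1 (hBRc b (Finset.mem_filter.1 hb2).1).1
    have hnr : (0, 0) ∉ internals BL ∪ internals BR := by
      intro h
      rcases Finset.mem_union.1 h with h | h
      · exact hBLroot _ (Finset.mem_filter.1 h).1 rfl
      · exact hBRroot _ (Finset.mem_filter.1 h).1 rfl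
    have hcBL : (internals BL).card = i := by
      have h' := numInternal_pmap L fL gL hfL hgL
      rw [hLi] at h'
      rw [← hBLdef, numInternal_eq] at h'
      exact h'
    have hcBR : (internals BR).card = n - i := by
      have h' := numInternal_pmap Rt fR gR hfR hgR
      rw [hRti] at h'
      rw [← hBRdef, numInternal_eq] at h'
      exact h'
    rw [numInternal_eq, hInts, Finset.card_insert_of_notMem hnr,
      Finset.card_union_of_disjoint hd, hcBL, hcBR]
    omega
  have hSideBL : ∀ m, ∀ b ∈ BL, b.1 + b.2 ≤ m → sideP A b = true := by
    intro m
    induction m using Nat.strong_induction_on with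
    | _ m ih =>
      intro b hb hm
      by_cases h2 : b.2 = 0
      · exact sideP_row0 h2
      · have h1' : b.1 ≠ 0 := hBL1 b hb
        by_cases hr : rowWit A b
        · rw [sideP_rowStep h2 h1' hr]
          obtain ⟨hrpA, hrp1, hrp2, _⟩ := rowParent_spec hr
          have hrpBL : rowParent A b ∈ BL := by
            rcases (hmemA _).1 hrpA with he | hm' | hm'
            · exfalso
              have := hrp2
              rw [he] at this
              exact h2 this.symm
            · exact hm'
            · exact absurd ((hBRc _ hm').2) (fun h => hRdisj _ (hrp2 ▸ (hBLc b hb).2) h)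
          exact ih (m - 1) (by omega) _ hrpBL (by omega)
        · have hbne : b ≠ (0, 0) := hBLroot b hb
          have hc : colWit A b := by
            rcases hNAT.2.1 b ((hmemA b).2 (Or.inr (Or.inl hb))) hbne with ⟨hc, _⟩ | ⟨hr', _⟩
            · exact hc
            · exact absurd hr' hr
          rw [sideP_colStep h2 h1' hr]
          obtain ⟨hcpA, hcp2, hcp1, _⟩ := colParent_spec hc
          have hcpBL : colParent A b ∈ BL := by
            rcases (hmemA _).1 hcpA with he | hm' | hm'
            · exfalso
              have := hcp1
              rw [he] at this
              exact h1' this.symm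
            · exact hm'
            · exact absurd ((hBRc _ hm').1) (fun h => hCdisj _ (hcp1 ▸ (hBLc b hb).1) h)
          exact ih (m - 1) (by omega) _ hcpBL (by omega)
  have hSideBR : ∀ m, ∀ b ∈ BR, b.1 + b.2 ≤ m → sideP A b = false := by
    intro m
    induction m using Nat.strong_induction_on with
    | _ m ih =>
      intro b hb hm
      have h2 : b.2 ≠ 0 := hBR2 b hb
      by_cases h1' : b.1 = 0
      · exact sideP_col0 h1' h2
      · by_cases hr : rowWit A b
        · rw [sideP_rowStep h2 h1' hr]
          obtain ⟨hrpA, hrp1, hrp2, _⟩ := rowParent_spec hr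
          have hrpBR : rowParent A b ∈ BR := by
            rcases (hmemA _).1 hrpA with he | hm' | hm'
            · exfalso
              have := hrp2
              rw [he] at this
              exact h2 this.symm
            · exact absurd ((hBLc _ hm').2) (fun h => hRdisj _ h (hrp2 ▸ (hBRc b hb).2))
            · exact hm'
          exact ih (m - 1) (by omega) _ hrpBR (by omega)
        · have hbne : b ≠ (0, 0) := hBRroot b hb
          have hc : colWit A b := by
            rcases hNAT.2.1 b ((hmemA b).2 (Or.inr (Or.inr hb))) hbne with ⟨hc, _⟩ | ⟨hr', _⟩
            · exact hc
            · exact absurd hr' hr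
          rw [sideP_colStep h2 h1' hr]
          obtain ⟨hcpA, hcp2, hcp1, _⟩ := colParent_spec hc
          have hcpBR : colParent A b ∈ BR := by
            rcases (hmemA _).1 hcpA with he | hm' | hm'
            · exfalso
              have := hcp1
              rw [he] at this
              exact h1' this.symm
            · exact absurd ((hBLc _ hm').1) (fun h => hCdisj _ h (hcp1 ▸ (hBRc b hb).1))
            · exact hm'
          exact ih (m - 1) (by omega) _ hcpBR (by omega)
  have hLP : leftPart A = BL := by
    ext q
    simp only [leftPart, Finset.mem_filter]
    constructor
    · rintro ⟨hq, hne, hs⟩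
      rcases (hmemA q).1 hq with rfl | h | h
      · exact absurd rfl hne
      · exact h
      · rw [hSideBR _ q h le_rfl] at hs
        exact absurd hs (by simp)
    · intro h
      exact ⟨(hmemA q).2 (Or.inr (Or.inl h)), hBLroot q h, hSideBL _ q h le_rfl⟩
  have hRP : rightPart A = BR := by
    ext q
    simp only [rightPart, Finset.mem_filter]
    constructor
    · rintro ⟨hq, hne, hs⟩
      rcases (hmemA q).1 hq with rfl | h | h
      · exact absurd rfl hne
      · rw [hSideBL _ q h le_rfl] at hs
        exact absurd hs (by simp)
      · exact h
    · intro h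
      exact ⟨(hmemA q).2 (Or.inr (Or.inr h)), hBRroot q h, hSideBR _ q h le_rfl⟩
  have hCLA : CL A = C := by rw [CL, hLP, hcolsBL]
  have hRLA : RL A = sR := by rw [RL, hLP, hrowsBL]
  have hCRA : CR A = sCc := by rw [CR, hRP, hcolsBR]
  have hRRA : RR A = sRc := by rw [RR, hRP, hrowsBR]
  have hLT : leftTree A = L := by
    rw [leftTree, hLP, hCLA, hRLA, hBLdef, Finset.image_image]
    have heq : ∀ p ∈ L, (pmap (rankIn C) (rankIn sR) ∘ pmap fL gL) p = p := by
      intro p hp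
      show (rankIn C (fL p.1), rankIn sR (gL p.2)) = p
      rw [show fL p.1 = unrank C p.1 from rfl, show gL p.2 = unrank sR p.2 from rfl,
        rankIn_unrank (hLb1 p hp), rankIn_unrank (hLb2 p hp)]
    rw [Finset.image_congr (fun p hp => heq p hp)]
    exact Finset.image_id
  have hRT : rightTree A = Rt := by
    rw [rightTree, hRP, hCRA, hRRA, hBRdef, Finset.image_image]
    have heq : ∀ p ∈ Rt, (pmap (rankIn sCc) (rankIn sRc) ∘ pmap fR gR) p = p := by
      intro p hp
      show (rankIn sCc (fR p.1), rankIn sRc (gR p.2)) = p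
      rw [show fR p.1 = unrank sCc p.1 from rfl, show gR p.2 = unrank sRc p.2 from rfl,
        rankIn_unrank (hRb1 p hp), rankIn_unrank (hRb2 p hp)]
    rw [Finset.image_congr (fun p hp => heq p hp)]
    exact Finset.image_id
  exact ⟨hNAT, hCom, hNum, hLT, hRT,
    by rw [hRLA, hsR, Finset.erase_insert h0R], hCLA⟩

theorem decomp_main (n : ℕ) (A : Finset (ℕ × ℕ)) (h1 : IsNAT A) (h2 : IsCompleteNAT A)
    (hni : numInternal A = n + 1) :
    numInternal (leftTree A) ≤ n ∧
    IsNAT (leftTree A) ∧ IsCompleteNAT (leftTree A) ∧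
    IsNAT (rightTree A) ∧ IsCompleteNAT (rightTree A) ∧
    numInternal (rightTree A) = n - numInternal (leftTree A) ∧
    (RL A).erase 0 ⊆ Finset.Icc 1 (n+1) ∧
    ((RL A).erase 0).card = numInternal (leftTree A) ∧
    CL A ⊆ Finset.Icc 1 (n+1) ∧ (CL A).card = numInternal (leftTree A) + 1 ∧
    combine n (leftTree A) (rightTree A) ((RL A).erase 0) (CL A) = A := by
  obtain ⟨hcard, hcols, hrows⟩ := nat_structure h1 h2
  rw [hni] at hcard hcols hrows
  obtain ⟨hrootL, hrootR⟩ := root_both h1 h2 (by omega)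
  have hl0 : (fmin (CL A), 0) ∈ leftPart A := left_root_mem h1 hrootL
  have hr0 : (0, fmin (RR A)) ∈ rightPart A := right_root_mem h1 hrootR
  have h0RL : (0 : ℕ) ∈ RL A := Finset.mem_image_of_mem Prod.snd hl0
  have h0CR : (0 : ℕ) ∈ CR A := Finset.mem_image_of_mem Prod.fst hr0
  have hlpA : ∀ p ∈ leftPart A, p ∈ A := fun p hp => (Finset.mem_filter.1 hp).1
  have hrpA : ∀ p ∈ rightPart A, p ∈ A := fun p hp => (Finset.mem_filter.1 hp).1
  have hlpCL : ∀ p ∈ leftPart A, p.1 ∈ CL A := fun p hp => Finset.mem_image_of_mem _ hp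
  have hlpRL : ∀ p ∈ leftPart A, p.2 ∈ RL A := fun p hp => Finset.mem_image_of_mem _ hp
  have hrpCR : ∀ p ∈ rightPart A, p.1 ∈ CR A := fun p hp => Finset.mem_image_of_mem _ hp
  have hrpRR : ∀ p ∈ rightPart A, p.2 ∈ RR A := fun p hp => Finset.mem_image_of_mem _ hp
  have hfLP : ∀ a ∈ leftPart A, ∀ b ∈ leftPart A,
      rankIn (CL A) a.1 < rankIn (CL A) b.1 ↔ a.1 < b.1 :=
    fun a ha b hb => rankIn_lt_iff (hlpCL a ha) (hlpCL b hb)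
  have hgLP : ∀ a ∈ leftPart A, ∀ b ∈ leftPart A,
      rankIn (RL A) a.2 < rankIn (RL A) b.2 ↔ a.2 < b.2 :=
    fun a ha b hb => rankIn_lt_iff (hlpRL a ha) (hlpRL b hb)
  have hfRP : ∀ a ∈ rightPart A, ∀ b ∈ rightPart A,
      rankIn (CR A) a.1 < rankIn (CR A) b.1 ↔ a.1 < b.1 :=
    fun a ha b hb => rankIn_lt_iff (hrpCR a ha) (hrpCR b hb)
  have hgRP : ∀ a ∈ rightPart A, ∀ b ∈ rightPart A,
      rankIn (RR A) a.2 < rankIn (RR A) b.2 ↔ a.2 < b.2 :=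
    fun a ha b hb => rankIn_lt_iff (hrpRR a ha) (hrpRR b hb)
  have hcwLP : ∀ p ∈ leftPart A, (colWit (leftPart A) p ↔ colWit A p) := by
    intro p hp
    constructor
    · rintro ⟨q, hq, hq1, hq2⟩
      exact ⟨q, hlpA q hq, hq1, hq2⟩
    · rintro ⟨q, hq, hq1, hq2⟩
      exact ⟨q, col_closed_left h1 hp hq hq1, hq1, hq2⟩
  have hrwLP : ∀ p ∈ leftPart A, p.2 ≠ 0 → (rowWit (leftPart A) p ↔ rowWit A p) := by
    intro p hp h2'
    constructor
    · rintro ⟨r, hr, hr2, hr1⟩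
      exact ⟨r, hlpA r hr, hr2, hr1⟩
    · rintro ⟨r, hr, hr2, hr1⟩
      have hnr : r ≠ (0, 0) := by
        intro hcon; rw [hcon] at hr2; exact h2' hr2.symm
      exact ⟨r, row_closed_left h1 hp hr hr2 hnr, hr2, hr1⟩
  have hLwLP : ∀ p ∈ leftPart A, (HasLeftChild (leftPart A) p ↔ HasLeftChild A p) := by
    intro p hp
    constructor
    · rintro ⟨r, hr, hr2, hr1⟩
      exact ⟨r, hlpA r hr, hr2, hr1⟩
    · rintro ⟨r, hr, hr2, hr1⟩
      have hp1 : p.1 ≠ 0 := leftPart_fst_ne hp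
      have hnr : r ≠ (0, 0) := by
        intro hcon; rw [hcon] at hr1; omega
      exact ⟨r, row_closed_left h1 hp hr hr2 hnr, hr2, hr1⟩
  have hRwLP : ∀ p ∈ leftPart A, (HasRightChild (leftPart A) p ↔ HasRightChild A p) := by
    intro p hp
    constructor
    · rintro ⟨r, hr, hr1, hr2⟩
      exact ⟨r, hlpA r hr, hr1, hr2⟩
    · rintro ⟨r, hr, hr1, hr2⟩
      exact ⟨r, col_closed_left h1 hp hr hr1, hr1, hr2⟩
  have hrwRP : ∀ p ∈ rightPart A, (rowWit (rightPart A) p ↔ rowWit A p) := by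
    intro p hp
    constructor
    · rintro ⟨r, hr, hr2, hr1⟩
      exact ⟨r, hrpA r hr, hr2, hr1⟩
    · rintro ⟨r, hr, hr2, hr1⟩
      exact ⟨r, row_closed_right h1 hp hr hr2, hr2, hr1⟩
  have hcwRP : ∀ p ∈ rightPart A, p.1 ≠ 0 → (colWit (rightPart A) p ↔ colWit A p) := by
    intro p hp h1'
    constructor
    · rintro ⟨q, hq, hq1, hq2⟩
      exact ⟨q, hrpA q hq, hq1, hq2⟩
    · rintro ⟨q, hq, hq1, hq2⟩
      have hnr : q ≠ (0, 0) := by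
        intro hcon; rw [hcon] at hq1; exact h1' hq1.symm
      exact ⟨q, col_closed_right h1 hp hq hq1 hnr, hq1, hq2⟩
  have hLwRP : ∀ p ∈ rightPart A, (HasLeftChild (rightPart A) p ↔ HasLeftChild A p) := by
    intro p hp
    constructor
    · rintro ⟨r, hr, hr2, hr1⟩
      exact ⟨r, hrpA r hr, hr2, hr1⟩
    · rintro ⟨r, hr, hr2, hr1⟩
      exact ⟨r, row_closed_right h1 hp hr hr2, hr2, hr1⟩
  have hRwRP : ∀ p ∈ rightPart A, (HasRightChild (rightPart A) p ↔ HasRightChild A p) := by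
    intro p hp
    constructor
    · rintro ⟨r, hr, hr1, hr2⟩
      exact ⟨r, hrpA r hr, hr1, hr2⟩
    · rintro ⟨r, hr, hr1, hr2⟩
      have hnr : r ≠ (0, 0) := by
        intro hcon; rw [hcon] at hr2; omega
      exact ⟨r, col_closed_right h1 hp hr hr1 hnr, hr1, hr2⟩
  have hCLne : (CL A).Nonempty := ⟨fmin (CL A), Finset.mem_image_of_mem _ hl0⟩
  have hRRne : (RR A).Nonempty := ⟨fmin (RR A), Finset.mem_image_of_mem _ hr0⟩
  have hp0map : pmap (rankIn (CL A)) (rankIn (RL A)) (fmin (CL A), 0) = (0, 0) := by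
    show (rankIn (CL A) (fmin (CL A)), rankIn (RL A) 0) = (0, 0)
    rw [rankIn_fmin hCLne, rankIn_zero' h0RL]
  have hp1map : pmap (rankIn (CR A)) (rankIn (RR A)) (0, fmin (RR A)) = (0, 0) := by
    show (rankIn (CR A) 0, rankIn (RR A) (fmin (RR A))) = (0, 0)
    rw [rankIn_fmin hRRne, rankIn_zero' h0CR]
  have hcolsLT : (leftTree A).image Prod.fst = Finset.range (CL A).card := by
    rw [leftTree, Finset.image_image,
      show Prod.fst ∘ pmap (rankIn (CL A)) (rankIn (RL A)) = rankIn (CL A) ∘ Prod.fst from rfl,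
      ← Finset.image_image]
    exact image_rankIn (CL A)
  have hrowsLT : (leftTree A).image Prod.snd = Finset.range (RL A).card := by
    rw [leftTree, Finset.image_image,
      show Prod.snd ∘ pmap (rankIn (CL A)) (rankIn (RL A)) = rankIn (RL A) ∘ Prod.snd from rfl,
      ← Finset.image_image]
    exact image_rankIn (RL A)
  have hcolsRT : (rightTree A).image Prod.fst = Finset.range (CR A).card := by
    rw [rightTree, Finset.image_image,
      show Prod.fst ∘ pmap (rankIn (CR A)) (rankIn (RR A)) = rankIn (CR A) ∘ Prod.fst from rfl,
      ← Finset.image_image]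
    exact image_rankIn (CR A)
  have hrowsRT : (rightTree A).image Prod.snd = Finset.range (RR A).card := by
    rw [rightTree, Finset.image_image,
      show Prod.snd ∘ pmap (rankIn (CR A)) (rankIn (RR A)) = rankIn (RR A) ∘ Prod.snd from rfl,
      ← Finset.image_image]
    exact image_rankIn (RR A)
  have hNATLT : IsNAT (leftTree A) := by
    refine ⟨?_, ?_, ?_⟩
    · rw [leftTree, ← hp0map]
      exact Finset.mem_image_of_mem _ hl0
    · intro b hb hbne
      rw [leftTree, Finset.mem_image] at hb
      obtain ⟨p, hp, rfl⟩ := hb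
      have hpne : p ≠ (fmin (CL A), 0) := by
        intro hcon; rw [hcon, hp0map] at hbne; exact hbne rfl
      have hcw := colWit_pmap (leftPart A) _ _ hfLP hgLP hp
      have hrw := rowWit_pmap (leftPart A) _ _ hfLP hgLP hp
      rw [← leftTree] at hcw hrw
      by_cases h2' : p.2 = 0
      · refine Or.inr ⟨?_, ?_⟩
        · refine (hrw).2 ⟨(fmin (CL A), 0), hl0, by rw [h2'], ?_⟩
          have hle := fmin_le (hlpCL p hp)
          have hne2 : fmin (CL A) ≠ p.1 := by
            intro hcon
            exact hpne (Prod.ext hcon.symm h2')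
          omega
        · intro hcon
          obtain ⟨q, _, _, hq2⟩ := (hcwLP p hp).1 ((hcw).1 hcon)
          omega
      · have hpne0 : p ≠ (0, 0) := by
          intro hcon; rw [hcon] at h2'; exact h2' rfl
        rcases h1.2.1 p (hlpA p hp) hpne0 with ⟨hcA, hnrA⟩ | ⟨hrA, hncA⟩
        · exact Or.inl ⟨(hcw).2 ((hcwLP p hp).2 hcA),
            fun hcon => hnrA ((hrwLP p hp h2').1 ((hrw).1 hcon))⟩
        · exact Or.inr ⟨(hrw).2 ((hrwLP p hp h2').2 hrA),
            fun hcon => hncA ((hcwLP p hp).1 ((hcw).1 hcon))⟩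
    · intro b hb
      constructor
      · intro x' hx'
        have hbc : b.1 ∈ (leftTree A).image Prod.fst := Finset.mem_image_of_mem _ hb
        rw [hcolsLT, Finset.mem_range] at hbc
        have : x' ∈ (leftTree A).image Prod.fst := by
          rw [hcolsLT, Finset.mem_range]; omega
        obtain ⟨q, hq, he⟩ := Finset.mem_image.1 this
        exact ⟨q, hq, he⟩
      · intro y' hy'
        have hbc : b.2 ∈ (leftTree A).image Prod.snd := Finset.mem_image_of_mem _ hb
        rw [hrowsLT, Finset.mem_range] at hbc
        have : y' ∈ (leftTree A).image Prod.snd := by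
          rw [hrowsLT, Finset.mem_range]; omega
        obtain ⟨q, hq, he⟩ := Finset.mem_image.1 this
        exact ⟨q, hq, he⟩
  have hComLT : IsCompleteNAT (leftTree A) := by
    intro b hb
    rw [leftTree, Finset.mem_image] at hb
    obtain ⟨p, hp, rfl⟩ := hb
    have hl := hasLeft_pmap (leftPart A) _ _ hfLP hgLP hp
    have hr := hasRight_pmap (leftPart A) _ _ hfLP hgLP hp
    rw [← leftTree] at hl hr
    rw [hl, hr, hLwLP p hp, hRwLP p hp]
    exact h2 p (hlpA p hp)
  have hNATRT : IsNAT (rightTree A) := by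
    refine ⟨?_, ?_, ?_⟩
    · rw [rightTree, ← hp1map]
      exact Finset.mem_image_of_mem _ hr0
    · intro b hb hbne
      rw [rightTree, Finset.mem_image] at hb
      obtain ⟨p, hp, rfl⟩ := hb
      have hpne : p ≠ (0, fmin (RR A)) := by
        intro hcon; rw [hcon, hp1map] at hbne; exact hbne rfl
      have hcw := colWit_pmap (rightPart A) _ _ hfRP hgRP hp
      have hrw := rowWit_pmap (rightPart A) _ _ hfRP hgRP hp
      rw [← rightTree] at hcw hrw
      by_cases h1' : p.1 = 0
      · refine Or.inl ⟨?_, ?_⟩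
        · refine (hcw).2 ⟨(0, fmin (RR A)), hr0, by rw [h1'], ?_⟩
          have hle := fmin_le (hrpRR p hp)
          have hne2 : fmin (RR A) ≠ p.2 := by
            intro hcon
            exact hpne (Prod.ext h1' hcon.symm)
          omega
        · intro hcon
          obtain ⟨q, _, _, hq1⟩ := (hrwRP p hp).1 ((hrw).1 hcon)
          omega
      · have hpne0 : p ≠ (0, 0) := by
          intro hcon; rw [hcon] at h1'; exact h1' rfl
        rcases h1.2.1 p (hrpA p hp) hpne0 with ⟨hcA, hnrA⟩ | ⟨hrA, hncA⟩
        · exact Or.inl ⟨(hcw).2 ((hcwRP p hp h1').2 hcA),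
            fun hcon => hnrA ((hrwRP p hp).1 ((hrw).1 hcon))⟩
        · exact Or.inr ⟨(hrw).2 ((hrwRP p hp).2 hrA),
            fun hcon => hncA ((hcwRP p hp h1').1 ((hcw).1 hcon))⟩
    · intro b hb
      constructor
      · intro x' hx'
        have hbc : b.1 ∈ (rightTree A).image Prod.fst := Finset.mem_image_of_mem _ hb
        rw [hcolsRT, Finset.mem_range] at hbc
        have : x' ∈ (rightTree A).image Prod.fst := by
          rw [hcolsRT, Finset.mem_range]; omega
        obtain ⟨q, hq, he⟩ := Finset.mem_image.1 this
        exact ⟨q, hq, he⟩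
      · intro y' hy'
        have hbc : b.2 ∈ (rightTree A).image Prod.snd := Finset.mem_image_of_mem _ hb
        rw [hrowsRT, Finset.mem_range] at hbc
        have : y' ∈ (rightTree A).image Prod.snd := by
          rw [hrowsRT, Finset.mem_range]; omega
        obtain ⟨q, hq, he⟩ := Finset.mem_image.1 this
        exact ⟨q, hq, he⟩
  have hComRT : IsCompleteNAT (rightTree A) := by
    intro b hb
    rw [rightTree, Finset.mem_image] at hb
    obtain ⟨p, hp, rfl⟩ := hb
    have hl := hasLeft_pmap (rightPart A) _ _ hfRP hgRP hp
    have hr := hasRight_pmap (rightPart A) _ _ hfRP hgRP hp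
    rw [← rightTree] at hl hr
    rw [hl, hr, hLwRP p hp, hRwRP p hp]
    exact h2 p (hrpA p hp)
  have hpartdisj : ∀ q, q ∈ leftPart A → q ∈ rightPart A → False := by
    intro q hq1 hq2
    have := (Finset.mem_filter.1 hq1).2.2
    have := (Finset.mem_filter.1 hq2).2.2
    simp_all
  have hIntsA : internals A = insert (0, 0) (internals (leftPart A) ∪ internals (rightPart A)) := by
    ext q
    simp only [internals, Finset.mem_insert, Finset.mem_union, Finset.mem_filter]
    constructor
    · rintro ⟨hq, hLft, hRgt⟩
      have hq' := hq
      rw [parts_partition h1, Finset.mem_insert, Finset.mem_union] at hq'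
      rcases hq' with rfl | hqm | hqm
      · exact Or.inl rfl
      · exact Or.inr (Or.inl ⟨hqm, (hLwLP q hqm).2 hLft, (hRwLP q hqm).2 hRgt⟩)
      · exact Or.inr (Or.inr ⟨hqm, (hLwRP q hqm).2 hLft, (hRwRP q hqm).2 hRgt⟩)
    · rintro (rfl | ⟨hqm, hl, hr⟩ | ⟨hqm, hl, hr⟩)
      · exact ⟨h1.1, hrootL, hrootR⟩
      · exact ⟨hlpA q hqm, (hLwLP q hqm).1 hl, (hRwLP q hqm).1 hr⟩
      · exact ⟨hrpA q hqm, (hLwRP q hqm).1 hl, (hRwRP q hqm).1 hr⟩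
  have hdisjI : Disjoint (internals (leftPart A)) (internals (rightPart A)) := by
    rw [Finset.disjoint_left]
    intro q hq1 hq2
    exact hpartdisj q (Finset.mem_filter.1 hq1).1 (Finset.mem_filter.1 hq2).1
  have hnrI : (0, 0) ∉ internals (leftPart A) ∪ internals (rightPart A) := by
    intro h
    rcases Finset.mem_union.1 h with h | h
    · exact (Finset.mem_filter.1 (Finset.mem_filter.1 h).1).2.1 rfl
    · exact (Finset.mem_filter.1 (Finset.mem_filter.1 h).1).2.1 rfl
  have hiLT : numInternal (leftTree A) = (internals (leftPart A)).card := by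
    have h' := numInternal_pmap (leftPart A) _ _ hfLP hgLP
    rw [← leftTree] at h'
    rw [h', numInternal_eq]
  have hiRT : numInternal (rightTree A) = (internals (rightPart A)).card := by
    have h' := numInternal_pmap (rightPart A) _ _ hfRP hgRP
    rw [← rightTree] at h'
    rw [h', numInternal_eq]
  have hsum : 1 + (internals (leftPart A)).card + (internals (rightPart A)).card = n + 1 := by
    have := hni
    rw [numInternal_eq, hIntsA, Finset.card_insert_of_notMem hnrI,
      Finset.card_union_of_disjoint hdisjI] at this
    omega
  obtain ⟨hcLT, hcolsLT', hrowsLT'⟩ := nat_structure hNATLT hComLT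
  obtain ⟨hcRT, hcolsRT', hrowsRT'⟩ := nat_structure hNATRT hComRT
  have range_inj : ∀ a b : ℕ, Finset.range a = Finset.range b → a = b := by
    intro a b h
    have := congrArg Finset.card h
    simpa using this
  have hcardCL : (CL A).card = numInternal (leftTree A) + 1 :=
    range_inj _ _ (hcolsLT.symm.trans hcolsLT')
  have hcardRL : (RL A).card = numInternal (leftTree A) + 1 :=
    range_inj _ _ (hrowsLT.symm.trans hrowsLT')
  have hcardRLe : ((RL A).erase 0).card = numInternal (leftTree A) := by
    rw [Finset.card_erase_of_mem h0RL, hcardRL]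
    omega
  have hcolsAeq : A.image Prod.fst = insert 0 (CL A ∪ CR A) := by
    conv_lhs => rw [parts_partition h1]
    rw [Finset.image_insert, Finset.image_union]
    rfl
  have hrowsAeq : A.image Prod.snd = insert 0 (RL A ∪ RR A) := by
    conv_lhs => rw [parts_partition h1]
    rw [Finset.image_insert, Finset.image_union]
    rfl
  have hcoldisj : ∀ x, x ∈ CL A → x ∈ CR A → False := by
    intro x hx1 hx2
    obtain ⟨p, hp, rfl⟩ := Finset.mem_image.1 hx1
    obtain ⟨q, hq, hqe⟩ := Finset.mem_image.1 hx2
    exact hpartdisj q (col_closed_left h1 hp (hrpA q hq) hqe) hq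
  have hrowdisj : ∀ y, y ∈ RL A → y ∈ RR A → False := by
    intro y hy1 hy2
    obtain ⟨p, hp, rfl⟩ := Finset.mem_image.1 hy1
    obtain ⟨q, hq, hqe⟩ := Finset.mem_image.1 hy2
    have hq2 : q.2 ≠ 0 := rightPart_snd_ne hq
    have hnr : q ≠ (0, 0) := by
      intro hcon; rw [hcon] at hq2; exact hq2 rfl
    exact hpartdisj q (row_closed_left h1 hp (hrpA q hq) hqe hnr) hq
  have hCLsub : CL A ⊆ Finset.Icc 1 (n+1) := by
    intro x hx
    have hx0 : x ≠ 0 := by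
      obtain ⟨p, hp, rfl⟩ := Finset.mem_image.1 hx
      exact leftPart_fst_ne hp
    have : x ∈ A.image Prod.fst := by
      obtain ⟨p, hp, rfl⟩ := Finset.mem_image.1 hx
      exact Finset.mem_image_of_mem _ (hlpA p hp)
    rw [hcols, Finset.mem_range] at this
    rw [Finset.mem_Icc]
    omega
  have hRLsub : (RL A).erase 0 ⊆ Finset.Icc 1 (n+1) := by
    intro y hy
    obtain ⟨hy0, hy⟩ := Finset.mem_erase.1 hy
    have : y ∈ A.image Prod.snd := by
      obtain ⟨p, hp, rfl⟩ := Finset.mem_image.1 hy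
      exact Finset.mem_image_of_mem _ (hlpA p hp)
    rw [hrows, Finset.mem_range] at this
    rw [Finset.mem_Icc]
    omega
  have hCReq : CR A = insert 0 (Finset.Icc 1 (n+1) \ CL A) := by
    ext x
    rw [Finset.mem_insert, Finset.mem_sdiff, Finset.mem_Icc]
    constructor
    · intro hx
      by_cases hx0 : x = 0
      · exact Or.inl hx0
      · refine Or.inr ⟨⟨by omega, ?_⟩, fun h => hcoldisj x h hx⟩
        have : x ∈ A.image Prod.fst := by
          obtain ⟨p, hp, rfl⟩ := Finset.mem_image.1 hx
          exact Finset.mem_image_of_mem _ (hrpA p hp)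
        rw [hcols, Finset.mem_range] at this
        omega
    · rintro (rfl | ⟨⟨hx1, hx2⟩, hxC⟩)
      · exact h0CR
      · have : x ∈ A.image Prod.fst := by
          rw [hcols, Finset.mem_range]; omega
        rw [hcolsAeq, Finset.mem_insert, Finset.mem_union] at this
        rcases this with rfl | h | h
        · omega
        · exact absurd h hxC
        · exact h
  have hRReq : RR A = Finset.Icc 1 (n+1) \ (RL A).erase 0 := by
    ext y
    rw [Finset.mem_sdiff, Finset.mem_Icc, Finset.mem_erase]
    constructor
    · intro hy
      have hy0 : y ≠ 0 := by
        obtain ⟨p, hp, rfl⟩ := Finset.mem_image.1 hy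
        exact rightPart_snd_ne hp
      have : y ∈ A.image Prod.snd := by
        obtain ⟨p, hp, rfl⟩ := Finset.mem_image.1 hy
        exact Finset.mem_image_of_mem _ (hrpA p hp)
      rw [hrows, Finset.mem_range] at this
      refine ⟨⟨by omega, by omega⟩, ?_⟩
      rintro ⟨_, hyRL⟩
      exact hrowdisj y hyRL hy
    · rintro ⟨⟨hy1, hy2⟩, hyRL⟩
      have : y ∈ A.image Prod.snd := by
        rw [hrows, Finset.mem_range]; omega
      rw [hrowsAeq, Finset.mem_insert, Finset.mem_union] at this
      rcases this with rfl | h | h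
      · omega
      · exact absurd h (by intro hcon; exact hyRL ⟨by omega, hcon⟩)
      · exact h
  have hcombine : combine n (leftTree A) (rightTree A) ((RL A).erase 0) (CL A) = A := by
    show insert (0, 0)
      (((leftTree A).image (pmap (unrank (CL A)) (unrank (insert 0 ((RL A).erase 0))))) ∪
       ((rightTree A).image (pmap (unrank (insert 0 (Finset.Icc 1 (n+1) \ CL A)))
         (unrank (Finset.Icc 1 (n+1) \ (RL A).erase 0))))) = A
    rw [Finset.insert_erase h0RL, ← hCReq, ← hRReq]
    have hLz : (leftTree A).image (pmap (unrank (CL A)) (unrank (RL A))) = leftPart A := by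
      rw [leftTree, Finset.image_image]
      have heq : ∀ p ∈ leftPart A,
          (pmap (unrank (CL A)) (unrank (RL A)) ∘
            pmap (rankIn (CL A)) (rankIn (RL A))) p = p := by
        intro p hp
        show (unrank (CL A) (rankIn (CL A) p.1), unrank (RL A) (rankIn (RL A) p.2)) = p
        rw [unrank_rankIn (hlpCL p hp), unrank_rankIn (hlpRL p hp)]
      rw [Finset.image_congr (fun p hp => heq p hp)]
      exact Finset.image_id
    have hRz : (rightTree A).image (pmap (unrank (CR A)) (unrank (RR A))) = rightPart A := by
      rw [rightTree, Finset.image_image]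
      have heq : ∀ p ∈ rightPart A,
          (pmap (unrank (CR A)) (unrank (RR A)) ∘
            pmap (rankIn (CR A)) (rankIn (RR A))) p = p := by
        intro p hp
        show (unrank (CR A) (rankIn (CR A) p.1), unrank (RR A) (rankIn (RR A) p.2)) = p
        rw [unrank_rankIn (hrpCR p hp), unrank_rankIn (hrpRR p hp)]
      rw [Finset.image_congr (fun p hp => heq p hp)]
      exact Finset.image_id
    rw [hLz, hRz]
    exact (parts_partition h1).symm
  refine ⟨by omega, hNATLT, hComLT, hNATRT, hComRT, by omega, hRLsub, hcardRLe, hCLsub,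
    hcardCL, hcombine⟩

noncomputable def cand (k : ℕ) : Finset (Finset (ℕ × ℕ)) :=
  ((Finset.range (k+1) ×ˢ Finset.range (k+1)).powerset).filter
    (fun A => IsNAT A ∧ IsCompleteNAT A ∧ numInternal A = k)

lemma mem_cand {k : ℕ} {A : Finset (ℕ × ℕ)} :
    A ∈ cand k ↔ IsNAT A ∧ IsCompleteNAT A ∧ numInternal A = k := by
  rw [cand, Finset.mem_filter, Finset.mem_powerset]
  constructor
  · exact fun h => h.2
  · intro h
    refine ⟨?_, h⟩
    obtain ⟨h1, h2, h3⟩ := h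
    obtain ⟨_, hcols, hrows⟩ := nat_structure h1 h2
    rw [h3] at hcols hrows
    intro p hp
    rw [Finset.mem_product]
    constructor
    · rw [← hcols]
      exact Finset.mem_image_of_mem _ hp
    · rw [← hrows]
      exact Finset.mem_image_of_mem _ hp

lemma b_eq_cand (k : ℕ) : b k = (cand k).card := by
  rw [b, show {A : Finset (ℕ × ℕ) | IsNAT A ∧ IsCompleteNAT A ∧ numInternal A = k}
    = ↑(cand k) by
      ext A
      simp only [Set.mem_setOf_eq]
      rw [Finset.mem_coe, mem_cand],
    Set.ncard_coe_finset]

theorem b_recurrence' (n : ℕ) :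
    b (n + 1) =
      ∑ i ∈ Finset.range (n + 1),
        Nat.choose (n + 1) i * Nat.choose (n + 1) (n - i) * b i * b (n - i) := by
  classical
  have hIcc : (Finset.Icc 1 (n+1)).card = n + 1 := by rw [Nat.card_Icc]; omega
  have hcard : (cand (n+1)).card =
      ((Finset.range (n+1)).sigma (fun i => (cand i) ×ˢ ((cand (n - i)) ×ˢ
        (((Finset.Icc 1 (n+1)).powersetCard i) ×ˢ
         ((Finset.Icc 1 (n+1)).powersetCard (i+1)))))).card := by
    apply Finset.card_bij'
      (fun A _ => (⟨numInternal (leftTree A),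
        (leftTree A, rightTree A, (RL A).erase 0, CL A)⟩ :
        Σ _ : ℕ, Finset (ℕ × ℕ) × Finset (ℕ × ℕ) × Finset ℕ × Finset ℕ))
      (fun x _ => combine n x.2.1 x.2.2.1 x.2.2.2.1 x.2.2.2.2)
    · intro A hA
      rw [mem_cand] at hA
      obtain ⟨h1, h2, h3⟩ := hA
      obtain ⟨hle, hNL, hCL2, hNR, hCR2, hNumR, hRsub, hRcard, hCsub, hCcard, hcomb⟩ :=
        decomp_main n A h1 h2 h3
      rw [Finset.mem_sigma]
      refine ⟨by
        show numInternal (leftTree A) ∈ Finset.range (n+1)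
        rw [Finset.mem_range]; omega, ?_⟩
      rw [Finset.mem_product]
      refine ⟨mem_cand.2 ⟨hNL, hCL2, rfl⟩, ?_⟩
      rw [Finset.mem_product]
      refine ⟨mem_cand.2 ⟨hNR, hCR2, hNumR⟩, ?_⟩
      rw [Finset.mem_product]
      exact ⟨Finset.mem_powersetCard.2 ⟨hRsub, hRcard⟩,
        Finset.mem_powersetCard.2 ⟨hCsub, hCcard⟩⟩
    · rintro ⟨i, L, Rt, R, Cc⟩ hx
      rw [Finset.mem_sigma] at hx
      obtain ⟨hi, hx⟩ := hx
      rw [Finset.mem_range] at hi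
      have hi' : i ≤ n := Nat.lt_succ_iff.mp hi
      rw [Finset.mem_product] at hx
      obtain ⟨hL, hx⟩ := hx
      rw [Finset.mem_product] at hx
      obtain ⟨hRt, hx⟩ := hx
      rw [Finset.mem_product] at hx
      obtain ⟨hRm, hCm⟩ := hx
      rw [mem_cand] at hL hRt
      rw [Finset.mem_powersetCard] at hRm hCm
      obtain ⟨hcm, _, _, _, _, _, _⟩ := combine_main n i hi' L Rt R Cc
        hL.1 hL.2.1 hL.2.2 hRt.1 hRt.2.1 hRt.2.2 hRm.1 hRm.2 hCm.1 hCm.2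
      obtain ⟨hcm2, hcm3, _, _, _, _⟩ := (combine_main n i hi' L Rt R Cc
        hL.1 hL.2.1 hL.2.2 hRt.1 hRt.2.1 hRt.2.2 hRm.1 hRm.2 hCm.1 hCm.2).2
      exact mem_cand.2 ⟨hcm, hcm2, hcm3⟩
    · intro A hA
      rw [mem_cand] at hA
      obtain ⟨h1, h2, h3⟩ := hA
      exact (decomp_main n A h1 h2 h3).2.2.2.2.2.2.2.2.2.2
    · rintro ⟨i, L, Rt, R, Cc⟩ hx
      rw [Finset.mem_sigma] at hx
      obtain ⟨hi, hx⟩ := hx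
      rw [Finset.mem_range] at hi
      have hi' : i ≤ n := Nat.lt_succ_iff.mp hi
      rw [Finset.mem_product] at hx
      obtain ⟨hL, hx⟩ := hx
      rw [Finset.mem_product] at hx
      obtain ⟨hRt, hx⟩ := hx
      rw [Finset.mem_product] at hx
      obtain ⟨hRm, hCm⟩ := hx
      rw [mem_cand] at hL hRt
      rw [Finset.mem_powersetCard] at hRm hCm
      obtain ⟨_, _, _, hLT, hRT, hRL, hCL2⟩ := combine_main n i hi' L Rt R Cc
        hL.1 hL.2.1 hL.2.2 hRt.1 hRt.2.1 hRt.2.2 hRm.1 hRm.2 hCm.1 hCm.2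
      show (⟨numInternal (leftTree (combine n L Rt R Cc)),
        (leftTree (combine n L Rt R Cc), rightTree (combine n L Rt R Cc),
         (RL (combine n L Rt R Cc)).erase 0, CL (combine n L Rt R Cc))⟩ :
        Σ _ : ℕ, Finset (ℕ × ℕ) × Finset (ℕ × ℕ) × Finset ℕ × Finset ℕ) = ⟨i, (L, Rt, R, Cc)⟩
      rw [hLT, hRT, hRL, hCL2, hL.2.2]
  rw [b_eq_cand, hcard, Finset.card_sigma]
  apply Finset.sum_congr rfl
  intro i hi
  rw [Finset.mem_range] at hi
  rw [Finset.card_product, Finset.card_product, Finset.card_product,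
    Finset.card_powersetCard, Finset.card_powersetCard, hIcc,
    b_eq_cand i, b_eq_cand (n - i)]
  have hsym : Nat.choose (n+1) (n-i) = Nat.choose (n+1) (i+1) := by
    rw [← Nat.choose_symm (show n - i ≤ n + 1 by omega)]
    congr 1
    omega
  rw [hsym]
  ring

end NATaux

theorem b_recurrence (n : ℕ) :
    b (n + 1) =
      ∑ i ∈ Finset.range (n + 1),
        Nat.choose (n + 1) i * Nat.choose (n + 1) (n - i) * b i * b (n - i) :=
  b_recurrence' n
end

section
/- In the ring ℚ⟦X⟧ of formal power series over ℚ, let Z be the series whose coefficient of X^{2(k+1)} is b_k/((k+1)!·2^{k+1})^2 for each k ≥ 0 and whose other coefficients are 0, and let J₀ be the series whose coefficient of X^{2k} is (−1)^k/((k!)^2·4^k) for each k ≥ 0 and whose other coefficients are 0 (the Bessel function of order 0). Then (dZ/dX)·J₀ = −dJ₀/dX, where d/dX is the formal derivative. (Since Z has constant term 0 and J₀ has constant term 1, this identity expresses that Z = −log J₀.) -/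
open Finset

namespace Finset

theorem eq_range_card_of_forall_lt_mem {s : Finset ℕ} (h : ∀ y ∈ s, ∀ x < y, x ∈ s) :
    s = range #s := by
  refine eq_of_subset_of_card_le (fun y hy => mem_range.mpr ?_) (card_range _).le
  calc y < #(range (y + 1)) := by simp
    _ ≤ #s := card_le_card fun x hx => by
      rcases (Nat.lt_succ_iff.mp (mem_range.mp hx)).lt_or_eq with hxy | rfl
      exacts [h y hy x hxy, hy]

variable (s : Finset ℕ)

theorem toFinset_finite_ofPred_mem (hf : (Set.ofPred (· ∈ s)).Finite) : hf.toFinset = s := by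
  ext; simp [Set.ofPred]

theorem strictMonoOn_count : StrictMonoOn (Nat.count (· ∈ s)) s :=
  fun _ hx _ _ hxy => Nat.count_strict_mono hx hxy

theorem strictMonoOn_nth : StrictMonoOn (Nat.nth (· ∈ s)) (range #s) := by
  have hf : (Set.ofPred (· ∈ s)).Finite := s.finite_toSet
  simpa [toFinset_finite_ofPred_mem s hf] using Nat.nth_strictMonoOn hf

theorem count_lt_card {x : ℕ} (hx : x ∈ s) : Nat.count (· ∈ s) x < #s := by
  have hf : (Set.ofPred (· ∈ s)).Finite := s.finite_toSet
  simpa [toFinset_finite_ofPred_mem s hf] using Nat.count_lt_card hf hx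

theorem count_nth {i : ℕ} (hi : i < #s) : Nat.count (· ∈ s) (Nat.nth (· ∈ s) i) = i :=
  Nat.count_nth fun hf => by rwa [toFinset_finite_ofPred_mem s hf]

theorem image_count : s.image (Nat.count (· ∈ s)) = range #s := by
  refine eq_of_subset_of_card_le (fun i hi => ?_) ?_
  · obtain ⟨x, hx, rfl⟩ := mem_image.mp hi
    exact mem_range.mpr (count_lt_card s hx)
  · rw [card_range, card_image_of_injOn (strictMonoOn_count s).injOn]

theorem image_nth : (range #s).image (Nat.nth (· ∈ s)) = s := by
  refine (eq_of_subset_of_card_le (fun x hx => ?_) ?_).symm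
  · exact mem_image.mpr ⟨_, mem_range.mpr (count_lt_card s hx), Nat.nth_count hx⟩
  · rw [card_image_of_injOn (strictMonoOn_nth s).injOn, card_range]

end Finset

def IsLeftChild (A : Finset (ℕ × ℕ)) (p : ℕ × ℕ) : Prop :=
  ∃ r ∈ A, r.2 = p.2 ∧ r.1 < p.1

def IsRightChild (A : Finset (ℕ × ℕ)) (p : ℕ × ℕ) : Prop :=
  ∃ r ∈ A, r.1 = p.1 ∧ r.2 < p.2

theorem not_isLeftChild_of_fst_eq_zero {A : Finset (ℕ × ℕ)} {p : ℕ × ℕ} (hp : p.1 = 0) :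
    ¬IsLeftChild A p :=
  fun ⟨_, _, _, h⟩ => Nat.not_lt_zero _ (hp ▸ h)

theorem not_isRightChild_of_snd_eq_zero {A : Finset (ℕ × ℕ)} {p : ℕ × ℕ} (hp : p.2 = 0) :
    ¬IsRightChild A p :=
  fun ⟨_, _, _, h⟩ => Nat.not_lt_zero _ (hp ▸ h)

/-- The conditions (1) and (2) of a non-ambiguous tree, with the root moved to a corner `c`. -/
structure IsNATRootedAt (D : Finset (ℕ × ℕ)) (c : ℕ × ℕ) : Prop where
  mem : c ∈ D
  le : ∀ p ∈ D, c.1 ≤ p.1 ∧ c.2 ≤ p.2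
  xor : ∀ p ∈ D, p ≠ c → Xor (IsRightChild D p) (IsLeftChild D p)

theorem IsNAT.isNATRootedAt {A : Finset (ℕ × ℕ)} (hA : IsNAT A) : IsNATRootedAt A (0, 0) :=
  ⟨hA.1, fun _ _ => ⟨Nat.zero_le _, Nat.zero_le _⟩, hA.2.1⟩

theorem IsNAT.image_fst_eq_range {A : Finset (ℕ × ℕ)} (hA : IsNAT A) :
    A.image Prod.fst = range #(A.image Prod.fst) :=
  eq_range_card_of_forall_lt_mem fun _ hy x hx => by
    obtain ⟨p, hp, rfl⟩ := mem_image.mp hy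
    obtain ⟨q, hq, rfl⟩ := (hA.2.2 p hp).1 x hx
    exact mem_image_of_mem _ hq

theorem IsNAT.image_snd_eq_range {A : Finset (ℕ × ℕ)} (hA : IsNAT A) :
    A.image Prod.snd = range #(A.image Prod.snd) :=
  eq_range_card_of_forall_lt_mem fun _ hy x hx => by
    obtain ⟨p, hp, rfl⟩ := mem_image.mp hy
    obtain ⟨q, hq, rfl⟩ := (hA.2.2 p hp).2 x hx
    exact mem_image_of_mem _ hq

theorem isNAT_of_isNATRootedAt {A : Finset (ℕ × ℕ)} {m n : ℕ} (hA : IsNATRootedAt A (0, 0))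
    (hm : A.image Prod.fst = range m) (hn : A.image Prod.snd = range n) : IsNAT A := by
  refine ⟨hA.mem, hA.xor, fun p hp => ⟨fun x hx => ?_, fun y hy => ?_⟩⟩
  · have hp : p.1 ∈ range m := hm ▸ mem_image_of_mem _ hp
    have hx : x ∈ A.image Prod.fst := hm ▸ mem_range.mpr (hx.trans (mem_range.mp hp))
    exact mem_image.mp hx
  · have hp : p.2 ∈ range n := hn ▸ mem_image_of_mem _ hp
    have hy : y ∈ A.image Prod.snd := hn ▸ mem_range.mpr (hy.trans (mem_range.mp hp))
    exact mem_image.mp hy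

section Relabel

variable {D : Finset (ℕ × ℕ)} {g h : ℕ → ℕ}

theorem isLeftChild_image_prodMap (hg : StrictMonoOn g (D.image Prod.fst))
    (hh : StrictMonoOn h (D.image Prod.snd)) {p : ℕ × ℕ} (hp : p ∈ D) :
    IsLeftChild (D.image (Prod.map g h)) (Prod.map g h p) ↔ IsLeftChild D p := by
  simp only [IsLeftChild, exists_mem_image, Prod.map_fst, Prod.map_snd]
  exact exists_congr fun r => and_congr_right fun hr => and_congr
    (hh.injOn.eq_iff (mem_image_of_mem _ hr) (mem_image_of_mem _ hp))
    (hg.lt_iff_lt (mem_image_of_mem _ hr) (mem_image_of_mem _ hp))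

theorem isRightChild_image_prodMap (hg : StrictMonoOn g (D.image Prod.fst))
    (hh : StrictMonoOn h (D.image Prod.snd)) {p : ℕ × ℕ} (hp : p ∈ D) :
    IsRightChild (D.image (Prod.map g h)) (Prod.map g h p) ↔ IsRightChild D p := by
  simp only [IsRightChild, exists_mem_image, Prod.map_fst, Prod.map_snd]
  exact exists_congr fun r => and_congr_right fun hr => and_congr
    (hg.injOn.eq_iff (mem_image_of_mem _ hr) (mem_image_of_mem _ hp))
    (hh.lt_iff_lt (mem_image_of_mem _ hr) (mem_image_of_mem _ hp))

theorem hasLeftChild_image_prodMap (hg : StrictMonoOn g (D.image Prod.fst))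
    (hh : StrictMonoOn h (D.image Prod.snd)) {p : ℕ × ℕ} (hp : p ∈ D) :
    HasLeftChild (D.image (Prod.map g h)) (Prod.map g h p) ↔ HasLeftChild D p := by
  simp only [HasLeftChild, exists_mem_image, Prod.map_fst, Prod.map_snd]
  exact exists_congr fun r => and_congr_right fun hr => and_congr
    (hh.injOn.eq_iff (mem_image_of_mem _ hr) (mem_image_of_mem _ hp))
    (hg.lt_iff_lt (mem_image_of_mem _ hp) (mem_image_of_mem _ hr))

theorem hasRightChild_image_prodMap (hg : StrictMonoOn g (D.image Prod.fst))
    (hh : StrictMonoOn h (D.image Prod.snd)) {p : ℕ × ℕ} (hp : p ∈ D) :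
    HasRightChild (D.image (Prod.map g h)) (Prod.map g h p) ↔ HasRightChild D p := by
  simp only [HasRightChild, exists_mem_image, Prod.map_fst, Prod.map_snd]
  exact exists_congr fun r => and_congr_right fun hr => and_congr
    (hg.injOn.eq_iff (mem_image_of_mem _ hr) (mem_image_of_mem _ hp))
    (hh.lt_iff_lt (mem_image_of_mem _ hp) (mem_image_of_mem _ hr))

theorem IsNATRootedAt.image_prodMap {c : ℕ × ℕ} (hD : IsNATRootedAt D c)
    (hg : StrictMonoOn g (D.image Prod.fst)) (hh : StrictMonoOn h (D.image Prod.snd)) :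
    IsNATRootedAt (D.image (Prod.map g h)) (Prod.map g h c) := by
  obtain ⟨hc, hmin, hxor⟩ := hD
  refine ⟨mem_image_of_mem _ hc, forall_mem_image.mpr fun p hp => ⟨?_, ?_⟩,
    forall_mem_image.mpr fun p hp hne => ?_⟩
  · exact hg.monotoneOn (mem_image_of_mem _ hc) (mem_image_of_mem _ hp) (hmin p hp).1
  · exact hh.monotoneOn (mem_image_of_mem _ hc) (mem_image_of_mem _ hp) (hmin p hp).2
  · rw [isRightChild_image_prodMap hg hh hp, isLeftChild_image_prodMap hg hh hp]
    exact hxor p hp (ne_of_apply_ne _ hne)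

theorem IsCompleteNAT.image_prodMap (hD : IsCompleteNAT D)
    (hg : StrictMonoOn g (D.image Prod.fst)) (hh : StrictMonoOn h (D.image Prod.snd)) :
    IsCompleteNAT (D.image (Prod.map g h)) :=
  forall_mem_image.mpr fun p hp => by
    rw [hasLeftChild_image_prodMap hg hh hp, hasRightChild_image_prodMap hg hh hp]
    exact hD p hp

end Relabel

/-- Relabel the occupied columns and rows of `D` by `0, 1, 2, …`, keeping their order. -/
noncomputable def compress (D : Finset (ℕ × ℕ)) : Finset (ℕ × ℕ) :=
  D.image (Prod.map (Nat.count (· ∈ D.image Prod.fst)) (Nat.count (· ∈ D.image Prod.snd)))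

/-- Move column `i` to the `i`-th element of `C` and row `j` to the `j`-th element of `R`. -/
noncomputable def expand (C R : Finset ℕ) (D : Finset (ℕ × ℕ)) : Finset (ℕ × ℕ) :=
  D.image (Prod.map (Nat.nth (· ∈ C)) (Nat.nth (· ∈ R)))

section Compress

variable {D : Finset (ℕ × ℕ)}

theorem image_fst_compress (D : Finset (ℕ × ℕ)) :
    (compress D).image Prod.fst = range #(D.image Prod.fst) := by
  rw [compress, image_image, ← image_count, image_image]; rfl

theorem image_snd_compress (D : Finset (ℕ × ℕ)) :
    (compress D).image Prod.snd = range #(D.image Prod.snd) := by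
  rw [compress, image_image, ← image_count, image_image]; rfl

theorem IsNATRootedAt.isNAT_compress {c : ℕ × ℕ} (hD : IsNATRootedAt D c) :
    IsNAT (compress D) := by
  have hc : Prod.map (Nat.count (· ∈ D.image Prod.fst)) (Nat.count (· ∈ D.image Prod.snd)) c =
      (0, 0) := by
    refine Prod.ext (Nat.count_iff_forall_not.mpr fun x hx hmem => ?_)
      (Nat.count_iff_forall_not.mpr fun y hy hmem => ?_)
    · obtain ⟨p, hp, rfl⟩ := mem_image.mp hmem
      exact (hD.le p hp).1.not_gt hx
    · obtain ⟨p, hp, rfl⟩ := mem_image.mp hmem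
      exact (hD.le p hp).2.not_gt hy
  have := hD.image_prodMap (strictMonoOn_count _) (strictMonoOn_count _)
  rw [hc] at this
  exact isNAT_of_isNATRootedAt this (image_fst_compress D) (image_snd_compress D)

theorem IsCompleteNAT.compress (hD : IsCompleteNAT D) : IsCompleteNAT (compress D) :=
  hD.image_prodMap (strictMonoOn_count _) (strictMonoOn_count _)

theorem expand_compress (D : Finset (ℕ × ℕ)) :
    expand (D.image Prod.fst) (D.image Prod.snd) (compress D) = D := by
  rw [expand, compress, image_image]
  refine (image_congr fun p hp => ?_).trans image_id
  exact Prod.ext (Nat.nth_count (mem_image_of_mem Prod.fst hp))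
    (Nat.nth_count (mem_image_of_mem Prod.snd hp))

variable {C R : Finset ℕ}

theorem image_fst_expand (hC : D.image Prod.fst = range #C) :
    (expand C R D).image Prod.fst = C := by
  rw [expand, image_image, show Prod.fst ∘ Prod.map (Nat.nth (· ∈ C)) (Nat.nth (· ∈ R)) =
    Nat.nth (· ∈ C) ∘ Prod.fst from rfl, ← image_image, hC, image_nth]

theorem image_snd_expand (hR : D.image Prod.snd = range #R) :
    (expand C R D).image Prod.snd = R := by
  rw [expand, image_image, show Prod.snd ∘ Prod.map (Nat.nth (· ∈ C)) (Nat.nth (· ∈ R)) =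
    Nat.nth (· ∈ R) ∘ Prod.snd from rfl, ← image_image, hR, image_nth]

theorem compress_expand (hC : D.image Prod.fst = range #C) (hR : D.image Prod.snd = range #R) :
    compress (expand C R D) = D := by
  rw [compress, image_fst_expand hC, image_snd_expand hR, expand, image_image]
  refine (image_congr fun p hp => Prod.ext ?_ ?_).trans image_id
  · exact count_nth C (mem_range.mp (hC ▸ mem_image_of_mem Prod.fst hp))
  · exact count_nth R (mem_range.mp (hR ▸ mem_image_of_mem Prod.snd hp))

theorem IsNATRootedAt.expand {c : ℕ × ℕ} (hD : IsNATRootedAt D c)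
    (hC : D.image Prod.fst = range #C) (hR : D.image Prod.snd = range #R) :
    IsNATRootedAt (expand C R D) (Nat.nth (· ∈ C) c.1, Nat.nth (· ∈ R) c.2) :=
  hD.image_prodMap (hC ▸ strictMonoOn_nth C) (hR ▸ strictMonoOn_nth R)

theorem IsCompleteNAT.expand (hD : IsCompleteNAT D)
    (hC : D.image Prod.fst = range #C) (hR : D.image Prod.snd = range #R) :
    IsCompleteNAT (expand C R D) :=
  hD.image_prodMap (hC ▸ strictMonoOn_nth C) (hR ▸ strictMonoOn_nth R)

end Compress

section Counting

theorem card_filter_not_exists_lt {α : Type*} [LinearOrder α] (A : Finset (ℕ × ℕ))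
    (P : ℕ × ℕ → Prop) [DecidablePred P] (f : ℕ × ℕ → ℕ) (g : ℕ × ℕ → α)
    (hP : ∀ p, P p ↔ ∃ q ∈ A, f q = f p ∧ g q < g p)
    (hfg : ∀ p ∈ A, ∀ q ∈ A, f p = f q → g p = g q → p = q) :
    #{p ∈ A | ¬P p} = #(A.image f) := by
  simp only [hP]
  refine card_bij (fun p _ => f p) (fun p hp => mem_image_of_mem f (mem_filter.mp hp).1)
    (fun p hp p' hp' hpp' => ?_) fun y hy => ?_
  · simp only [mem_filter, not_exists, not_and] at hp hp'
    rcases lt_trichotomy (g p) (g p') with h | h | h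
    · exact absurd h (hp'.2 p hp.1 hpp')
    · exact hfg p hp.1 p' hp'.1 hpp' h
    · exact absurd h (hp.2 p' hp'.1 hpp'.symm)
  · obtain ⟨p, hp, rfl⟩ := mem_image.mp hy
    obtain ⟨m, hm, hmin⟩ := exists_min_image {q ∈ A | f q = f p} g ⟨p, by simp [hp]⟩
    simp only [mem_filter] at hm
    refine ⟨m, mem_filter.mpr ⟨hm.1, fun ⟨q, hq, hqm, hlt⟩ => ?_⟩, hm.2⟩
    exact (hmin q (mem_filter.mpr ⟨hq, hqm.trans hm.2⟩)).not_gt hlt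

open scoped Classical

theorem card_filter_not_isRightChild (A : Finset (ℕ × ℕ)) :
    #{p ∈ A | ¬IsRightChild A p} = #(A.image Prod.fst) :=
  card_filter_not_exists_lt A _ Prod.fst Prod.snd (fun _ => Iff.rfl) fun _ _ _ _ => Prod.ext

theorem card_filter_not_isLeftChild (A : Finset (ℕ × ℕ)) :
    #{p ∈ A | ¬IsLeftChild A p} = #(A.image Prod.snd) :=
  card_filter_not_exists_lt A _ Prod.snd Prod.fst (fun _ => Iff.rfl)
    fun _ _ _ _ h₁ h₂ => Prod.ext h₂ h₁

theorem card_filter_not_hasRightChild (A : Finset (ℕ × ℕ)) :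
    #{p ∈ A | ¬HasRightChild A p} = #(A.image Prod.fst) :=
  card_filter_not_exists_lt A _ Prod.fst (OrderDual.toDual ∘ Prod.snd) (fun _ => Iff.rfl)
    fun _ _ _ _ h₁ h₂ => Prod.ext h₁ (OrderDual.toDual.injective h₂)

theorem card_filter_not_hasLeftChild (A : Finset (ℕ × ℕ)) :
    #{p ∈ A | ¬HasLeftChild A p} = #(A.image Prod.snd) :=
  card_filter_not_exists_lt A _ Prod.snd (OrderDual.toDual ∘ Prod.fst) (fun _ => Iff.rfl)
    fun _ _ _ _ h₁ h₂ => Prod.ext (OrderDual.toDual.injective h₂) h₁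

variable {A : Finset (ℕ × ℕ)}

theorem numInternal_eq_card (A : Finset (ℕ × ℕ)) :
    numInternal A = #{q ∈ A | HasLeftChild A q ∧ HasRightChild A q} := by
  rw [numInternal, ← Set.ncard_coe_finset, coe_filter]

theorem IsNAT.filter_not_isRightChild (hA : IsNAT A) :
    {p ∈ A | ¬IsRightChild A p} = insert (0, 0) {p ∈ A | IsLeftChild A p} := by
  ext p
  simp only [mem_filter, mem_insert]
  by_cases hp : p = (0, 0)
  · subst hp
    simp [hA.1, not_isRightChild_of_snd_eq_zero, not_isLeftChild_of_fst_eq_zero]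
  · rw [or_iff_right hp]
    exact and_congr_right fun hpA => xor_iff_not_iff'.mp (hA.isNATRootedAt.xor p hpA hp)

theorem IsNAT.filter_not_isLeftChild (hA : IsNAT A) :
    {p ∈ A | ¬IsLeftChild A p} = insert (0, 0) {p ∈ A | IsRightChild A p} := by
  ext p
  simp only [mem_filter, mem_insert]
  by_cases hp : p = (0, 0)
  · subst hp
    simp [hA.1, not_isRightChild_of_snd_eq_zero, not_isLeftChild_of_fst_eq_zero]
  · rw [or_iff_right hp]
    exact and_congr_right fun hpA => (xor_iff_iff_not.mp (hA.isNATRootedAt.xor p hpA hp)).symm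

theorem IsNAT.card_add_one (hA : IsNAT A) :
    #A + 1 = #(A.image Prod.fst) + #(A.image Prod.snd) := by
  have hcols := card_filter_not_isRightChild A
  have hrows := card_filter_not_isLeftChild A
  rw [hA.filter_not_isRightChild, card_insert_of_notMem (by simp [not_isLeftChild_of_fst_eq_zero])]
    at hcols
  rw [hA.filter_not_isLeftChild, card_insert_of_notMem (by simp [not_isRightChild_of_snd_eq_zero])]
    at hrows
  have : #{p ∈ A | IsRightChild A p} + #{p ∈ A | ¬IsRightChild A p} = #A :=
    card_filter_add_card_filter_not _
  rw [card_filter_not_isRightChild] at this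
  omega

theorem IsCompleteNAT.card_image_fst_snd (hA : IsNAT A) (hC : IsCompleteNAT A) :
    #(A.image Prod.fst) = numInternal A + 1 ∧ #(A.image Prod.snd) = numInternal A + 1 := by
  have hleft : numInternal A = #{q ∈ A | HasLeftChild A q} := by
    rw [numInternal_eq_card]
    exact congrArg card (filter_congr fun q hq => ⟨And.left, fun h => ⟨h, (hC q hq).mp h⟩⟩)
  have hright : numInternal A = #{q ∈ A | HasRightChild A q} := by
    rw [numInternal_eq_card]
    exact congrArg card
      (filter_congr fun q hq => ⟨And.right, fun h => ⟨(hC q hq).mpr h, h⟩⟩)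
  have h₁ := card_filter_add_card_filter_not (s := A) (HasLeftChild A)
  have h₂ := card_filter_add_card_filter_not (s := A) (HasRightChild A)
  rw [← hleft, card_filter_not_hasLeftChild] at h₁
  rw [← hright, card_filter_not_hasRightChild] at h₂
  have := hA.card_add_one
  omega

theorem IsCompleteNAT.image_fst_eq_range (hA : IsNAT A) (hC : IsCompleteNAT A) :
    A.image Prod.fst = range (numInternal A + 1) := by
  rw [hA.image_fst_eq_range, (hC.card_image_fst_snd hA).1]

theorem IsCompleteNAT.image_snd_eq_range (hA : IsNAT A) (hC : IsCompleteNAT A) :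
    A.image Prod.snd = range (numInternal A + 1) := by
  rw [hA.image_snd_eq_range, (hC.card_image_fst_snd hA).2]

end Counting

/-- The tree with root `(0, 0)` and the two subtrees `L` and `R`, already placed in the plane. -/
def rootJoin (L R : Finset (ℕ × ℕ)) : Finset (ℕ × ℕ) :=
  insert (0, 0) (L ∪ R)

structure IsSeparated (L R : Finset (ℕ × ℕ)) : Prop where
  fst_ne_zero : ∀ p ∈ L, p.1 ≠ 0
  snd_ne_zero : ∀ q ∈ R, q.2 ≠ 0
  fst_ne : ∀ p ∈ L, ∀ q ∈ R, p.1 ≠ q.1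
  snd_ne : ∀ p ∈ L, ∀ q ∈ R, p.2 ≠ q.2

theorem mem_rootJoin {L R : Finset (ℕ × ℕ)} {p : ℕ × ℕ} :
    p ∈ rootJoin L R ↔ p = (0, 0) ∨ p ∈ L ∨ p ∈ R := by
  rw [rootJoin, mem_insert, mem_union]

theorem left_subset_rootJoin {L R : Finset (ℕ × ℕ)} : L ⊆ rootJoin L R :=
  fun _ hp => mem_rootJoin.mpr (.inr (.inl hp))

theorem right_subset_rootJoin {L R : Finset (ℕ × ℕ)} : R ⊆ rootJoin L R :=
  fun _ hp => mem_rootJoin.mpr (.inr (.inr hp))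

theorem ne_zero_of_fst_gt {w : ℕ × ℕ} {a : ℕ} (hw : a < w.1) : w ≠ (0, 0) :=
  fun hw₀ => by simp [hw₀] at hw

theorem ne_zero_of_snd_gt {w : ℕ × ℕ} {a : ℕ} (hw : a < w.2) : w ≠ (0, 0) :=
  fun hw₀ => by simp [hw₀] at hw

theorem image_fst_rootJoin (L R : Finset (ℕ × ℕ)) :
    (rootJoin L R).image Prod.fst = insert 0 (L.image Prod.fst ∪ R.image Prod.fst) := by
  rw [rootJoin, image_insert, image_union]

theorem image_snd_rootJoin (L R : Finset (ℕ × ℕ)) :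
    (rootJoin L R).image Prod.snd = insert 0 (L.image Prod.snd ∪ R.image Prod.snd) := by
  rw [rootJoin, image_insert, image_union]

namespace IsSeparated

variable {L R : Finset (ℕ × ℕ)} {q w : ℕ × ℕ}

theorem of_image (hL : 0 ∉ L.image Prod.fst) (hR : 0 ∉ R.image Prod.snd)
    (hfst : Disjoint (L.image Prod.fst) (R.image Prod.fst))
    (hsnd : Disjoint (L.image Prod.snd) (R.image Prod.snd)) : IsSeparated L R where
  fst_ne_zero _ hp hp₀ := hL (hp₀ ▸ mem_image_of_mem _ hp)
  snd_ne_zero _ hq hq₀ := hR (hq₀ ▸ mem_image_of_mem _ hq)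
  fst_ne _ hp _ hq he :=
    disjoint_left.mp hfst (mem_image_of_mem _ hp) (he ▸ mem_image_of_mem _ hq)
  snd_ne _ hp _ hq he :=
    disjoint_left.mp hsnd (mem_image_of_mem _ hp) (he ▸ mem_image_of_mem _ hq)

theorem disjoint_image_fst (h : IsSeparated L R) :
    Disjoint (L.image Prod.fst) (R.image Prod.fst) := by
  simp only [disjoint_left, mem_image, not_exists, not_and]
  rintro _ ⟨p, hp, rfl⟩ q hq he
  exact h.fst_ne p hp q hq he.symm

theorem disjoint_image_snd (h : IsSeparated L R) :
    Disjoint (L.image Prod.snd) (R.image Prod.snd) := by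
  simp only [disjoint_left, mem_image, not_exists, not_and]
  rintro _ ⟨p, hp, rfl⟩ q hq he
  exact h.snd_ne p hp q hq he.symm

theorem mem_left_of_fst_eq (h : IsSeparated L R) (hq : q ∈ L) (hw : w ∈ rootJoin L R)
    (he : w.1 = q.1) : w ∈ L := by
  rcases mem_rootJoin.mp hw with rfl | hw | hw
  · exact absurd he.symm (h.fst_ne_zero q hq)
  · exact hw
  · exact absurd he.symm (h.fst_ne q hq w hw)

theorem mem_left_of_snd_eq (h : IsSeparated L R) (hq : q ∈ L) (hw : w ∈ rootJoin L R)
    (he : w.2 = q.2) (hw₀ : w ≠ (0, 0)) : w ∈ L := by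
  rcases mem_rootJoin.mp hw with rfl | hw | hw
  · exact absurd rfl hw₀
  · exact hw
  · exact absurd he.symm (h.snd_ne q hq w hw)

theorem mem_right_of_snd_eq (h : IsSeparated L R) (hq : q ∈ R) (hw : w ∈ rootJoin L R)
    (he : w.2 = q.2) : w ∈ R := by
  rcases mem_rootJoin.mp hw with rfl | hw | hw
  · exact absurd he.symm (h.snd_ne_zero q hq)
  · exact absurd he (h.snd_ne w hw q hq)
  · exact hw

theorem mem_right_of_fst_eq (h : IsSeparated L R) (hq : q ∈ R) (hw : w ∈ rootJoin L R)
    (he : w.1 = q.1) (hw₀ : w ≠ (0, 0)) : w ∈ R := by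
  rcases mem_rootJoin.mp hw with rfl | hw | hw
  · exact absurd rfl hw₀
  · exact absurd he (h.fst_ne w hw q hq)
  · exact hw

theorem hasLeftChild_left_iff (h : IsSeparated L R) (hq : q ∈ L) :
    HasLeftChild (rootJoin L R) q ↔ HasLeftChild L q :=
  ⟨fun ⟨w, hw, h₂, h₁⟩ =>
      ⟨w, h.mem_left_of_snd_eq hq hw h₂ (ne_zero_of_fst_gt h₁), h₂, h₁⟩,
    fun ⟨w, hw, h₂, h₁⟩ => ⟨w, left_subset_rootJoin hw, h₂, h₁⟩⟩

theorem hasRightChild_left_iff (h : IsSeparated L R) (hq : q ∈ L) :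
    HasRightChild (rootJoin L R) q ↔ HasRightChild L q :=
  ⟨fun ⟨w, hw, h₁, h₂⟩ => ⟨w, h.mem_left_of_fst_eq hq hw h₁, h₁, h₂⟩,
    fun ⟨w, hw, h₁, h₂⟩ => ⟨w, left_subset_rootJoin hw, h₁, h₂⟩⟩

theorem isRightChild_left_iff (h : IsSeparated L R) (hq : q ∈ L) :
    IsRightChild (rootJoin L R) q ↔ IsRightChild L q :=
  ⟨fun ⟨w, hw, h₁, h₂⟩ => ⟨w, h.mem_left_of_fst_eq hq hw h₁, h₁, h₂⟩,
    fun ⟨w, hw, h₁, h₂⟩ => ⟨w, left_subset_rootJoin hw, h₁, h₂⟩⟩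

theorem isLeftChild_left_iff (h : IsSeparated L R) (hq : q ∈ L) :
    IsLeftChild (rootJoin L R) q ↔ IsLeftChild L q ∨ q.2 = 0 := by
  refine ⟨fun ⟨w, hw, h₂, h₁⟩ => ?_, ?_⟩
  · by_cases hw₀ : w = (0, 0)
    · exact .inr (h₂.symm.trans (congrArg Prod.snd hw₀))
    · exact .inl ⟨w, h.mem_left_of_snd_eq hq hw h₂ hw₀, h₂, h₁⟩
  · rintro (⟨w, hw, h₂, h₁⟩ | hq₀)
    · exact ⟨w, left_subset_rootJoin hw, h₂, h₁⟩
    · exact ⟨(0, 0), mem_insert_self _ _, hq₀.symm, Nat.pos_of_ne_zero (h.fst_ne_zero q hq)⟩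

theorem hasLeftChild_right_iff (h : IsSeparated L R) (hq : q ∈ R) :
    HasLeftChild (rootJoin L R) q ↔ HasLeftChild R q :=
  ⟨fun ⟨w, hw, h₂, h₁⟩ => ⟨w, h.mem_right_of_snd_eq hq hw h₂, h₂, h₁⟩,
    fun ⟨w, hw, h₂, h₁⟩ => ⟨w, right_subset_rootJoin hw, h₂, h₁⟩⟩

theorem hasRightChild_right_iff (h : IsSeparated L R) (hq : q ∈ R) :
    HasRightChild (rootJoin L R) q ↔ HasRightChild R q :=
  ⟨fun ⟨w, hw, h₁, h₂⟩ =>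
      ⟨w, h.mem_right_of_fst_eq hq hw h₁ (ne_zero_of_snd_gt h₂), h₁, h₂⟩,
    fun ⟨w, hw, h₁, h₂⟩ => ⟨w, right_subset_rootJoin hw, h₁, h₂⟩⟩

theorem isLeftChild_right_iff (h : IsSeparated L R) (hq : q ∈ R) :
    IsLeftChild (rootJoin L R) q ↔ IsLeftChild R q :=
  ⟨fun ⟨w, hw, h₂, h₁⟩ => ⟨w, h.mem_right_of_snd_eq hq hw h₂, h₂, h₁⟩,
    fun ⟨w, hw, h₂, h₁⟩ => ⟨w, right_subset_rootJoin hw, h₂, h₁⟩⟩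

theorem isRightChild_right_iff (h : IsSeparated L R) (hq : q ∈ R) :
    IsRightChild (rootJoin L R) q ↔ IsRightChild R q ∨ q.1 = 0 := by
  refine ⟨fun ⟨w, hw, h₁, h₂⟩ => ?_, ?_⟩
  · by_cases hw₀ : w = (0, 0)
    · exact .inr (h₁.symm.trans (congrArg Prod.fst hw₀))
    · exact .inl ⟨w, h.mem_right_of_fst_eq hq hw h₁ hw₀, h₁, h₂⟩
  · rintro (⟨w, hw, h₁, h₂⟩ | hq₀)
    · exact ⟨w, right_subset_rootJoin hw, h₁, h₂⟩
    · exact ⟨(0, 0), mem_insert_self _ _, hq₀.symm, Nat.pos_of_ne_zero (h.snd_ne_zero q hq)⟩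

theorem isCompleteNAT_rootJoin_iff (h : IsSeparated L R) {cL cR : ℕ × ℕ} (hcL : cL ∈ L)
    (hcL₀ : cL.2 = 0) (hcR : cR ∈ R) (hcR₀ : cR.1 = 0) :
    IsCompleteNAT (rootJoin L R) ↔ IsCompleteNAT L ∧ IsCompleteNAT R := by
  refine ⟨fun hG => ⟨fun q hq => ?_, fun q hq => ?_⟩, fun ⟨hL, hR⟩ q hq => ?_⟩
  · rw [← h.hasLeftChild_left_iff hq, ← h.hasRightChild_left_iff hq]
    exact hG q (left_subset_rootJoin hq)
  · rw [← h.hasLeftChild_right_iff hq, ← h.hasRightChild_right_iff hq]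
    exact hG q (right_subset_rootJoin hq)
  rcases mem_rootJoin.mp hq with rfl | hq | hq
  · refine iff_of_true ⟨cL, left_subset_rootJoin hcL, hcL₀, ?_⟩
      ⟨cR, right_subset_rootJoin hcR, hcR₀, ?_⟩
    · exact Nat.pos_of_ne_zero (h.fst_ne_zero cL hcL)
    · exact Nat.pos_of_ne_zero (h.snd_ne_zero cR hcR)
  · rw [h.hasLeftChild_left_iff hq, h.hasRightChild_left_iff hq]
    exact hL q hq
  · rw [h.hasLeftChild_right_iff hq, h.hasRightChild_right_iff hq]
    exact hR q hq

theorem isLeftChild_left_iff_of_ne (h : IsSeparated L R) {c : ℕ × ℕ} (hc : c ∈ L)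
    (hc₀ : c.2 = 0) (hcmin : ∀ p ∈ L, c.1 ≤ p.1) (hq : q ∈ L) (hqc : q ≠ c) :
    IsLeftChild (rootJoin L R) q ↔ IsLeftChild L q := by
  refine (h.isLeftChild_left_iff hq).trans (or_iff_left_of_imp fun hq₀ => ⟨c, hc, ?_, ?_⟩)
  · rw [hc₀, hq₀]
  · exact (hcmin q hq).lt_of_ne fun he => hqc (Prod.ext he.symm (hq₀.trans hc₀.symm))

theorem isRightChild_right_iff_of_ne (h : IsSeparated L R) {c : ℕ × ℕ} (hc : c ∈ R)
    (hc₀ : c.1 = 0) (hcmin : ∀ p ∈ R, c.2 ≤ p.2) (hq : q ∈ R) (hqc : q ≠ c) :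
    IsRightChild (rootJoin L R) q ↔ IsRightChild R q := by
  refine (h.isRightChild_right_iff hq).trans (or_iff_left_of_imp fun hq₀ => ⟨c, hc, ?_, ?_⟩)
  · rw [hc₀, hq₀]
  · exact (hcmin q hq).lt_of_ne fun he => hqc (Prod.ext (hq₀.trans hc₀.symm) he.symm)

theorem isNATRootedAt_rootJoin (h : IsSeparated L R) {cL cR : ℕ × ℕ} (hL : IsNATRootedAt L cL)
    (hcL₀ : cL.2 = 0) (hR : IsNATRootedAt R cR) (hcR₀ : cR.1 = 0) :
    IsNATRootedAt (rootJoin L R) (0, 0) := by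
  refine ⟨mem_insert_self _ _, fun _ _ => ⟨Nat.zero_le _, Nat.zero_le _⟩,
    fun q hq hq₀ => ?_⟩
  rcases mem_rootJoin.mp hq with rfl | hq | hq
  · exact absurd rfl hq₀
  · rw [h.isRightChild_left_iff hq]
    by_cases hqc : q = cL
    · subst hqc
      exact .inr ⟨(h.isLeftChild_left_iff hq).mpr (.inr hcL₀),
        not_isRightChild_of_snd_eq_zero hcL₀⟩
    · rw [h.isLeftChild_left_iff_of_ne hL.mem hcL₀ (fun p hp => (hL.le p hp).1) hq hqc]
      exact hL.xor q hq hqc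
  · rw [h.isLeftChild_right_iff hq]
    by_cases hqc : q = cR
    · subst hqc
      exact .inl ⟨(h.isRightChild_right_iff hq).mpr (.inr hcR₀),
        not_isLeftChild_of_fst_eq_zero hcR₀⟩
    · rw [h.isRightChild_right_iff_of_ne hR.mem hcR₀ (fun p hp => (hR.le p hp).2) hq hqc]
      exact hR.xor q hq hqc

theorem exists_isNATRootedAt_left (h : IsSeparated L R)
    (hG : IsNATRootedAt (rootJoin L R) (0, 0)) (hL : L.Nonempty) :
    ∃ c, c.2 = 0 ∧ IsNATRootedAt L c := by
  obtain ⟨x, hxL, hxmin⟩ := exists_min_image L Prod.fst hL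
  obtain ⟨c, hc, hcmin⟩ := exists_min_image {p ∈ L | p.1 = x.1} Prod.snd
    ⟨x, mem_filter.mpr ⟨hxL, rfl⟩⟩
  obtain ⟨hcL, hcx⟩ := mem_filter.mp hc
  have hc_ne : ∀ {p}, p ∈ L → p ≠ (0, 0) := fun hp hp₀ =>
    h.fst_ne_zero _ hp (by rw [hp₀])
  have hcmin' : ∀ p ∈ L, c.1 ≤ p.1 := fun p hp => hcx ▸ hxmin p hp
  have hc₀ : c.2 = 0 := by
    by_contra hc₀
    have hnr : ¬IsRightChild (rootJoin L R) c := fun ⟨w, hw, h₁, h₂⟩ =>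
      (hcmin w (mem_filter.mpr ⟨h.mem_left_of_fst_eq hcL hw h₁, h₁.trans hcx⟩)).not_gt h₂
    obtain ⟨w, hw, h₂, h₁⟩ :=
      (xor_iff_not_iff'.mp (hG.xor c (left_subset_rootJoin hcL) (hc_ne hcL))).mp hnr
    have hw₀ : w ≠ (0, 0) := fun hw₀ => hc₀ (h₂ ▸ hw₀ ▸ rfl)
    exact (hcmin' w (h.mem_left_of_snd_eq hcL hw h₂ hw₀)).not_gt h₁
  refine ⟨c, hc₀, hcL, fun p hp => ⟨hcmin' p hp, hc₀ ▸ Nat.zero_le _⟩,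
    fun p hp hpc => ?_⟩
  have := hG.xor p (left_subset_rootJoin hp) (hc_ne hp)
  rwa [h.isRightChild_left_iff hp, h.isLeftChild_left_iff_of_ne hcL hc₀ hcmin' hp hpc] at this

theorem exists_isNATRootedAt_right (h : IsSeparated L R)
    (hG : IsNATRootedAt (rootJoin L R) (0, 0)) (hR : R.Nonempty) :
    ∃ c, c.1 = 0 ∧ IsNATRootedAt R c := by
  obtain ⟨x, hxR, hxmin⟩ := exists_min_image R Prod.snd hR
  obtain ⟨c, hc, hcmin⟩ := exists_min_image {p ∈ R | p.2 = x.2} Prod.fst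
    ⟨x, mem_filter.mpr ⟨hxR, rfl⟩⟩
  obtain ⟨hcR, hcx⟩ := mem_filter.mp hc
  have hc_ne : ∀ {p}, p ∈ R → p ≠ (0, 0) := fun hp hp₀ =>
    h.snd_ne_zero _ hp (by rw [hp₀])
  have hcmin' : ∀ p ∈ R, c.2 ≤ p.2 := fun p hp => hcx ▸ hxmin p hp
  have hc₀ : c.1 = 0 := by
    by_contra hc₀
    have hnl : ¬IsLeftChild (rootJoin L R) c := fun ⟨w, hw, h₂, h₁⟩ =>
      (hcmin w (mem_filter.mpr ⟨h.mem_right_of_snd_eq hcR hw h₂, h₂.trans hcx⟩)).not_gt h₁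
    obtain ⟨w, hw, h₁, h₂⟩ :=
      (xor_iff_iff_not.mp (hG.xor c (right_subset_rootJoin hcR) (hc_ne hcR))).mpr hnl
    have hw₀ : w ≠ (0, 0) := fun hw₀ => hc₀ (h₁ ▸ hw₀ ▸ rfl)
    exact (hcmin' w (h.mem_right_of_fst_eq hcR hw h₁ hw₀)).not_gt h₂
  refine ⟨c, hc₀, hcR, fun p hp => ⟨hc₀ ▸ Nat.zero_le _, hcmin' p hp⟩,
    fun p hp hpc => ?_⟩
  have := hG.xor p (right_subset_rootJoin hp) (hc_ne hp)
  rwa [h.isLeftChild_right_iff hp, h.isRightChild_right_iff_of_ne hcR hc₀ hcmin' hp hpc] at this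

end IsSeparated

noncomputable def rowStart (A : Finset (ℕ × ℕ)) (y : ℕ) : ℕ :=
  sInf {x | (x, y) ∈ A}

noncomputable def colStart (A : Finset (ℕ × ℕ)) (x : ℕ) : ℕ :=
  sInf {y | (x, y) ∈ A}

theorem rowStart_mem {A : Finset (ℕ × ℕ)} {p : ℕ × ℕ} (hp : p ∈ A) :
    (rowStart A p.2, p.2) ∈ A :=
  Nat.sInf_mem (s := {x | (x, p.2) ∈ A}) ⟨p.1, hp⟩

theorem colStart_mem {A : Finset (ℕ × ℕ)} {p : ℕ × ℕ} (hp : p ∈ A) :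
    (p.1, colStart A p.1) ∈ A :=
  Nat.sInf_mem (s := {y | (p.1, y) ∈ A}) ⟨p.2, hp⟩

theorem rowStart_le {A : Finset (ℕ × ℕ)} {p : ℕ × ℕ} (hp : p ∈ A) :
    rowStart A p.2 ≤ p.1 :=
  Nat.sInf_le (s := {x | (x, p.2) ∈ A}) hp

theorem colStart_le {A : Finset (ℕ × ℕ)} {p : ℕ × ℕ} (hp : p ∈ A) :
    colStart A p.1 ≤ p.2 :=
  Nat.sInf_le (s := {y | (p.1, y) ∈ A}) hp

theorem rowStart_lt {A : Finset (ℕ × ℕ)} {p : ℕ × ℕ} (hp : IsLeftChild A p) :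
    rowStart A p.2 < p.1 := by
  obtain ⟨r, hr, h₂, h₁⟩ := hp
  exact (h₂ ▸ rowStart_le hr).trans_lt h₁

theorem colStart_lt {A : Finset (ℕ × ℕ)} {p : ℕ × ℕ} (hp : IsRightChild A p) :
    colStart A p.1 < p.2 := by
  obtain ⟨r, hr, h₁, h₂⟩ := hp
  exact (h₁ ▸ colStart_le hr).trans_lt h₂

open scoped Classical in
/-- Whether `p` lies in the left subtree of the root. Walking from a left child to the start of
its row, or from a right child to the start of its column, stays in the same subtree of the
root and ends in row `0` (left subtree) or column `0` (right subtree). -/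
noncomputable def inLeftSubtree (A : Finset (ℕ × ℕ)) (p : ℕ × ℕ) : Bool :=
  if p.2 = 0 then true
  else if p.1 = 0 then false
  else if IsLeftChild A p then inLeftSubtree A (rowStart A p.2, p.2)
  else if IsRightChild A p then inLeftSubtree A (p.1, colStart A p.1)
  else true
termination_by p.1 + p.2
decreasing_by
  · have := rowStart_lt ‹IsLeftChild A p›; omega
  · have := colStart_lt ‹IsRightChild A p›; omega

section Branches

variable {A : Finset (ℕ × ℕ)} {p : ℕ × ℕ}

theorem inLeftSubtree_of_snd_eq_zero (hp : p.2 = 0) : inLeftSubtree A p = true := by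
  rw [inLeftSubtree, if_pos hp]

theorem inLeftSubtree_of_fst_eq_zero (hp₁ : p.1 = 0) (hp₂ : p.2 ≠ 0) :
    inLeftSubtree A p = false := by
  rw [inLeftSubtree, if_neg hp₂, if_pos hp₁]

theorem inLeftSubtree_of_isLeftChild (hp₂ : p.2 ≠ 0) (hp : IsLeftChild A p) :
    inLeftSubtree A p = inLeftSubtree A (rowStart A p.2, p.2) := by
  rw [inLeftSubtree, if_neg hp₂, if_neg (Nat.ne_zero_of_lt (rowStart_lt hp)), if_pos hp]

theorem inLeftSubtree_of_isRightChild (hp₁ : p.1 ≠ 0) (hl : ¬IsLeftChild A p)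
    (hp : IsRightChild A p) : inLeftSubtree A p = inLeftSubtree A (p.1, colStart A p.1) := by
  rw [inLeftSubtree, if_neg (Nat.ne_zero_of_lt (colStart_lt hp)), if_neg hp₁, if_neg hl,
    if_pos hp]

theorem inLeftSubtree_eq_rowStart (hp : p ∈ A) (hp₂ : p.2 ≠ 0) :
    inLeftSubtree A p = inLeftSubtree A (rowStart A p.2, p.2) := by
  rcases (rowStart_le hp).lt_or_eq with hlt | heq
  · exact inLeftSubtree_of_isLeftChild hp₂ ⟨_, rowStart_mem hp, rfl, hlt⟩
  · rw [heq]

theorem IsNAT.inLeftSubtree_eq_colStart (hA : IsNAT A) (hp : p ∈ A) (hp₁ : p.1 ≠ 0) :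
    inLeftSubtree A p = inLeftSubtree A (p.1, colStart A p.1) := by
  rcases (colStart_le hp).lt_or_eq with hlt | heq
  · have hr : IsRightChild A p := ⟨_, colStart_mem hp, rfl, hlt⟩
    have hl := (xor_iff_iff_not.mp (hA.isNATRootedAt.xor p hp fun hp₀ => hp₁ (by rw [hp₀]))).mp hr
    exact inLeftSubtree_of_isRightChild hp₁ hl hr
  · rw [heq]

noncomputable def leftBranch (A : Finset (ℕ × ℕ)) : Finset (ℕ × ℕ) :=
  {p ∈ A.erase (0, 0) | inLeftSubtree A p = true}

noncomputable def rightBranch (A : Finset (ℕ × ℕ)) : Finset (ℕ × ℕ) :=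
  {p ∈ A.erase (0, 0) | inLeftSubtree A p = false}

theorem mem_leftBranch :
    p ∈ leftBranch A ↔ (p ≠ (0, 0) ∧ p ∈ A) ∧ inLeftSubtree A p = true := by
  rw [leftBranch, mem_filter, mem_erase]

theorem mem_rightBranch :
    p ∈ rightBranch A ↔ (p ≠ (0, 0) ∧ p ∈ A) ∧ inLeftSubtree A p = false := by
  rw [rightBranch, mem_filter, mem_erase]

theorem rootJoin_leftBranch_rightBranch (hA : (0, 0) ∈ A) :
    rootJoin (leftBranch A) (rightBranch A) = A := by
  ext p
  simp only [mem_rootJoin, mem_leftBranch, mem_rightBranch]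
  cases inLeftSubtree A p <;> by_cases hp : p = (0, 0) <;> simp [hp, hA]

theorem IsNAT.isSeparated_branches (hA : IsNAT A) :
    IsSeparated (leftBranch A) (rightBranch A) := by
  have hL₁ : ∀ p ∈ leftBranch A, p.1 ≠ 0 := fun p hp hp₁ => by
    obtain ⟨⟨hp₀, -⟩, hp⟩ := mem_leftBranch.mp hp
    rw [inLeftSubtree_of_fst_eq_zero hp₁ fun hp₂ => hp₀ (Prod.ext hp₁ hp₂)] at hp
    exact Bool.false_ne_true hp
  have hR₂ : ∀ q ∈ rightBranch A, q.2 ≠ 0 := fun q hq hq₂ => by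
    have hq := (mem_rightBranch.mp hq).2
    rw [inLeftSubtree_of_snd_eq_zero hq₂] at hq
    exact Bool.false_ne_true hq.symm
  refine ⟨hL₁, hR₂, fun p hp q hq he => ?_, fun p hp q hq he => ?_⟩
  · obtain ⟨⟨-, hpA⟩, hp'⟩ := mem_leftBranch.mp hp
    obtain ⟨⟨-, hqA⟩, hq'⟩ := mem_rightBranch.mp hq
    have := hA.inLeftSubtree_eq_colStart hpA (hL₁ p hp)
    rw [he, ← hA.inLeftSubtree_eq_colStart hqA (he ▸ hL₁ p hp), hp', hq'] at this
    exact Bool.false_ne_true this.symm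
  · obtain ⟨⟨-, hpA⟩, hp'⟩ := mem_leftBranch.mp hp
    obtain ⟨⟨-, hqA⟩, hq'⟩ := mem_rightBranch.mp hq
    have := inLeftSubtree_eq_rowStart hpA (he ▸ hR₂ q hq)
    rw [he, ← inLeftSubtree_eq_rowStart hqA (hR₂ q hq), hp', hq'] at this
    exact Bool.false_ne_true this.symm

theorem IsSeparated.inLeftSubtree_rootJoin {L R : Finset (ℕ × ℕ)} (h : IsSeparated L R)
    (hG : IsNATRootedAt (rootJoin L R) (0, 0)) (p : ℕ × ℕ) :
    (p ∈ L → inLeftSubtree (rootJoin L R) p = true) ∧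
      (p ∈ R → inLeftSubtree (rootJoin L R) p = false) := by
  induction hn : p.1 + p.2 using Nat.strong_induction_on generalizing p with
  | _ n ih =>
  have hchild : ∀ {p}, p ∈ rootJoin L R → p ≠ (0, 0) →
      IsLeftChild (rootJoin L R) p ∨ IsRightChild (rootJoin L R) p :=
    fun hp hp₀ => (hG.xor _ hp hp₀).or.symm
  refine ⟨fun hp => ?_, fun hp => ?_⟩
  · have hp₁ := h.fst_ne_zero p hp
    have hpG : p ∈ rootJoin L R := left_subset_rootJoin hp
    by_cases hp₂ : p.2 = 0
    · exact inLeftSubtree_of_snd_eq_zero hp₂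
    by_cases hl : IsLeftChild (rootJoin L R) p
    · rw [inLeftSubtree_of_isLeftChild hp₂ hl]
      refine (ih _ (by have := rowStart_lt hl; omega) _ rfl).1
        (h.mem_left_of_snd_eq hp (rowStart_mem hpG) rfl fun hq => hp₂ ?_)
      exact congrArg Prod.snd hq
    · have hr := (hchild hpG fun hp₀ => hp₁ (by rw [hp₀])).resolve_left hl
      rw [inLeftSubtree_of_isRightChild hp₁ hl hr]
      exact (ih _ (by have := colStart_lt hr; omega) _ rfl).1
        (h.mem_left_of_fst_eq hp (colStart_mem hpG) rfl)
  · have hp₂ := h.snd_ne_zero p hp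
    have hpG : p ∈ rootJoin L R := right_subset_rootJoin hp
    by_cases hp₁ : p.1 = 0
    · exact inLeftSubtree_of_fst_eq_zero hp₁ hp₂
    by_cases hl : IsLeftChild (rootJoin L R) p
    · rw [inLeftSubtree_of_isLeftChild hp₂ hl]
      exact (ih _ (by have := rowStart_lt hl; omega) _ rfl).2
        (h.mem_right_of_snd_eq hp (rowStart_mem hpG) rfl)
    · have hr := (hchild hpG fun hp₀ => hp₁ (by rw [hp₀])).resolve_left hl
      rw [inLeftSubtree_of_isRightChild hp₁ hl hr]
      refine (ih _ (by have := colStart_lt hr; omega) _ rfl).2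
        (h.mem_right_of_fst_eq hp (colStart_mem hpG) rfl fun hq => hp₁ ?_)
      exact congrArg Prod.fst hq

theorem IsSeparated.leftBranch_rootJoin {L R : Finset (ℕ × ℕ)} (h : IsSeparated L R)
    (hG : IsNATRootedAt (rootJoin L R) (0, 0)) : leftBranch (rootJoin L R) = L := by
  ext p
  rw [mem_leftBranch]
  refine ⟨fun ⟨⟨hp₀, hp⟩, hpL⟩ => ?_,
    fun hp => ⟨⟨?_, left_subset_rootJoin hp⟩, ?_⟩⟩
  · rcases mem_rootJoin.mp hp with hp | hp | hp
    · exact absurd hp hp₀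
    · exact hp
    · rw [(h.inLeftSubtree_rootJoin hG p).2 hp] at hpL
      exact absurd hpL Bool.false_ne_true
  · exact fun hp₀ => h.fst_ne_zero p hp (by rw [hp₀])
  · exact (h.inLeftSubtree_rootJoin hG p).1 hp

theorem IsSeparated.rightBranch_rootJoin {L R : Finset (ℕ × ℕ)} (h : IsSeparated L R)
    (hG : IsNATRootedAt (rootJoin L R) (0, 0)) : rightBranch (rootJoin L R) = R := by
  ext p
  rw [mem_rightBranch]
  refine ⟨fun ⟨⟨hp₀, hp⟩, hpR⟩ => ?_,
    fun hp => ⟨⟨?_, right_subset_rootJoin hp⟩, ?_⟩⟩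
  · rcases mem_rootJoin.mp hp with hp | hp | hp
    · exact absurd hp hp₀
    · rw [(h.inLeftSubtree_rootJoin hG p).1 hp] at hpR
      exact absurd hpR.symm Bool.false_ne_true
    · exact hp
  · exact fun hp₀ => h.snd_ne_zero p hp (by rw [hp₀])
  · exact (h.inLeftSubtree_rootJoin hG p).2 hp

end Branches

theorem IsNATRootedAt.card_image_compress {D : Finset (ℕ × ℕ)} {c : ℕ × ℕ}
    (hD : IsNATRootedAt D c) (hC : IsCompleteNAT D) :
    #(D.image Prod.fst) = numInternal (compress D) + 1 ∧
      #(D.image Prod.snd) = numInternal (compress D) + 1 := by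
  have := hC.compress.card_image_fst_snd hD.isNAT_compress
  rwa [image_fst_compress, image_snd_compress, card_range, card_range] at this

theorem IsCompleteNAT.exists_isNATRootedAt_branches {A : Finset (ℕ × ℕ)} (hA : IsNAT A)
    (hC : IsCompleteNAT A) (hA₂ : numInternal A ≠ 0) :
    (∃ c, c.2 = 0 ∧ IsNATRootedAt (leftBranch A) c) ∧
      ∃ c, c.1 = 0 ∧ IsNATRootedAt (rightBranch A) c := by
  have hsep := hA.isSeparated_branches
  have hJ := rootJoin_leftBranch_rightBranch hA.1
  have hG : IsNATRootedAt (rootJoin (leftBranch A) (rightBranch A)) (0, 0) := by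
    rw [hJ]; exact hA.isNATRootedAt
  -- a nonempty subtree is rooted in row `0` or column `0`, so the root has a child
  have hroot : HasLeftChild A (0, 0) ∨ HasRightChild A (0, 0) := by
    obtain ⟨p, hp⟩ : ∃ p ∈ A, p.1 = 1 := by
      have : 1 ∈ A.image Prod.fst := by
        rw [hC.image_fst_eq_range hA]; exact mem_range.mpr (by omega)
      simpa using this
    rcases mem_rootJoin.mp (hJ.symm ▸ hp.1) with hp₀ | hpL | hpR
    · simp [hp₀] at hp
    · obtain ⟨c, hc₀, hc⟩ := hsep.exists_isNATRootedAt_left hG ⟨p, hpL⟩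
      exact .inl ⟨c, left_subset_rootJoin.trans hJ.le hc.mem, hc₀,
        Nat.pos_of_ne_zero (hsep.fst_ne_zero c hc.mem)⟩
    · obtain ⟨c, hc₀, hc⟩ := hsep.exists_isNATRootedAt_right hG ⟨p, hpR⟩
      exact .inr ⟨c, right_subset_rootJoin.trans hJ.le hc.mem, hc₀,
        Nat.pos_of_ne_zero (hsep.snd_ne_zero c hc.mem)⟩
  have hboth : HasLeftChild A (0, 0) ∧ HasRightChild A (0, 0) :=
    hroot.elim (fun h => ⟨h, (hC _ hA.1).mp h⟩) fun h => ⟨(hC _ hA.1).mpr h, h⟩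
  obtain ⟨⟨w, hw, hw₂, hw₁⟩, ⟨v, hv, hv₁, hv₂⟩⟩ := hboth
  refine ⟨hsep.exists_isNATRootedAt_left hG ⟨w, ?_⟩,
    hsep.exists_isNATRootedAt_right hG ⟨v, ?_⟩⟩
  · rcases mem_rootJoin.mp (hJ.symm ▸ hw) with hw₀ | hwL | hwR
    · simp [hw₀] at hw₁
    · exact hwL
    · exact absurd hw₂ (hsep.snd_ne_zero w hwR)
  · rcases mem_rootJoin.mp (hJ.symm ▸ hv) with hv₀ | hvL | hvR
    · simp [hv₀] at hv₂
    · exact absurd hv₁ (hsep.fst_ne_zero v hvL)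
    · exact hvR

open scoped Classical in
noncomputable def completeNATs (n : ℕ) : Finset (Finset (ℕ × ℕ)) :=
  {A ∈ (range (n + 1) ×ˢ range (n + 1)).powerset |
    IsNAT A ∧ IsCompleteNAT A ∧ numInternal A = n}

open scoped Classical in
theorem mem_completeNATs {n : ℕ} {A : Finset (ℕ × ℕ)} :
    A ∈ completeNATs n ↔ IsNAT A ∧ IsCompleteNAT A ∧ numInternal A = n := by
  rw [completeNATs, mem_filter, mem_powerset, and_iff_right_iff_imp]
  rintro ⟨hA, hC, rfl⟩ p hp
  exact mem_product.mpr ⟨hC.image_fst_eq_range hA ▸ mem_image_of_mem _ hp,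
    hC.image_snd_eq_range hA ▸ mem_image_of_mem _ hp⟩

theorem b_eq_card (n : ℕ) : b n = #(completeNATs n) := by
  rw [b, ← Set.ncard_coe_finset]
  congr 1
  ext A
  simp [mem_completeNATs]

theorem b_zero : b 0 = 1 := by
  have hleaf : ∀ q, ¬HasLeftChild {((0 : ℕ), (0 : ℕ))} q ∧ ¬HasRightChild {(0, 0)} q := by
    simp [HasLeftChild, HasRightChild]
  rw [b_eq_card, card_eq_one]
  refine ⟨{(0, 0)},
    eq_singleton_iff_unique_mem.mpr ⟨mem_completeNATs.mpr ⟨?_, ?_, ?_⟩, ?_⟩⟩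
  · refine ⟨mem_singleton_self _, fun p hp hne => absurd (mem_singleton.mp hp) hne,
      fun p hp => ?_⟩
    simp [mem_singleton.mp hp]
  · exact fun q _ => iff_of_false (hleaf q).1 (hleaf q).2
  · simp [numInternal, hleaf]
  · intro A hA
    have hsub : A ⊆ range 1 ×ˢ range 1 := by
      classical exact mem_powerset.mp (mem_filter.mp hA).1
    exact eq_singleton_iff_unique_mem.mpr
      ⟨(mem_completeNATs.mp hA).1.1, fun p hp => by simpa using hsub hp⟩

/-- A complete NAT with `m + 1` internal vertices is encoded by the numbers `(a, c)` of internal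
vertices of the two subtrees of the root, the columns of the left subtree and its rows other than
`0`, and the two subtrees with their rows and columns compressed. -/
abbrev RootSplitDatum : Type :=
  Σ _ : ℕ × ℕ, (Finset ℕ × Finset ℕ) × (Finset (ℕ × ℕ) × Finset (ℕ × ℕ))

noncomputable def rootSplitData (m : ℕ) : Finset RootSplitDatum :=
  (antidiagonal m).sigma fun x =>
    ((Icc 1 (m + 1)).powersetCard (x.1 + 1) ×ˢ (Icc 1 (m + 1)).powersetCard x.1) ×ˢ
      (completeNATs x.1 ×ˢ completeNATs x.2)

noncomputable def rootSplit (A : Finset (ℕ × ℕ)) : RootSplitDatum :=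
  ⟨(numInternal (compress (leftBranch A)), numInternal (compress (rightBranch A))),
    ((leftBranch A).image Prod.fst, ((leftBranch A).image Prod.snd).erase 0),
    (compress (leftBranch A), compress (rightBranch A))⟩

noncomputable def rootGlue (m : ℕ) : RootSplitDatum → Finset (ℕ × ℕ)
  | ⟨_, (C, W), (L₀, R₀)⟩ =>
    rootJoin (expand C (insert 0 W) L₀)
      (expand (range (m + 2) \ C) (range (m + 2) \ insert 0 W) R₀)

theorem IsSeparated.rootJoin_mem_completeNATs {L R : Finset (ℕ × ℕ)} (h : IsSeparated L R)
    {cL cR : ℕ × ℕ} (hL : IsNATRootedAt L cL) (hcL₀ : cL.2 = 0) (hR : IsNATRootedAt R cR)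
    (hcR₀ : cR.1 = 0) (hLC : IsCompleteNAT L) (hRC : IsCompleteNAT R) {m : ℕ}
    (hcols : (rootJoin L R).image Prod.fst = range (m + 2))
    (hrows : (rootJoin L R).image Prod.snd = range (m + 2)) :
    rootJoin L R ∈ completeNATs (m + 1) := by
  have hNAT := isNAT_of_isNATRootedAt (h.isNATRootedAt_rootJoin hL hcL₀ hR hcR₀) hcols hrows
  have hC := (h.isCompleteNAT_rootJoin_iff hL.mem hcL₀ hR.mem hcR₀).mpr ⟨hLC, hRC⟩
  have := (hC.card_image_fst_snd hNAT).1
  rw [hcols, card_range] at this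
  exact mem_completeNATs.mpr ⟨hNAT, hC, by omega⟩

theorem expand_of_isCompleteNAT {D : Finset (ℕ × ℕ)} (hD : IsNAT D)
    (hC : IsCompleteNAT D) {X Y : Finset ℕ} (hX : #X = numInternal D + 1)
    (hY : #Y = numInternal D + 1) :
    (expand X Y D).image Prod.fst = X ∧ (expand X Y D).image Prod.snd = Y ∧
      IsNATRootedAt (expand X Y D) (Nat.nth (· ∈ X) 0, Nat.nth (· ∈ Y) 0) ∧
      IsCompleteNAT (expand X Y D) ∧ compress (expand X Y D) = D := by
  have hDX : D.image Prod.fst = range #X := by rw [hX, hC.image_fst_eq_range hD]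
  have hDY : D.image Prod.snd = range #Y := by rw [hY, hC.image_snd_eq_range hD]
  exact ⟨image_fst_expand hDX, image_snd_expand hDY, hD.isNATRootedAt.expand hDX hDY,
    hC.expand hDX hDY, compress_expand hDX hDY⟩

theorem rootGlue_mem_and_rootSplit_rootGlue {m : ℕ} {x : RootSplitDatum} (hx : x ∈ rootSplitData m) :
    rootGlue m x ∈ completeNATs (m + 1) ∧ rootSplit (rootGlue m x) = x := by
  obtain ⟨⟨a, c⟩, ⟨C, W⟩, ⟨L₀, R₀⟩⟩ := x
  simp only [rootSplitData, mem_sigma, HasAntidiagonal.mem_antidiagonal, mem_product,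
    mem_powersetCard] at hx
  obtain ⟨hac, ⟨⟨hC, hCcard⟩, ⟨hW, hWcard⟩⟩, hL₀mem, hR₀mem⟩ := hx
  obtain ⟨hL₀, hL₀C, rfl⟩ := mem_completeNATs.mp hL₀mem
  obtain ⟨hR₀, hR₀C, rfl⟩ := mem_completeNATs.mp hR₀mem
  have hC₀ : 0 ∉ C := fun h => by simpa using hC h
  have hW₀ : 0 ∉ W := fun h => by simpa using hW h
  have hCsub : C ⊆ range (m + 2) := fun x hx => by
    have := mem_Icc.mp (hC hx); exact mem_range.mpr (by omega)
  have hWsub : insert 0 W ⊆ range (m + 2) := insert_subset (by simp) fun x hx => by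
    have := mem_Icc.mp (hW hx); exact mem_range.mpr (by omega)
  obtain ⟨hLc, hLr, hL, hLC, hLD⟩ := expand_of_isCompleteNAT hL₀ hL₀C (X := C)
    (Y := insert 0 W) hCcard (by rw [card_insert_of_notMem hW₀, hWcard])
  obtain ⟨hRc, hRr, hR, hRC, hRD⟩ := expand_of_isCompleteNAT hR₀ hR₀C
    (X := range (m + 2) \ C) (Y := range (m + 2) \ insert 0 W)
    (by rw [card_sdiff_of_subset hCsub, card_range, hCcard]; omega)
    (by rw [card_sdiff_of_subset hWsub, card_range, card_insert_of_notMem hW₀, hWcard]; omega)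
  set L := expand C (insert 0 W) L₀
  set R := expand (range (m + 2) \ C) (range (m + 2) \ insert 0 W) R₀
  have hsep : IsSeparated L R := by
    refine IsSeparated.of_image (hLc ▸ hC₀) (by simp [hRr]) ?_ ?_
    · rw [hLc, hRc]; exact disjoint_sdiff
    · rw [hLr, hRr]; exact disjoint_sdiff
  have hL₂ : Nat.nth (· ∈ insert 0 W) 0 = 0 := Nat.nth_zero_of_zero (mem_insert_self 0 W)
  have hR₁ : Nat.nth (· ∈ range (m + 2) \ C) 0 = 0 :=
    Nat.nth_zero_of_zero (by simpa using hC₀)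
  refine ⟨hsep.rootJoin_mem_completeNATs hL hL₂ hR hR₁ hLC hRC ?_ ?_, ?_⟩
  · rw [image_fst_rootJoin, hLc, hRc, union_sdiff_of_subset hCsub, insert_eq_of_mem (by simp)]
  · rw [image_snd_rootJoin, hLr, hRr, union_sdiff_of_subset hWsub, insert_eq_of_mem (by simp)]
  have hG := hsep.isNATRootedAt_rootJoin hL hL₂ hR hR₁
  change rootSplit (rootJoin L R) = _
  rw [rootSplit, hsep.leftBranch_rootJoin hG, hsep.rightBranch_rootJoin hG, hLD, hRD, hLc, hLr,
    erase_insert hW₀]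

theorem IsCompleteNAT.union_image_branches {A : Finset (ℕ × ℕ)} (hA : IsNAT A)
    (hC : IsCompleteNAT A) (hn : numInternal A ≠ 0) :
    (leftBranch A).image Prod.fst ∪ (rightBranch A).image Prod.fst = range (numInternal A + 1) ∧
      (leftBranch A).image Prod.snd ∪ (rightBranch A).image Prod.snd =
        range (numInternal A + 1) := by
  obtain ⟨⟨cL, hcL₀, hL⟩, ⟨cR, hcR₀, hR⟩⟩ := hC.exists_isNATRootedAt_branches hA hn
  have hJ := rootJoin_leftBranch_rightBranch hA.1
  have h₀R : 0 ∈ (rightBranch A).image Prod.fst := hcR₀ ▸ mem_image_of_mem Prod.fst hR.mem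
  have h₀L : 0 ∈ (leftBranch A).image Prod.snd := hcL₀ ▸ mem_image_of_mem Prod.snd hL.mem
  constructor
  · rw [← insert_eq_of_mem (mem_union_right _ h₀R), ← image_fst_rootJoin, hJ,
      hC.image_fst_eq_range hA]
  · rw [← insert_eq_of_mem (mem_union_left _ h₀L), ← image_snd_rootJoin, hJ,
      hC.image_snd_eq_range hA]

theorem rootSplit_mem_rootSplitData {m : ℕ} {A : Finset (ℕ × ℕ)}
    (hA : A ∈ completeNATs (m + 1)) : rootSplit A ∈ rootSplitData m := by
  obtain ⟨hA, hC, hn⟩ := mem_completeNATs.mp hA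
  obtain ⟨⟨cL, hcL₀, hL⟩, ⟨cR, hcR₀, hR⟩⟩ :=
    hC.exists_isNATRootedAt_branches hA (by omega)
  obtain ⟨hcols, hrows⟩ := hC.union_image_branches hA (by omega)
  rw [hn] at hcols hrows
  have hsep := hA.isSeparated_branches
  set L := leftBranch A
  set R := rightBranch A
  obtain ⟨hLC, hRC⟩ := (hsep.isCompleteNAT_rootJoin_iff hL.mem hcL₀ hR.mem hcR₀).mp
    (rootJoin_leftBranch_rightBranch hA.1 ▸ hC)
  obtain ⟨hLc, hLr⟩ := hL.card_image_compress hLC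
  obtain ⟨hRc, -⟩ := hR.card_image_compress hRC
  have hac : numInternal (compress L) + numInternal (compress R) = m := by
    have := card_union_of_disjoint hsep.disjoint_image_fst
    rw [hcols, card_range, hLc, hRc] at this
    omega
  have h₀L : 0 ∈ L.image Prod.snd := hcL₀ ▸ mem_image_of_mem _ hL.mem
  simp only [rootSplitData, rootSplit, mem_sigma, HasAntidiagonal.mem_antidiagonal,
    mem_product, mem_powersetCard]
  refine ⟨hac, ⟨⟨fun x hx => ?_, hLc⟩, fun y hy => ?_, ?_⟩,
    mem_completeNATs.mpr ⟨hL.isNAT_compress, hLC.compress, rfl⟩,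
    mem_completeNATs.mpr ⟨hR.isNAT_compress, hRC.compress, rfl⟩⟩
  · obtain ⟨p, hp, rfl⟩ := mem_image.mp hx
    exact mem_Icc.mpr ⟨Nat.pos_of_ne_zero (hsep.fst_ne_zero p hp), by
      have := mem_range.mp (hcols ▸ mem_union_left _ hx); omega⟩
  · obtain ⟨hy₀, hy⟩ := mem_erase.mp hy
    exact mem_Icc.mpr ⟨Nat.pos_of_ne_zero hy₀, by
      have := mem_range.mp (hrows ▸ mem_union_left _ hy); omega⟩
  · rw [card_erase_of_mem h₀L, hLr, Nat.add_sub_cancel]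

theorem rootGlue_rootSplit {m : ℕ} {A : Finset (ℕ × ℕ)} (hA : A ∈ completeNATs (m + 1)) :
    rootGlue m (rootSplit A) = A := by
  obtain ⟨hA, hC, hn⟩ := mem_completeNATs.mp hA
  obtain ⟨⟨cL, hcL₀, hL⟩, -⟩ := hC.exists_isNATRootedAt_branches hA (by omega)
  obtain ⟨hcols, hrows⟩ := hC.union_image_branches hA (by omega)
  rw [hn] at hcols hrows
  have hsep := hA.isSeparated_branches
  set L := leftBranch A
  set R := rightBranch A
  have h₀L : 0 ∈ L.image Prod.snd := hcL₀ ▸ mem_image_of_mem _ hL.mem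
  have hRc : range (m + 2) \ L.image Prod.fst = R.image Prod.fst :=
    hcols ▸ union_sdiff_cancel_left hsep.disjoint_image_fst
  have hRr : range (m + 2) \ L.image Prod.snd = R.image Prod.snd :=
    hrows ▸ union_sdiff_cancel_left hsep.disjoint_image_snd
  change rootJoin (expand (L.image Prod.fst) (insert 0 ((L.image Prod.snd).erase 0)) (compress L))
    (expand (range (m + 2) \ L.image Prod.fst)
      (range (m + 2) \ insert 0 ((L.image Prod.snd).erase 0)) (compress R)) = A
  rw [insert_erase h₀L, hRc, hRr, expand_compress, expand_compress,
    rootJoin_leftBranch_rightBranch hA.1]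

theorem card_completeNATs_succ (m : ℕ) : #(completeNATs (m + 1)) = #(rootSplitData m) :=
  card_bij' (fun A _ => rootSplit A) (fun x _ => rootGlue m x)
    (fun _ hA => rootSplit_mem_rootSplitData hA) (fun _ hx => (rootGlue_mem_and_rootSplit_rootGlue hx).1)
    (fun _ hA => rootGlue_rootSplit hA) (fun _ hx => (rootGlue_mem_and_rootSplit_rootGlue hx).2)

theorem b_succ (m : ℕ) : b (m + 1) = ∑ x ∈ antidiagonal m,
    (m + 1).choose (x.1 + 1) * (m + 1).choose x.1 * b x.1 * b x.2 := by
  rw [b_eq_card, card_completeNATs_succ, rootSplitData, card_sigma]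
  refine sum_congr rfl fun x _ => ?_
  rw [card_product, card_product, card_product, card_powersetCard, card_powersetCard,
    Nat.card_Icc, Nat.add_sub_cancel, b_eq_card, b_eq_card]
  ring

open Finset

namespace PowerSeries

theorem coeff_X_mul_derivative_add_self {R : Type*} [CommSemiring R] (f : R⟦X⟧) (n : ℕ) :
    coeff n (X * d⁄dX R f + f) = (n + 1) * coeff n f := by
  cases n with
  | zero => simp
  | succ n => rw [map_add, coeff_succ_X_mul, coeff_derivative]; push_cast; ring

theorem eq_zero_of_X_mul_derivative_add_self_eq {R : Type*} [CommSemiring R] [NoZeroDivisors R]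
    [CharZero R] {V W : R⟦X⟧} (h : X * d⁄dX R W + W = X * (V * W)) : W = 0 := by
  ext n
  induction n using Nat.strong_induction_on with
  | _ n ih =>
    have hn := congrArg (coeff n) h
    rw [coeff_X_mul_derivative_add_self] at hn
    rw [map_zero]
    have hrhs : coeff n (X * (V * W)) = 0 := by
      cases n with
      | zero => exact coeff_zero_X_mul _
      | succ n =>
        rw [coeff_succ_X_mul, coeff_mul]
        refine sum_eq_zero fun x hx => ?_
        rw [ih x.2 (by have := HasAntidiagonal.mem_antidiagonal.mp hx; omega), map_zero, mul_zero]
    rw [hrhs] at hn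
    exact (mul_eq_zero.mp hn).resolve_left (Nat.cast_add_one_ne_zero n)

section Odd

variable {R : Type*} [CommSemiring R] {f g : R⟦X⟧}

theorem coeff_two_mul_add_one_mul_eq_zero (hf : ∀ n, coeff (2 * n) f = 0)
    (hg : ∀ n, coeff (2 * n) g = 0) (k : ℕ) : coeff (2 * k + 1) (f * g) = 0 := by
  rw [coeff_mul]
  refine sum_eq_zero fun x hx => ?_
  have hx : x.1 + x.2 = 2 * k + 1 := HasAntidiagonal.mem_antidiagonal.mp hx
  obtain ⟨i, hi | hi⟩ := Nat.even_or_odd' x.1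
  · rw [hi, hf, zero_mul]
  · rw [show x.2 = 2 * (k - i) by omega, hg, mul_zero]

theorem coeff_two_mul_add_two_mul (hf : ∀ n, coeff (2 * n) f = 0) (k : ℕ) :
    coeff (2 * k + 2) (f * g) =
      ∑ x ∈ antidiagonal k, coeff (2 * x.1 + 1) f * coeff (2 * x.2 + 1) g := by
  set odd : ℕ × ℕ → ℕ × ℕ := fun x => (2 * x.1 + 1, 2 * x.2 + 1)
  have hodd : Set.InjOn odd (antidiagonal k) := fun x _ y _ hxy => by
    simp only [odd, Prod.mk.injEq] at hxy
    exact Prod.ext (by omega) (by omega)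
  rw [coeff_mul, ← sum_image (f := fun x => coeff x.1 f * coeff x.2 g) hodd]
  refine (sum_subset (fun x hx => ?_) fun x hx hx' => ?_).symm
  · obtain ⟨y, hy, rfl⟩ := mem_image.mp hx
    simp only [odd, HasAntidiagonal.mem_antidiagonal] at hy ⊢
    omega
  · have hx : x.1 + x.2 = 2 * k + 2 := HasAntidiagonal.mem_antidiagonal.mp hx
    obtain ⟨i, hi | hi⟩ := Nat.even_or_odd' x.1
    · rw [hi, hf, zero_mul]
    · exact absurd (mem_image.mpr ⟨(i, k - i), HasAntidiagonal.mem_antidiagonal.mpr (by omega),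
        Prod.ext hi.symm (by simp only [odd]; omega)⟩) hx'

end Odd

end PowerSeries

open PowerSeries

theorem besselJ0_ode {K : Type*} [Field K] [CharZero K] {J : K⟦X⟧}
    (hJ : ∀ k : ℕ, coeff (2 * k) J = (-1 : K) ^ k / ((k.factorial : K) ^ 2 * 4 ^ k))
    (hJ' : ∀ m : ℕ, (∀ k : ℕ, m ≠ 2 * k) → coeff m J = 0) :
    X * d⁄dX K (d⁄dX K J) + d⁄dX K J + X * J = 0 := by
  have hodd : ∀ k, coeff (2 * k + 1) J = 0 := fun k => hJ' _ fun _ => by omega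
  ext n
  rw [map_add, coeff_X_mul_derivative_add_self, coeff_derivative, map_zero]
  obtain ⟨k, rfl | rfl⟩ := Nat.even_or_odd' n
  · cases k with
    | zero => simp [hodd 0]
    | succ k =>
      rw [show 2 * (k + 1) = 2 * k + 1 + 1 by ring, coeff_succ_X_mul,
        show 2 * k + 1 + 1 + 1 = 2 * (k + 1) + 1 by ring, hodd, hodd]
      ring
  · rw [coeff_succ_X_mul, show 2 * k + 1 + 1 = 2 * (k + 1) by ring, hJ, hJ,
      Nat.factorial_succ]
    push_cast
    field_simp
    ring

theorem choose_mul_choose_mul_div_sq (a c : ℕ) :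
    ((a + c + 1).choose (a + 1) * (a + c + 1).choose a : ℚ) *
        ((2 * (a + c + 1) + 2) / ((a + c + 2).factorial * 2 ^ (a + c + 2))) ^ 2 =
      (2 * a + 2) / ((a + 1).factorial * 2 ^ (a + 1)) ^ 2 *
        ((2 * c + 2) / ((c + 1).factorial * 2 ^ (c + 1)) ^ 2) := by
  rw [Nat.cast_choose ℚ (by omega : a + 1 ≤ a + c + 1),
    Nat.cast_choose ℚ (by omega : a ≤ a + c + 1),
    show a + c + 1 - (a + 1) = c by omega, show a + c + 1 - a = c + 1 by omega,
    show a + c + 2 = (a + c + 1) + 1 by ring, Nat.factorial_succ (a + c + 1),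
    Nat.factorial_succ a, Nat.factorial_succ c]
  push_cast
  have : ((a : ℚ) + c + 1 + 1) ≠ 0 := by positivity
  field_simp
  ring

theorem riccati_of_coeff {β : ℕ → ℚ} (hβ₀ : β 0 = 1)
    (hβ : ∀ m, β (m + 1) = ∑ x ∈ antidiagonal m,
      ((m + 1).choose (x.1 + 1) * (m + 1).choose x.1 : ℚ) * β x.1 * β x.2)
    {Z : ℚ⟦X⟧}
    (hZ : ∀ k : ℕ, coeff (2 * (k + 1)) Z = β k / (((k + 1).factorial : ℚ) * 2 ^ (k + 1)) ^ 2)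
    (hZ' : ∀ m : ℕ, (∀ k : ℕ, m ≠ 2 * (k + 1)) → coeff m Z = 0) :
    X * d⁄dX ℚ (d⁄dX ℚ Z) + d⁄dX ℚ Z = X + X * d⁄dX ℚ Z ^ 2 := by
  set D := d⁄dX ℚ Z
  have hD_even : ∀ n, coeff (2 * n) D = 0 := fun n => by
    rw [coeff_derivative, hZ' _ fun _ => by omega, zero_mul]
  have hD_odd : ∀ k : ℕ, coeff (2 * k + 1) D =
      β k * ((2 * k + 2) / ((k + 1).factorial * 2 ^ (k + 1)) ^ 2) := fun k => by
    rw [coeff_derivative, show 2 * k + 1 + 1 = 2 * (k + 1) by ring, hZ]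
    push_cast
    ring
  ext n
  rw [coeff_X_mul_derivative_add_self, map_add, sq]
  obtain ⟨k, rfl | rfl⟩ := Nat.even_or_odd' n
  · rw [hD_even, mul_zero]
    cases k with
    | zero => simp
    | succ k =>
      rw [show 2 * (k + 1) = 2 * k + 1 + 1 by ring, coeff_succ_X_mul,
        coeff_two_mul_add_one_mul_eq_zero hD_even hD_even, coeff_X, if_neg (by omega), add_zero]
  · rw [coeff_succ_X_mul, coeff_X, hD_odd]
    cases k with
    | zero =>
      have h₀ : constantCoeff D = 0 := by
        rw [← coeff_zero_eq_constantCoeff_apply]; exact hD_even 0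
      norm_num [hβ₀, h₀]
    | succ m =>
      rw [if_neg (by omega), zero_add, show 2 * (m + 1) = 2 * m + 2 by ring,
        coeff_two_mul_add_two_mul hD_even, hβ, sum_mul, mul_sum]
      refine sum_congr rfl fun x hx => ?_
      obtain rfl := HasAntidiagonal.mem_antidiagonal.mp hx
      rw [hD_odd, hD_odd]
      push_cast
      linear_combination β x.1 * β x.2 * choose_mul_choose_mul_div_sq x.1 x.2

open PowerSeries in
theorem bessel_log_identity (Z J₀ : PowerSeries ℚ)
    (hZ : ∀ k : ℕ, coeff (2 * (k + 1)) Z =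
      (b k : ℚ) / (((k + 1).factorial : ℚ) * 2 ^ (k + 1)) ^ 2)
    (hZ' : ∀ m : ℕ, (∀ k : ℕ, m ≠ 2 * (k + 1)) → coeff m Z = 0)
    (hJ : ∀ k : ℕ, coeff (2 * k) J₀ =
      (-1 : ℚ) ^ k / ((k.factorial : ℚ) ^ 2 * 4 ^ k))
    (hJ' : ∀ m : ℕ, (∀ k : ℕ, m ≠ 2 * k) → coeff m J₀ = 0) :
    derivative ℚ Z * J₀ = - derivative ℚ J₀ := by
  have hZ_ode := riccati_of_coeff (β := fun k => (b k : ℚ)) (by simp [b_zero])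
    (fun m => by rw [b_succ]; push_cast; rfl) hZ hZ'
  have hJ_ode := besselJ0_ode hJ hJ'
  set D := d⁄dX ℚ Z
  have hW : X * d⁄dX ℚ (D * J₀ + d⁄dX ℚ J₀) + (D * J₀ + d⁄dX ℚ J₀) =
      X * (D * (D * J₀ + d⁄dX ℚ J₀)) := by
    rw [map_add, Derivation.leibniz, smul_eq_mul, smul_eq_mul]
    linear_combination J₀ * hZ_ode + hJ_ode
  linear_combination eq_zero_of_X_mul_derivative_add_self_eq hW
end

section
/- For every integer n ≥ 1, ∑_{k=0}^{n} (−1)^{n+k}·C(n+k, n−k)·Cat_k = 0, an identity in ℤ, where C(·,·) denotes the binomial coefficient. -/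
/-!
With `A k = C(n+k, 2k)` (which equals `C(n+k, n-k)` for `k ≤ n`) and
`f k = k (k+1) A k Cat_k` (`catalanPotential n k`), the ratios of consecutive binomial
coefficients and Catalan numbers give `n (n+1) A k Cat_k = f k + f (k+1)`. The alternating sum
therefore telescopes to `f 0 - (-1)^(n+1) f (n+1) = 0`, and one divides by `n (n+1) ≠ 0`.
-/

open Finset

theorem Nat.add_one_mul_add_two_mul_choose_add_two (m j : ℕ) :
    (j + 1) * (j + 2) * (m + 1).choose (j + 2) = (m + 1) * (m - j) * m.choose j := by
  calc (j + 1) * (j + 2) * (m + 1).choose (j + 2)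
      = (j + 1) * ((m + 1) * m.choose (j + 1)) := by
        rw [Nat.add_one_mul_choose_eq m (j + 1)]; ring
    _ = (m + 1) * (m.choose (j + 1) * (j + 1)) := by ring
    _ = (m + 1) * (m - j) * m.choose j := by rw [Nat.choose_succ_right_eq]; ring

theorem add_two_mul_catalan_add_one (k : ℕ) :
    (k + 2) * catalan (k + 1) = 2 * (2 * k + 1) * catalan k := by
  refine Nat.eq_of_mul_eq_mul_left k.succ_pos ?_
  calc (k + 1) * ((k + 2) * catalan (k + 1))
      = (k + 1) * (k + 1).centralBinom := by rw [← succ_mul_catalan_eq_centralBinom]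
    _ = 2 * (2 * k + 1) * k.centralBinom := Nat.succ_mul_centralBinom_succ k
    _ = (k + 1) * (2 * (2 * k + 1) * catalan k) := by
        rw [← succ_mul_catalan_eq_centralBinom]; ring

theorem sum_range_neg_one_pow_mul_add_succ {R : Type*} [CommRing R] (f : ℕ → R) (N : ℕ) :
    ∑ k ∈ range N, (-1) ^ k * (f k + f (k + 1)) = f 0 - (-1) ^ N * f N := by
  have hterm : ∀ k ∈ range N, (-1) ^ k * (f k + f (k + 1))
      = (-1) ^ k * f k - (-1) ^ (k + 1) * f (k + 1) := fun k _ => by ring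
  rw [sum_congr rfl hterm, sum_range_sub' (fun k => (-1) ^ k * f k)]
  simp

def catalanPotential (n k : ℕ) : ℕ := k * (k + 1) * (n + k).choose (2 * k) * catalan k

theorem catalanPotential_add_catalanPotential_succ (n k : ℕ) :
    catalanPotential n k + catalanPotential n (k + 1)
      = n * (n + 1) * (n + k).choose (2 * k) * catalan k := by
  rcases lt_or_ge n k with hnk | hkn
  · simp [catalanPotential, Nat.choose_eq_zero_of_lt (show n + k < 2 * k by omega),
      Nat.choose_eq_zero_of_lt (show n + (k + 1) < 2 * (k + 1) by omega)]
  obtain ⟨d, rfl⟩ := Nat.exists_eq_add_of_le hkn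
  have hchoose := Nat.add_one_mul_add_two_mul_choose_add_two (2 * k + d) (2 * k)
  rw [Nat.add_sub_cancel_left] at hchoose
  have hnext : catalanPotential (k + d) (k + 1)
      = (2 * k + d + 1) * d * (2 * k + d).choose (2 * k) * catalan k := by
    calc catalanPotential (k + d) (k + 1)
        = (k + 1) * (2 * k + d + 1).choose (2 * k + 2) * ((k + 2) * catalan (k + 1)) := by
          rw [catalanPotential, show k + d + (k + 1) = 2 * k + d + 1 by ring,
            show 2 * (k + 1) = 2 * k + 2 by ring]
          ring
      _ = (2 * k + 1) * (2 * k + 2) * (2 * k + d + 1).choose (2 * k + 2) * catalan k := by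
          rw [add_two_mul_catalan_add_one]; ring
      _ = _ := by rw [hchoose]
  rw [hnext, catalanPotential, show k + d + k = 2 * k + d by ring]
  ring

theorem catalan_alternating_identity (n : ℕ) (hn : 1 ≤ n) :
    ∑ k ∈ Finset.range (n + 1),
      (-1 : ℤ) ^ (n + k) * Nat.choose (n + k) (n - k) * catalan k = 0 := by
  have hsummand : ∀ k ∈ range (n + 1),
      (n * (n + 1) : ℤ) * ((-1 : ℤ) ^ (n + k) * (n + k).choose (n - k) * catalan k)
        = (-1 : ℤ) ^ n *
          ((-1) ^ k * (catalanPotential n k + catalanPotential n (k + 1) : ℤ)) := by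
    intro k hk
    have hkn : k ≤ n := Nat.lt_succ_iff.mp (mem_range.mp hk)
    rw [show n - k = n + k - 2 * k by omega, Nat.choose_symm (by omega : 2 * k ≤ n + k),
      ← Nat.cast_add, catalanPotential_add_catalanPotential_succ]
    push_cast
    ring
  have hlast : catalanPotential n (n + 1) = 0 := by
    simp [catalanPotential, Nat.choose_eq_zero_of_lt (show n + (n + 1) < 2 * (n + 1) by omega)]
  have hscaled : (n * (n + 1) : ℤ) * ∑ k ∈ range (n + 1),
      (-1 : ℤ) ^ (n + k) * (n + k).choose (n - k) * catalan k = 0 := by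
    rw [mul_sum, sum_congr rfl hsummand, ← mul_sum,
      sum_range_neg_one_pow_mul_add_succ (fun k => (catalanPotential n k : ℤ)), hlast]
    simp [catalanPotential]
  exact (mul_eq_zero.mp hscaled).resolve_left (by positivity)
end

section
/- For all integers i ≥ 1 and 0 ≤ j ≤ i, ∑_{k=0}^{i} (−1)^{i+k}·C(i+k, i−k)·C(k+1, j+1)·C(k, j)·Cat_k = C(i+j, i−j)^2·Cat_j, an identity in ℤ, where C(·,·) denotes the binomial coefficient. -/
/-! Multiplying by `j + 1` and using `(j + 1) C(k+1, j+1) Cat_k = C(k, j) C(2k, k)`, the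
multinomial identity `C(i+k, 2k) C(2k, k) C(k, j)² = C(i+j, i) C(i, j) · C(i-j, k-j) C(i+k, i+j)`
pulls the factor `C(i+j, i) C(i, j)` out of the sum. With `n = i - j` and `m = k - j`, what remains is
`∑ₘ (-1)^(n-m) C(n, m) C(i+j+m, i+j)`, the `n`-th forward difference of `x ↦ C(x, i+j)` at `i + j`,
which is `C(i+j, 2j) = C(i+j, i-j)`. -/

open Finset

theorem alternating_sum_choose_mul_choose_add (n j b : ℕ) :
    ∑ m ∈ range (n + 1), (-1 : ℤ) ^ (n - m) * n.choose m * (b + m).choose (n + j) =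
      b.choose j := by
  have h := congrFun (fwdDiff_iter_choose j n) b
  rw [fwdDiff_iter_eq_sum_shift] at h
  simpa [mul_assoc] using h

theorem succ_mul_choose_succ_mul_catalan (k j : ℕ) :
    (j + 1) * ((k + 1).choose (j + 1) * catalan k) = k.choose j * k.centralBinom := by
  rw [← succ_mul_catalan_eq_centralBinom, ← mul_assoc, mul_comm (j + 1),
    ← Nat.add_one_mul_choose_eq]
  ring

theorem add_choose_sub_mul_centralBinom {i k : ℕ} (hk : k ≤ i) :
    (i + k).choose (i - k) * k.centralBinom = (i + k).choose i * i.choose k := by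
  rw [Nat.choose_symm_of_eq_add (by omega : i + k = i - k + 2 * k),
    Nat.centralBinom_eq_two_mul_choose, Nat.choose_mul (by omega : k ≤ 2 * k),
    ← Nat.choose_symm_add]
  congr 2 <;> omega

theorem add_choose_mul_choose_mul_choose_sq {i j k : ℕ} (hjk : j ≤ k) :
    (i + k).choose i * i.choose k * k.choose j ^ 2 =
      (i + j).choose i * i.choose j * ((i - j).choose (k - j) * (i + k).choose (i + j)) := by
  have h₁ : i.choose k * k.choose j = i.choose j * (i - j).choose (k - j) := Nat.choose_mul hjk
  have h₂ : (i + k).choose (i + j) * (i + j).choose i = (i + k).choose i * k.choose j := by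
    rw [Nat.choose_mul (by omega : i ≤ i + j)]
    congr 2 <;> omega
  calc (i + k).choose i * i.choose k * k.choose j ^ 2
      = ((i + k).choose i * k.choose j) * (i.choose k * k.choose j) := by ring
    _ = _ := by rw [← h₂, h₁]; ring

theorem succ_mul_catalan_binomial_summand (j n m : ℕ) (hm : m ≤ n) :
    ((j : ℤ) + 1) * ((-1 : ℤ) ^ (j + n + (j + m)) *
      ((j + n + (j + m)).choose (j + n - (j + m)) : ℤ) * ((j + m + 1).choose (j + 1) : ℤ) *
        ((j + m).choose j : ℤ) * catalan (j + m)) =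
      (-1) ^ (n - m) * n.choose m * (j + n + j + m).choose (n + 2 * j) *
        ((j + n + j).choose (j + n) * (j + n).choose j : ℕ) := by
  have hsign : (-1 : ℤ) ^ (j + n + (j + m)) = (-1) ^ (n - m) := by
    rw [show j + n + (j + m) = n - m + 2 * (j + m) by omega, pow_add, pow_mul, neg_one_sq,
      one_pow, mul_one]
  have hcat := congrArg (Nat.cast : ℕ → ℤ) (succ_mul_choose_succ_mul_catalan (j + m) j)
  have hchoose := congrArg (Nat.cast : ℕ → ℤ)
    (add_choose_mul_choose_mul_choose_sq (i := j + n) (Nat.le_add_right j m))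
  rw [← add_choose_sub_mul_centralBinom (by omega), Nat.add_sub_cancel_left,
    Nat.add_sub_cancel_left] at hchoose
  have hidx : (j + n + j + m).choose (n + 2 * j) = (j + n + (j + m)).choose (j + n + j) := by
    congr 1 <;> ring
  rw [hsign, hidx]
  push_cast at hcat hchoose ⊢
  linear_combination (-1 : ℤ) ^ (n - m) * ((j + n + (j + m)).choose (j + n - (j + m)) : ℤ) *
    ((j + m).choose j : ℤ) * hcat + (-1 : ℤ) ^ (n - m) * hchoose

theorem succ_mul_choose_sq_mul_catalan (j n : ℕ) :
    ((j : ℤ) + 1) * (((j + n + j).choose (j + n - j) : ℤ) ^ 2 * catalan j) =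
      (j + n + j).choose (2 * j) * ((j + n + j).choose (j + n) * (j + n).choose j : ℕ) := by
  have h := congrArg (Nat.cast : ℕ → ℤ) (add_choose_sub_mul_centralBinom (Nat.le_add_right j n))
  rw [← succ_mul_catalan_eq_centralBinom, Nat.add_sub_cancel_left] at h
  rw [Nat.add_sub_cancel_left, Nat.choose_symm_of_eq_add (by ring : j + n + j = 2 * j + n)]
  push_cast at h ⊢
  linear_combination ((j + n + j).choose n : ℤ) * h

theorem catalan_binomial_identity_general (i j : ℕ) (hj : j ≤ i) :
    ∑ k ∈ Finset.range (i + 1),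
      (-1 : ℤ) ^ (i + k) * Nat.choose (i + k) (i - k) * Nat.choose (k + 1) (j + 1) *
        Nat.choose k j * catalan k =
      (Nat.choose (i + j) (i - j) : ℤ) ^ 2 * catalan j := by
  obtain ⟨n, rfl⟩ := Nat.exists_eq_add_of_le hj
  apply mul_left_cancel₀ (by positivity : ((j : ℤ) + 1) ≠ 0)
  rw [mul_sum, add_assoc, sum_range_add, sum_eq_zero fun k hk => by
      rw [Nat.choose_eq_zero_of_lt (mem_range.mp hk)]; simp,
    zero_add,
    sum_congr rfl fun m hm => succ_mul_catalan_binomial_summand j n m (mem_range_succ_iff.mp hm),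
    ← sum_mul, alternating_sum_choose_mul_choose_add, succ_mul_choose_sq_mul_catalan]

theorem catalan_binomial_identity (i j : ℕ) (hi : 1 ≤ i) (hj : j ≤ i) :
    ∑ k ∈ Finset.range (i + 1),
      (-1 : ℤ) ^ (i + k) * Nat.choose (i + k) (i - k) * Nat.choose (k + 1) (j + 1) *
        Nat.choose k j * catalan k =
      (Nat.choose (i + j) (i - j) : ℤ) ^ 2 * catalan j :=
  catalan_binomial_identity_general i j hj
end
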